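/- arXiv:2601.09800 — 11 statements merged into one kernel-verified Lean document; each statement's English description precedes it below -/
import Mathlib

section
/- For every integer n ≥ 1, the infinite product (-1)^{n-1} ∏_{k=1, k≠n}^∞ (1 - n²/k²) converges and equals 1/2. -/
open Filter

private lemma fact_mul_prod (a : ℕ) : ∀ b : ℕ,
    (a.factorial : ℝ) * ∏ j ∈ Finset.range b, ((a:ℝ)+1+j) = ((a+b).factorial : ℝ) := by
  intro b
  induction b with
  | zero => simp
  | succ b ih =>
    rw [Finset.prod_range_succ, ← mul_assoc, ih, show a + (b+1) = (a+b)+1 from rfl,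
      Nat.factorial_succ]
    push_cast
    ring

private lemma prod_A1 (m : ℕ) : ∏ j ∈ Finset.range m, ((j:ℝ)+1) = m.factorial := by
  have := fact_mul_prod 0 m
  simpa [add_comm] using this

private lemma prod_L1 (m : ℕ) :
    ∏ i ∈ Finset.range m, ((i:ℝ) - m) = (-1)^m * m.factorial := by
  rw [← Finset.prod_range_reflect]
  have : ∀ j ∈ Finset.range m, ((m - 1 - j : ℕ) : ℝ) - m = (-1) * ((j:ℝ)+1) := by
    intro j hj
    simp only [Finset.mem_range] at hj
    rw [Nat.cast_sub (by omega), Nat.cast_sub (by omega)]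
    push_cast
    ring
  rw [Finset.prod_congr rfl this, Finset.prod_mul_distrib, Finset.prod_const, prod_A1,
    Finset.card_range]

private lemma base_case (n : ℕ) (hn : 1 ≤ n) :
    2 * ((n.factorial : ℝ))^2 * ∏ k ∈ (Finset.Icc 1 n).erase n, (1 - (n : ℝ)^2 / (k:ℝ)^2)
      = (-1)^(n-1) * ((n+n).factorial : ℝ) := by
  obtain ⟨p, rfl⟩ : ∃ p, n = p + 1 := ⟨n - 1, by omega⟩
  simp only [Nat.add_sub_cancel]
  have hset : (Finset.Icc 1 (p+1)).erase (p+1) = Finset.Ico 1 (p+1) :=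
    Finset.Icc_erase_right 1 (p+1)
  rw [hset, Finset.prod_Ico_eq_prod_range]
  simp only [Nat.add_sub_cancel]
  have hterm : ∀ i ∈ Finset.range p, (1 - ((p+1 : ℕ) : ℝ)^2 / ((1+i : ℕ):ℝ)^2)
      = (((i:ℝ) - p) * (((p:ℝ)+1)+1+i)) / (((i:ℝ)+1)^2) := by
    intro i hi
    have h1 : ((1+i : ℕ):ℝ) = (i:ℝ)+1 := by push_cast; ring
    rw [h1]
    have h2 : ((i:ℝ)+1) ≠ 0 := by positivity
    field_simp
    push_cast; ring
  rw [Finset.prod_congr rfl hterm, Finset.prod_div_distrib, Finset.prod_mul_distrib, prod_L1,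
    Finset.prod_pow, prod_A1]
  have h3 := fact_mul_prod (p+1) p
  have hfp : ((p+1+(p+1)).factorial : ℝ) = ((p+1)+(p+1)) * ((p+1+p).factorial : ℝ) := by
    rw [show p+1+(p+1) = (p+1+p)+1 from rfl, Nat.factorial_succ]; push_cast; ring
  have hf1 : (((p+1).factorial : ℝ)) = (p+1) * (p.factorial : ℝ) := by
    rw [Nat.factorial_succ]; push_cast; ring
  have hpf : (p.factorial : ℝ) ≠ 0 := Nat.cast_ne_zero.mpr p.factorial_ne_zero
  have hpf1 : ((p+1 : ℕ):ℝ) ≠ 0 := by positivity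
  have h4 : ∏ j ∈ Finset.range p, (((p:ℝ)+1)+1+j)
      = ((p+1+p).factorial : ℝ) / ((p+1).factorial : ℝ) := by
    rw [eq_div_iff (by positivity), mul_comm]
    convert h3 using 3
    push_cast; ring
  rw [h4, hfp, hf1]
  field_simp
  ring

private lemma key_formula (n : ℕ) (hn : 1 ≤ n) (m : ℕ) (hm : n ≤ m) :
    2 * ((m.factorial : ℝ))^2 * ∏ k ∈ (Finset.Icc 1 m).erase n, (1 - (n : ℝ)^2 / (k:ℝ)^2)
      = (-1)^(n-1) * ((m-n).factorial : ℝ) * ((m+n).factorial : ℝ) := by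
  induction m, hm using Nat.le_induction with
  | base =>
    simpa using base_case n hn
  | succ m hm ih =>
    have hset : (Finset.Icc 1 (m+1)).erase n
        = insert (m+1) ((Finset.Icc 1 m).erase n) := by
      ext x
      simp only [Finset.mem_erase, Finset.mem_Icc, Finset.mem_insert]
      omega
    rw [hset, Finset.prod_insert (by simp)]
    set P : ℝ := ∏ k ∈ (Finset.Icc 1 m).erase n, (1 - (n : ℝ)^2 / (k:ℝ)^2) with hP
    have hm1 : ((m:ℝ)+1) ≠ 0 := by positivity
    have hcast : ((m - n : ℕ) : ℝ) = (m:ℝ) - n := Nat.cast_sub hm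
    rw [show m + 1 - n = (m - n) + 1 from by omega,
      show m + 1 + n = (m + n) + 1 from by omega]
    simp only [Nat.factorial_succ]
    push_cast [hcast]
    have ht : (1 - (n:ℝ)^2/(((m:ℝ)+1))^2)
        = ((((m:ℝ)+1-n)*((m:ℝ)+1+n))/(((m:ℝ)+1)^2)) := by
      field_simp
      ring
    rw [ht,
      show (2:ℝ) * (((m:ℝ)+1) * (m.factorial:ℝ))^2
            * (((((m:ℝ)+1-n)*((m:ℝ)+1+n))/(((m:ℝ)+1)^2)) * P)
          = (((m:ℝ)+1-n)*((m:ℝ)+1+n)) * (2 * ((m.factorial:ℝ))^2 * P) from by field_simp,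
      ih]
    ring

/-- For every integer `n ≥ 1`, the infinite product
`(-1)^(n-1) ∏_{k=1, k≠n}^∞ (1 - n²/k²)` converges and equals `1/2`. -/
theorem stmt_0 (n : ℕ) (hn : 1 ≤ n) :
    Tendsto
      (fun m : ℕ =>
        (-1 : ℝ) ^ (n - 1) * ∏ k ∈ (Finset.Icc 1 m).erase n, (1 - (n : ℝ) ^ 2 / (k : ℝ) ^ 2))
      atTop (nhds (1 / 2)) := by
  set g : ℕ → ℝ := fun m =>
    (1/2) * ∏ j ∈ Finset.range n, (((m:ℝ)+1+j) / ((m:ℝ)-n+1+j)) with hg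
  have hgt : Tendsto g atTop (nhds (1/2)) := by
    have h1 : Tendsto (fun m : ℕ => ∏ j ∈ Finset.range n, (((m:ℝ)+1+j) / ((m:ℝ)-n+1+j)))
        atTop (nhds 1) := by
      have := tendsto_finset_prod (f := fun (j : ℕ) (m : ℕ) => ((m:ℝ)+1+j) / ((m:ℝ)-n+1+j))
        (x := atTop) (a := fun _ => (1:ℝ)) (Finset.range n) ?_
      · simpa using this
      · intro j hj
        have hden : Tendsto (fun m : ℕ => (m:ℝ)-n+1+j) atTop atTop := by
          have h := tendsto_natCast_atTop_atTop (R := ℝ)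
          have := tendsto_atTop_add_const_right atTop (-(n:ℝ)+1+j) h
          convert this using 2 with m
          ring
        have h0 : Tendsto (fun m : ℕ => (n:ℝ)/((m:ℝ)-n+1+j)) atTop (nhds 0) :=
          hden.const_div_atTop (n:ℝ)
        have h2 : Tendsto (fun m : ℕ => 1 + (n:ℝ)/((m:ℝ)-n+1+j)) atTop (nhds 1) := by
          have := h0.const_add (1:ℝ)
          simpa using this
        refine h2.congr' ?_
        filter_upwards [eventually_ge_atTop n] with m hm
        have hd : ((m:ℝ)-n+1+j) ≠ 0 := by
          have h3 : (n:ℝ) ≤ m := by exact_mod_cast hm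
          have h4 : (0:ℝ) ≤ j := j.cast_nonneg
          nlinarith
        field_simp
        ring
    have := h1.const_mul (1/2 : ℝ)
    simpa [hg] using this
  refine hgt.congr' ?_
  filter_upwards [eventually_ge_atTop n] with m hm
  have hk := key_formula n hn m hm
  have hMf : ((m.factorial : ℝ)) ≠ 0 := Nat.cast_ne_zero.mpr m.factorial_ne_zero
  have hAf : (((m-n).factorial : ℝ)) ≠ 0 := Nat.cast_ne_zero.mpr (m-n).factorial_ne_zero
  have hcast : ((m - n : ℕ) : ℝ) = (m:ℝ) - n := Nat.cast_sub hm
  have hs : ((-1:ℝ))^(n-1) * ((-1:ℝ))^(n-1) = 1 := by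
    rw [← mul_pow]; norm_num
  have h1 : ∏ j ∈ Finset.range n, ((m:ℝ)+1+j) = ((m+n).factorial : ℝ) / (m.factorial : ℝ) := by
    rw [eq_div_iff hMf, mul_comm]
    exact fact_mul_prod m n
  have h2 : ∏ j ∈ Finset.range n, ((m:ℝ)-n+1+j)
      = (m.factorial : ℝ) / (((m-n).factorial : ℝ)) := by
    rw [eq_div_iff hAf, mul_comm]
    have := fact_mul_prod (m-n) n
    rw [Nat.sub_add_cancel hm] at this
    rw [← this]
    congr 1
    refine Finset.prod_congr rfl fun j hj => ?_
    rw [hcast]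
  have hPm : (∏ k ∈ (Finset.Icc 1 m).erase n, (1 - (n : ℝ)^2 / (k:ℝ)^2))
      = (-1:ℝ)^(n-1) * (((m-n).factorial : ℝ) * ((m+n).factorial : ℝ)) / (2 * (m.factorial:ℝ)^2) := by
    rw [eq_div_iff (by positivity)]
    linear_combination hk
  rw [mul_div_assoc] at hPm
  rw [hg]
  simp only
  rw [hPm, ← mul_assoc, hs, one_mul, Finset.prod_div_distrib, h1, h2]
  field_simp
end

section
/- Let b > 2 be a real number and n ≥ 1 an integer, and set A(n;b) = (-1)^{n-1} ∏_{k=1,k≠n}^∞ (1 - n^b/k^b). Then A(n;b) > (1/b)(b/2)^n. -/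
open Filter Finset Topology

namespace Stmt1Aux


noncomputable def gg (b : ℝ) (n k : ℕ) : ℝ := 1 - (n : ℝ) ^ b / (k : ℝ) ^ b
noncomputable def hh (n k : ℕ) : ℝ := 1 - (n : ℝ) ^ 2 / (k : ℝ) ^ 2
noncomputable def rr (b : ℝ) (n k : ℕ) : ℝ := gg b n k / hh n k

variable {b : ℝ} {n k : ℕ}

lemma gg_eq (hk : 1 ≤ k) : gg b n k = 1 - ((n : ℝ) / k) ^ b := by
  rw [gg, Real.div_rpow (Nat.cast_nonneg n) (Nat.cast_nonneg k)]

lemma hh_eq : hh n k = 1 - ((n : ℝ) / k) ^ 2 := by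
  rw [hh, div_pow]

lemma x_pos (hn : 1 ≤ n) (hk : 1 ≤ k) : 0 < (n : ℝ) / k := by
  apply div_pos <;> [exact_mod_cast hn; exact_mod_cast hk]

lemma x_lt_one (hn : 1 ≤ n) (hk : n < k) : (n : ℝ) / k < 1 := by
  rw [div_lt_one (Nat.cast_pos.mpr (Nat.lt_of_lt_of_le Nat.zero_lt_one (hn.trans hk.le)))]; exact_mod_cast hk

lemma one_lt_x (hk : 1 ≤ k) (hkn : k < n) : 1 < (n : ℝ) / k := by
  rw [lt_div_iff₀ (Nat.cast_pos.mpr hk), one_mul]; exact_mod_cast hkn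

lemma hh_pos (hn : 1 ≤ n) (hk : n < k) : 0 < hh n k := by
  rw [hh_eq]
  have := x_lt_one hn hk
  have := x_pos hn (hn.trans hk.le)
  nlinarith

lemma rr_gt_one (hb : 2 < b) (hn : 1 ≤ n) (hk : n < k) : 1 < rr b n k := by
  have hx0 := x_pos hn (hn.trans hk.le)
  have hx1 := x_lt_one hn hk
  have h2 := hh_pos hn hk
  rw [rr, lt_div_iff₀ h2, one_mul, gg_eq (hn.trans hk.le), hh_eq]
  have : ((n:ℝ)/k) ^ b < ((n:ℝ)/k) ^ ((2:ℕ):ℝ) :=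
    Real.rpow_lt_rpow_of_exponent_gt hx0 hx1 (by exact_mod_cast hb)
  rw [Real.rpow_natCast] at this
  linarith

lemma gg_pos (hb : 2 < b) (hn : 1 ≤ n) (hk : n < k) : 0 < gg b n k := by
  rw [gg_eq (hn.trans hk.le)]
  have hx0 := x_pos hn (hn.trans hk.le)
  have hx1 := x_lt_one hn hk
  have : ((n:ℝ)/k) ^ b < 1 := Real.rpow_lt_one hx0.le hx1 (by linarith)
  linarith

lemma gg_lt_one (hb : 2 < b) (hn : 1 ≤ n) (hk : n < k) : gg b n k < 1 := by
  rw [gg_eq (hn.trans hk.le)]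
  have hx0 := x_pos hn (hn.trans hk.le)
  have : (0:ℝ) < ((n:ℝ)/k) ^ b := Real.rpow_pos_of_pos hx0 b
  linarith

lemma hh_neg (hk : 1 ≤ k) (hkn : k < n) : hh n k < 0 := by
  rw [hh_eq]
  have := one_lt_x hk hkn
  nlinarith

lemma bernoulli_x (hb : 2 < b) (hk : 1 ≤ k) (hkn : k < n) :
    b / 2 * (((n:ℝ)/k) ^ 2 - 1) < ((n:ℝ)/k) ^ b - 1 := by
  set x := (n:ℝ)/k with hxdef
  have hx1 : 1 < x := one_lt_x hk hkn
  have hx0 : (0:ℝ) < x := by linarith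
  have hs : (0:ℝ) < x ^ 2 - 1 := by nlinarith
  have key : 1 + (b/2) * (x ^ 2 - 1) < (1 + (x ^ 2 - 1)) ^ (b/2) :=
    one_add_mul_self_lt_rpow_one_add (by linarith) (by linarith) (by linarith)
  have h1 : (1 + (x ^ 2 - 1)) = x ^ ((2:ℕ):ℝ) := by
    rw [Real.rpow_natCast]; ring
  have h2 : (x ^ ((2:ℕ):ℝ)) ^ (b/2) = x ^ b := by
    rw [← Real.rpow_mul hx0.le]
    congr 1
    push_cast; ring
  rw [h1, h2] at key
  linarith

lemma rr_gt_half (hb : 2 < b) (hk : 1 ≤ k) (hkn : k < n) : b / 2 < rr b n k := by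
  have hn : 1 ≤ n := hk.trans hkn.le
  have hx1 := one_lt_x hk hkn
  have hs : (0:ℝ) < ((n:ℝ)/k) ^ 2 - 1 := by nlinarith
  have : rr b n k = (((n:ℝ)/k) ^ b - 1) / (((n:ℝ)/k) ^ 2 - 1) := by
    rw [rr, gg_eq hk, hh_eq, ← neg_div_neg_eq]; ring_nf
  rw [this, lt_div_iff₀ hs]
  have := bernoulli_x hb hk hkn
  linarith

lemma rr_gt_one' (hb : 2 < b) (hk : 1 ≤ k) (hkn : k ≠ n) (hn : 1 ≤ n) : 1 < rr b n k := by
  rcases lt_or_gt_of_ne hkn with h | h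
  · exact lt_trans (by linarith) (rr_gt_half hb hk h)
  · exact rr_gt_one hb hn h

lemma hh_ne (hk : 1 ≤ k) (hkn : k ≠ n) (hn : 1 ≤ n) : hh n k ≠ 0 := by
  rcases lt_or_gt_of_ne hkn with h | h
  · exact (hh_neg hk h).ne
  · exact (hh_pos hn h).ne'

lemma gg_factor (hb : 2 < b) (hk : 1 ≤ k) (hkn : k ≠ n) (hn : 1 ≤ n) :
    gg b n k = hh n k * rr b n k := by
  rw [rr, mul_div_cancel₀ _ (hh_ne hk hkn hn)]



noncomputable def uu (n : ℕ) (t : ℝ) : ℝ := ∏ i ∈ Icc 1 n, (t + i)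
noncomputable def cc (n m : ℕ) : ℝ := uu n (m : ℝ) / uu n ((m : ℝ) - n)

variable {n m : ℕ}

lemma uu_pos {t : ℝ} (ht : 0 ≤ t) : 0 < uu n t := by
  apply Finset.prod_pos
  intro i hi
  have h1 : 1 ≤ i := (mem_Icc.mp hi).1
  have : (1:ℝ) ≤ (i:ℝ) := by exact_mod_cast h1
  linarith

lemma uu_succ (t : ℝ) : uu (n+1) t = uu n t * (t + (n+1)) := by
  rw [uu, uu, prod_Icc_succ_top (Nat.le_add_left 1 n)]
  push_cast
  ring

lemma uu_shift (n : ℕ) (t : ℝ) : uu n (t+1) * (t+1) = uu n t * (t + 1 + n) := by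
  induction n with
  | zero => simp [uu]
  | succ n ih =>
    rw [uu_succ, uu_succ]
    push_cast
    push_cast at ih
    linear_combination (t + 2 + (n:ℝ)) * ih

lemma prod_split (hn : 1 ≤ n) (f : ℕ → ℝ) :
    ∏ k ∈ Icc 1 n, f k = (∏ k ∈ Icc 1 (n-1), f k) * f n := by
  conv_lhs => rw [show n = n-1+1 by omega]
  rw [prod_Icc_succ_top (by omega)]
  rw [show n-1+1 = n by omega]

lemma prod_reflect (hn : 1 ≤ n) :
    ∏ k ∈ Icc 1 (n-1), ((n:ℝ) - k) = ∏ k ∈ Icc 1 (n-1), (k:ℝ) := by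
  apply prod_nbij' (fun k => n - k) (fun k => n - k)
  · intro a ha; simp only [mem_Icc] at *; omega
  · intro a ha; simp only [mem_Icc] at *; omega
  · intro a ha; simp only [mem_Icc] at *; omega
  · intro a ha; simp only [mem_Icc] at *; omega
  · intro a ha
    simp only [mem_Icc] at ha
    rw [Nat.cast_sub (by omega)]

lemma prod_sub (hn : 1 ≤ n) :
    ∏ k ∈ Icc 1 (n-1), ((k:ℝ) - n) = (-1)^(n-1) * ∏ k ∈ Icc 1 (n-1), (k:ℝ) := by
  have h1 : ∀ k ∈ Icc 1 (n-1), (k:ℝ) - n = (-1) * ((n:ℝ) - k) := by intros; ring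
  rw [prod_congr rfl h1, prod_mul_distrib, prod_const, Nat.card_Icc, prod_reflect hn]
  norm_num

lemma Pk_pos : (0:ℝ) < ∏ k ∈ Icc 1 (n-1), (k:ℝ) := by
  apply Finset.prod_pos
  intro i hi
  have h1 : 1 ≤ i := (mem_Icc.mp hi).1
  exact_mod_cast Nat.lt_of_lt_of_le Nat.zero_lt_one h1

lemma closed_base (hn : 1 ≤ n) :
    ∏ k ∈ Icc 1 (n-1), hh n k = (-1)^(n-1) * (cc n n / 2) := by
  have hNne : (n:ℝ) ≠ 0 := Nat.cast_ne_zero.mpr (by omega)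
  have hk0 : ∀ k ∈ Icc 1 (n-1), hh n k = ((k:ℝ) - n) * ((k:ℝ) + n) / ((k:ℝ) * k) := by
    intro k hk
    have h1 : (k:ℝ) ≠ 0 := Nat.cast_ne_zero.mpr (by have := (mem_Icc.mp hk).1; omega)
    rw [hh]; field_simp; ring
  rw [prod_congr rfl hk0, prod_div_distrib, prod_mul_distrib, prod_mul_distrib, prod_sub hn]
  have hcc : cc n n =
      ((∏ k ∈ Icc 1 (n-1), ((k:ℝ) + n)) * ((n:ℝ)+n)) / ((∏ k ∈ Icc 1 (n-1), (k:ℝ)) * n) := by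
    rw [cc, sub_self, uu, uu, prod_split hn, prod_split hn]
    have ha : ∀ k ∈ Icc 1 (n-1), (n:ℝ) + (k:ℝ) = (k:ℝ) + (n:ℝ) := fun k _ => by ring
    have hb : ∀ k ∈ Icc 1 (n-1), (0:ℝ) + (k:ℝ) = (k:ℝ) := fun k _ => by ring
    rw [prod_congr rfl ha, prod_congr rfl hb]
    norm_num
  rw [hcc]
  have hPk := Pk_pos (n := n)
  have hPkne : (∏ k ∈ Icc 1 (n-1), (k:ℝ)) ≠ 0 := hPk.ne'
  field_simp
  ring

lemma cc_succ (hn : 1 ≤ n) (hm : n ≤ m) : cc n (m+1) = hh n (m+1) * cc n m := by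
  have hmn : (0:ℝ) ≤ (m:ℝ) - n := by
    have : (n:ℝ) ≤ m := by exact_mod_cast hm
    linarith
  have hm1 : (0:ℝ) < (m:ℝ) + 1 := by positivity
  have hmn1 : (0:ℝ) < (m:ℝ) - n + 1 := by linarith
  have hu1 : (0:ℝ) < uu n (m:ℝ) := uu_pos (by positivity)
  have hu2 : (0:ℝ) < uu n ((m:ℝ) - n) := uu_pos hmn
  have e1 : uu n ((m:ℝ)+1) = uu n m * ((m:ℝ)+1+n) / ((m:ℝ)+1) := by
    rw [eq_div_iff hm1.ne']; exact uu_shift n (m:ℝ)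
  have e2 : uu n ((m:ℝ)-n+1) = uu n ((m:ℝ)-n) * ((m:ℝ)+1) / ((m:ℝ)-n+1) := by
    rw [eq_div_iff hmn1.ne', uu_shift n ((m:ℝ)-n)]; ring
  rw [cc, cc, hh]
  push_cast
  rw [show (m:ℝ)+1 - n = (m:ℝ)-n+1 by ring]
  rw [e1, e2]
  field_simp
  ring

lemma E_base (hn : 1 ≤ n) : (Icc 1 n).erase n = Icc 1 (n-1) := by
  ext k; simp only [mem_erase, mem_Icc]; omega

lemma E_succ (hm : n ≤ m) : (Icc 1 (m+1)).erase n = insert (m+1) ((Icc 1 m).erase n) := by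
  ext k; simp only [mem_erase, mem_Icc, mem_insert]; omega

lemma closed_form (hn : 1 ≤ n) (hm : n ≤ m) :
    ∏ k ∈ (Icc 1 m).erase n, hh n k = (-1)^(n-1) * (cc n m / 2) := by
  induction m, hm using Nat.le_induction with
  | base => rw [E_base hn]; exact closed_base hn
  | succ m hm ih =>
    rw [E_succ hm, prod_insert (by simp [mem_erase, mem_Icc]), ih, cc_succ hn hm]
    ring

lemma cc_ge_one (hm : n ≤ m) : 1 ≤ cc n m := by
  have hmn : (0:ℝ) ≤ (m:ℝ) - n := by
    have : (n:ℝ) ≤ m := by exact_mod_cast hm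
    linarith
  rw [cc, le_div_iff₀ (uu_pos hmn), one_mul, uu, uu]
  apply Finset.prod_le_prod
  · intro i hi
    have h1 : 1 ≤ i := (mem_Icc.mp hi).1
    have : (1:ℝ) ≤ (i:ℝ) := by exact_mod_cast h1
    linarith
  · intro i _
    linarith [hmn]

lemma cc_eq : cc n m = ∏ i ∈ Icc 1 n, (((m:ℝ)+i)/((m:ℝ)-(n:ℝ)+i)) := by
  rw [cc, uu, uu, ← prod_div_distrib]

lemma cc_tendsto (n : ℕ) : Tendsto (fun m : ℕ => cc n m) atTop (𝓝 1) := by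
  have h : Tendsto (fun m : ℕ => ∏ i ∈ Icc 1 n, (((m:ℝ)+i)/((m:ℝ)-(n:ℝ)+i))) atTop
      (𝓝 (∏ _i ∈ Icc 1 n, (1:ℝ))) := by
    apply tendsto_finset_prod
    intro i hi
    have hi1 : 1 ≤ i := (mem_Icc.mp hi).1
    have htop : Tendsto (fun m : ℕ => (m:ℝ) - n + i) atTop atTop := by
      have h0 := tendsto_natCast_atTop_atTop (R := ℝ)
      have h1 := tendsto_atTop_add_const_right atTop (-(n:ℝ) + i) h0
      simpa [sub_eq_add_neg, add_assoc] using h1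
    have h0 : Tendsto (fun m : ℕ => (n:ℝ) / ((m:ℝ) - n + i)) atTop (𝓝 0) :=
      Tendsto.div_atTop tendsto_const_nhds htop
    have heq : ∀ᶠ m : ℕ in atTop, 1 + (n:ℝ)/((m:ℝ)-n+i) = ((m:ℝ)+i)/((m:ℝ)-(n:ℝ)+i) := by
      filter_upwards [eventually_ge_atTop n] with m hm
      have hc : (n:ℝ) ≤ m := by exact_mod_cast hm
      have hc2 : (1:ℝ) ≤ i := by exact_mod_cast hi1
      have hpos : (0:ℝ) < (m:ℝ) - n + i := by linarith
      field_simp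
      ring
    have hlim : Tendsto (fun m : ℕ => 1 + (n:ℝ)/((m:ℝ)-n+i)) atTop (𝓝 1) := by
      simpa using tendsto_const_nhds.add h0
    exact hlim.congr' heq
  simp only [prod_const_one] at h
  exact h.congr' (Eventually.of_forall (fun m => cc_eq.symm))


end Stmt1Aux

open Stmt1Aux Finset Topology

/-- For real `b > 2` and integer `n ≥ 1`, the infinite product
`A(n;b) = (-1)^(n-1) ∏_{k=1, k≠n}^∞ (1 - n^b/k^b)` converges and satisfies
`A(n;b) > (1/b)(b/2)^n`. -/
theorem stmt_1 (b : ℝ) (hb : 2 < b) (n : ℕ) (hn : 1 ≤ n) :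
    ∃ A : ℝ,
      Tendsto
        (fun m : ℕ =>
          (-1 : ℝ) ^ (n - 1) * ∏ k ∈ (Finset.Icc 1 m).erase n, (1 - (n : ℝ) ^ b / (k : ℝ) ^ b))
        atTop (nhds A) ∧
      (1 / b) * (b / 2) ^ n < A := by
  classical
  set Q : ℕ → ℝ := fun m => ∏ k ∈ (Finset.Icc 1 m).erase n, rr b n k with hQdef
  set S : ℕ → ℝ := fun m =>
    (-1 : ℝ) ^ (n - 1) * ∏ k ∈ (Finset.Icc 1 m).erase n, (1 - (n : ℝ) ^ b / (k : ℝ) ^ b)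
    with hSdef
  have hmem : ∀ m : ℕ, ∀ k ∈ (Icc 1 m).erase n, 1 ≤ k ∧ k ≠ n := by
    intro m k hk
    simp only [mem_erase, mem_Icc] at hk
    exact ⟨hk.2.1, hk.1⟩
  have hr1 : ∀ m : ℕ, ∀ k ∈ (Icc 1 m).erase n, 1 < rr b n k := by
    intro m k hk
    obtain ⟨hk1, hkn⟩ := hmem m k hk
    exact rr_gt_one' hb hk1 hkn hn
  have hQ1 : ∀ m, 1 ≤ Q m := by
    intro m
    simp only [hQdef]
    calc (1:ℝ) = ∏ _k ∈ (Icc 1 m).erase n, (1:ℝ) := by rw [prod_const_one]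
      _ ≤ ∏ k ∈ (Icc 1 m).erase n, rr b n k :=
          Finset.prod_le_prod (fun k _ => zero_le_one) (fun k hk => (hr1 m k hk).le)
  have hQpos : ∀ m, 0 < Q m := fun m => lt_of_lt_of_le one_pos (hQ1 m)
  have hQmono : Monotone Q := by
    apply monotone_nat_of_le_succ
    intro m
    by_cases hc : n = m + 1
    · have : (Icc 1 (m+1)).erase n = (Icc 1 m).erase n := by
        subst hc; ext k; simp only [mem_erase, mem_Icc]; omega
      simp only [hQdef, this, le_refl]
    · have hE : (Icc 1 (m+1)).erase n = insert (m+1) ((Icc 1 m).erase n) := by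
        ext k; simp only [mem_erase, mem_Icc, mem_insert]; omega
      have hnotmem : (m+1) ∉ (Icc 1 m).erase n := by
        simp only [mem_erase, mem_Icc]; omega
      have hr : 1 ≤ rr b n (m+1) :=
        (rr_gt_one' hb (by omega) (fun h => hc h.symm) hn).le
      calc Q m = 1 * Q m := (one_mul _).symm
        _ ≤ rr b n (m+1) * Q m :=
            mul_le_mul_of_nonneg_right hr (hQpos m).le
        _ = Q (m+1) := by rw [hQdef]; simp only []; rw [hE, prod_insert hnotmem]
  have hgh : ∀ m : ℕ, ∏ k ∈ (Icc 1 m).erase n, (1 - (n : ℝ) ^ b / (k : ℝ) ^ b)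
      = (∏ k ∈ (Icc 1 m).erase n, hh n k) * Q m := by
    intro m
    rw [hQdef, ← prod_mul_distrib]
    apply prod_congr rfl
    intro k hk
    obtain ⟨hk1, hkn⟩ := hmem m k hk
    exact gg_factor hb hk1 hkn hn
  have hsign : (-1:ℝ)^(n-1) * (-1:ℝ)^(n-1) = 1 := by
    rw [← pow_add]
    exact Even.neg_one_pow ⟨n-1, by ring⟩
  have hS : ∀ m : ℕ, n ≤ m → S m = cc n m / 2 * Q m := by
    intro m hm
    have : S m = (-1:ℝ)^(n-1) * (((-1:ℝ)^(n-1) * (cc n m / 2)) * Q m) := by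
      rw [hSdef]; simp only []; rw [hgh m, closed_form hn hm]
    rw [this]
    calc (-1:ℝ)^(n-1) * (((-1:ℝ)^(n-1) * (cc n m / 2)) * Q m)
        = ((-1:ℝ)^(n-1) * (-1:ℝ)^(n-1)) * (cc n m / 2 * Q m) := by ring
      _ = cc n m / 2 * Q m := by rw [hsign, one_mul]
  set Cg : ℝ := |∏ k ∈ Icc 1 (n-1), (1 - (n : ℝ) ^ b / (k : ℝ) ^ b)| with hCg
  have habs : ∀ m : ℕ, n ≤ m →
      |∏ k ∈ (Icc 1 m).erase n, (1 - (n : ℝ) ^ b / (k : ℝ) ^ b)| ≤ Cg := by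
    intro m hm
    have hsplitE : (Icc 1 m).erase n = Icc 1 (n-1) ∪ Icc (n+1) m := by
      ext k; simp only [mem_erase, mem_Icc, mem_union]; omega
    have hdisj : Disjoint (Icc 1 (n-1)) (Icc (n+1) m) := by
      rw [Finset.disjoint_left]
      intro a ha ha'
      simp only [mem_Icc] at ha ha'
      omega
    rw [hsplitE, prod_union hdisj, abs_mul]
    have h2 : |∏ k ∈ Icc (n+1) m, (1 - (n : ℝ) ^ b / (k : ℝ) ^ b)| ≤ 1 := by
      rw [Finset.abs_prod]
      apply Finset.prod_le_one
      · intro k _; exact abs_nonneg _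
      · intro k hk
        have hkn : n < k := by have := (mem_Icc.mp hk).1; omega
        have h1 := gg_pos hb hn hkn
        have h3 := gg_lt_one hb hn hkn
        rw [gg] at h1 h3
        rw [abs_le]
        constructor <;> linarith
    calc |∏ k ∈ Icc 1 (n-1), (1 - (n:ℝ)^b/(k:ℝ)^b)| * |∏ k ∈ Icc (n+1) m, (1 - (n:ℝ)^b/(k:ℝ)^b)|
        ≤ Cg * 1 := mul_le_mul_of_nonneg_left h2 (abs_nonneg _)
      _ = Cg := mul_one _
  have hQbound : ∀ m : ℕ, n ≤ m → Q m ≤ 2 * Cg := by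
    intro m hm
    have h1 : cc n m / 2 * Q m ≤ Cg := by
      rw [← hS m hm, hSdef]
      calc (-1:ℝ)^(n-1) * ∏ k ∈ (Icc 1 m).erase n, (1 - (n:ℝ)^b/(k:ℝ)^b)
          ≤ |(-1:ℝ)^(n-1) * ∏ k ∈ (Icc 1 m).erase n, (1 - (n:ℝ)^b/(k:ℝ)^b)| := le_abs_self _
        _ = |∏ k ∈ (Icc 1 m).erase n, (1 - (n:ℝ)^b/(k:ℝ)^b)| := by
            rw [abs_mul, abs_pow, abs_neg, abs_one, one_pow, one_mul]
        _ ≤ Cg := habs m hm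
    have h2 := cc_ge_one (n := n) (m := m) hm
    nlinarith [hQpos m]
  have hbdd : BddAbove (Set.range Q) := by
    refine ⟨2 * Cg, ?_⟩
    rintro y ⟨m, rfl⟩
    rcases le_or_gt n m with h | h
    · exact hQbound m h
    · exact le_trans (hQmono h.le) (hQbound n le_rfl)
  have hQtend : Tendsto Q atTop (𝓝 (⨆ m, Q m)) := tendsto_atTop_ciSup hQmono hbdd
  set L : ℝ := ⨆ m, Q m with hL
  refine ⟨L / 2, ?_, ?_⟩
  · have h2 : Tendsto (fun m => cc n m / 2 * Q m) atTop (𝓝 ((1:ℝ) / 2 * L)) := by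
      have := ((cc_tendsto n).div_const 2).mul hQtend
      simpa using this
    have heq : (fun m => cc n m / 2 * Q m) =ᶠ[atTop] S := by
      filter_upwards [eventually_ge_atTop n] with m hm
      exact (hS m hm).symm
    have := h2.congr' heq
    simpa [div_eq_mul_inv, mul_comm] using this
  · have hLQ : Q (n+1) ≤ L := le_ciSup hbdd (n+1)
    have hsplit : Q (n+1) = rr b n (n+1) * ∏ k ∈ Icc 1 (n-1), rr b n k := by
      rw [hQdef]
      simp only []
      rw [E_succ le_rfl, E_base hn, prod_insert (by simp only [mem_Icc]; omega)]
    have h1 : (b/2)^(n-1) ≤ ∏ k ∈ Icc 1 (n-1), rr b n k := by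
      have : (b/2)^(n-1) = ∏ _k ∈ Icc 1 (n-1), (b/2) := by
        rw [prod_const, Nat.card_Icc]
        norm_num
      rw [this]
      apply Finset.prod_le_prod
      · intro k _; linarith
      · intro k hk
        have hk1 : 1 ≤ k := (mem_Icc.mp hk).1
        have hkn : k < n := by have := (mem_Icc.mp hk).2; omega
        exact (rr_gt_half hb hk1 hkn).le
    have h2 : 1 < rr b n (n+1) := rr_gt_one hb hn (by omega)
    have hp : (0:ℝ) < (b/2)^(n-1) := by positivity
    have h3 : (b/2)^(n-1) < Q (n+1) := by
      rw [hsplit]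
      nlinarith [h1, h2, hp]
    have hfin : (1/b) * (b/2)^n = (b/2)^(n-1) / 2 := by
      conv_lhs => rw [show n = n-1+1 by omega]
      rw [pow_succ]
      have hbne : b ≠ 0 := by linarith
      field_simp
      try ring
    linarith
end

section
/- Let 1 < b < 2 be a real number and n ≥ 1 an integer, and set A(n;b) = (-1)^{n-1} ∏_{k=1,k≠n}^∞ (1 - n^b/k^b). Then A(n;b) < (1/b)(b/2)^n. -/
open Filter Finset Nat

-- factorial shift
lemma fact_shift (c a : ℕ) : (c + a) ! = c ! * ∏ i ∈ Icc 1 a, (c + i) := by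
  induction a with
  | zero => simp
  | succ a ih =>
    rw [Finset.prod_Icc_succ_top (Nat.le_add_left 1 a), ← mul_assoc, ← ih,
      ← Nat.add_assoc, Nat.factorial_succ]
    ring

-- reflected product
lemma refl_prod (n : ℕ) : ∏ k ∈ Icc 1 (n - 1), (n - k) = (n - 1) ! := by
  have h : ∏ k ∈ Icc 1 (n-1), (n - k) = ∏ k ∈ Icc 1 (n-1), k := by
    apply Finset.prod_nbij' (fun k => n - k) (fun k => n - k)
    · intro a ha; simp only [mem_Icc] at *; omega
    · intro a ha; simp only [mem_Icc] at *; omega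
    · intro a ha; simp only [mem_Icc] at *; omega
    · intro a ha; simp only [mem_Icc] at *; omega
    · intro a ha; rfl
  rw [h]
  have := fact_shift 0 (n-1)
  simpa using this.symm

-- Bernoulli consequence
lemma bern (b s : ℝ) (hb1 : 1 < b) (hb2 : b < 2) (hs : 1 ≤ s) :
    s ^ b - 1 ≤ b / 2 * (s ^ 2 - 1) := by
  have hs0 : (0:ℝ) ≤ s := by linarith
  have h0 : (0:ℝ) ≤ s ^ 2 - 1 := by nlinarith
  have h1 : s ^ b = (1 + (s ^ 2 - 1)) ^ (b / 2) := by
    rw [show (1:ℝ) + (s ^ 2 - 1) = s ^ 2 by ring, ← Real.rpow_natCast s 2,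
      ← Real.rpow_mul hs0]
    rw [show ((2:ℕ):ℝ) * (b / 2) = b by push_cast; ring]
  have h2 := rpow_one_add_le_one_add_mul_self (s := s ^ 2 - 1) (by linarith)
    (by linarith : (0:ℝ) ≤ b / 2) (by linarith : b / 2 ≤ 1)
  rw [h1]; linarith

lemma shift_prod (h : ℕ → ℝ) (n : ℕ) (hn : 1 ≤ n) (h1 : h 1 ≠ 0) :
    ∏ i ∈ Icc 1 n, h (i + 1) = (∏ i ∈ Icc 1 n, h i) * h (n + 1) / h 1 := by
  induction n, hn using Nat.le_induction with
  | base => simp only [Finset.Icc_self, Finset.prod_singleton]; field_simp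
  | succ n hn ih =>
    rw [Finset.prod_Icc_succ_top (by omega), Finset.prod_Icc_succ_top (by omega), ih]
    field_simp
    try ring

lemma base_id (n : ℕ) (hn : 1 ≤ n) :
    ∏ k ∈ Icc 1 (n - 1), ((n : ℝ) ^ 2 / (k : ℝ) ^ 2 - 1)
      = 1 / 2 * ∏ i ∈ Icc 1 n, (((n : ℝ) + i) / (i : ℝ)) := by
  have hA : (0:ℝ) < ((n-1)! : ℝ) := by positivity
  have hF : (0:ℝ) < ((n !) : ℝ) := by positivity
  have e1 : ∏ k ∈ Icc 1 (n-1), ((n : ℝ) ^ 2 / (k : ℝ) ^ 2 - 1)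
      = (((n-1)! : ℝ) * (∏ k ∈ Icc 1 (n-1), ((n : ℝ) + k))) / (((n-1)! : ℝ))^2 := by
    rw [show ∏ k ∈ Icc 1 (n-1), ((n : ℝ) ^ 2 / (k : ℝ) ^ 2 - 1)
        = ∏ k ∈ Icc 1 (n-1), (((n : ℝ) - k) * ((n : ℝ) + k) / (k:ℝ)^2) from
      Finset.prod_congr rfl fun k hk => by
        have hk' := Finset.mem_Icc.mp hk
        have : (0:ℝ) < k := by exact_mod_cast Nat.lt_of_lt_of_le Nat.zero_lt_one hk'.1
        field_simp
        try ring]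
    rw [Finset.prod_div_distrib, Finset.prod_mul_distrib]
    congr 2
    · rw [show ∏ k ∈ Icc 1 (n-1), ((n : ℝ) - k)
          = ∏ k ∈ Icc 1 (n-1), (((n - k : ℕ)) : ℝ) from
        Finset.prod_congr rfl fun k hk => by
          have hk' := Finset.mem_Icc.mp hk
          rw [Nat.cast_sub (by omega)]]
      rw [← Nat.cast_prod, refl_prod]
    · have hid : ∏ k ∈ Icc 1 (n-1), (k:ℝ) = (((n-1)!:ℕ) : ℝ) := by
        rw [← Nat.cast_prod]
        norm_cast
        simpa using (fact_shift 0 (n-1)).symm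
      rw [Finset.prod_pow, hid]
      try push_cast
      try ring
  have e2 : (n ! : ℝ) * ∏ k ∈ Icc 1 (n-1), ((n : ℝ) + k) = ((n + (n-1))! : ℝ) := by
    rw [fact_shift n (n-1)]
    push_cast
    ring
  have e3 : (n ! : ℝ) * ∏ i ∈ Icc 1 n, ((n : ℝ) + i) = ((n + n)! : ℝ) := by
    rw [fact_shift n n]; push_cast; ring
  have e4 : ∏ i ∈ Icc 1 n, ((i : ℝ)) = (n ! : ℝ) := by
    have := fact_shift 0 n
    simp only [Nat.zero_add, Nat.factorial_zero, one_mul] at this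
    rw [this]; push_cast; ring
  have e5 : ((n + n)! : ℝ) = 2 * n * ((n + (n-1))! : ℝ) := by
    rw [show n + n = (n + (n-1)) + 1 by omega, Nat.factorial_succ]
    push_cast [show n + (n-1) + 1 = 2*n by omega]
    ring
  have e6 : (n ! : ℝ) = n * ((n-1)! : ℝ) := by
    rw [← Nat.mul_factorial_pred (by omega)]; push_cast; ring
  have hn0 : (0:ℝ) < n := by exact_mod_cast hn
  have hC : ∏ i ∈ Icc 1 n, ((n : ℝ) + i) = 2 * n * ∏ k ∈ Icc 1 (n-1), ((n : ℝ) + k) := by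
    apply mul_left_cancel₀ hF.ne'
    rw [e3, e5, ← e2]; ring
  rw [e1, Finset.prod_div_distrib, e4, hC, e6]
  field_simp

section

/-- For real `1 < b < 2` and integer `n ≥ 1`, the infinite product
`A(n;b) = (-1)^(n-1) ∏_{k=1, k≠n}^∞ (1 - n^b/k^b)` converges and satisfies
`A(n;b) < (1/b)(b/2)^n`. -/
theorem stmt_2 (b : ℝ) (hb1 : 1 < b) (hb2 : b < 2) (n : ℕ) (hn : 1 ≤ n) :
    ∃ A : ℝ,
      Tendsto
        (fun m : ℕ =>
          (-1 : ℝ) ^ (n - 1) * ∏ k ∈ (Finset.Icc 1 m).erase n, (1 - (n : ℝ) ^ b / (k : ℝ) ^ b))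
        atTop (nhds A) ∧
      A < (1 / b) * (b / 2) ^ n := by
  have hb0 : (0:ℝ) < b := by linarith
  have hn0 : (0:ℝ) < (n:ℝ) := by exact_mod_cast hn
  set P : ℕ → ℝ := fun m : ℕ =>
      (-1 : ℝ) ^ (n - 1) * ∏ k ∈ (Finset.Icc 1 m).erase n, (1 - (n : ℝ) ^ b / (k : ℝ) ^ b)
    with hP
  set Q : ℕ → ℝ := fun m : ℕ =>
      (-1 : ℝ) ^ (n - 1) * ∏ k ∈ (Finset.Icc 1 m).erase n, (1 - (n : ℝ) ^ 2 / (k : ℝ) ^ 2)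
    with hQ
  set R : ℕ → ℝ := fun m : ℕ =>
      (1/2 : ℝ) * ∏ i ∈ Icc 1 n, (((m:ℝ) + i) / ((m:ℝ) + i - n)) with hR
  -- basic set manipulations
  have hins : ∀ m : ℕ, n ≤ m → (Icc 1 (m+1)).erase n = insert (m+1) ((Icc 1 m).erase n) := by
    intro m hm
    ext x
    simp only [Finset.mem_erase, Finset.mem_Icc, Finset.mem_insert]
    omega
  have herase : (Icc 1 n).erase n = Icc 1 (n-1) := by
    ext x
    simp only [Finset.mem_erase, Finset.mem_Icc]
    omega
  have hstep : ∀ (F : ℕ → ℝ) (m : ℕ), n ≤ m →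
      ∏ k ∈ (Icc 1 (m+1)).erase n, F k = F (m+1) * ∏ k ∈ (Icc 1 m).erase n, F k := by
    intro F m hm
    rw [hins m hm]
    exact Finset.prod_insert (by simp only [Finset.mem_erase, Finset.mem_Icc]; omega)
  have hsign : ∀ F : ℕ → ℝ,
      (-1 : ℝ) ^ (n - 1) * ∏ k ∈ Icc 1 (n-1), F k = ∏ k ∈ Icc 1 (n-1), (-(F k)) := by
    intro F
    have : ∏ k ∈ Icc 1 (n-1), (-(F k)) = ∏ k ∈ Icc 1 (n-1), ((-1) * F k) := by
      apply Finset.prod_congr rfl; intro k _; ring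
    rw [this, Finset.prod_mul_distrib, Finset.prod_const, Nat.card_Icc]
    norm_num
  -- factor facts, k > n
  have hcast : ∀ k : ℕ, n < k → (n:ℝ) < (k:ℝ) := fun k hk => by exact_mod_cast hk
  have hf_pos : ∀ k : ℕ, n < k → 0 < 1 - (n:ℝ)^b/(k:ℝ)^b := by
    intro k hk
    have hk0 : (0:ℝ) < k := lt_trans hn0 (hcast k hk)
    have h1 : (n:ℝ)^b < (k:ℝ)^b := Real.rpow_lt_rpow (Nat.cast_nonneg n) (hcast k hk) hb0
    have h2 : (0:ℝ) < (k:ℝ)^b := Real.rpow_pos_of_pos hk0 b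
    rw [sub_pos, div_lt_one h2]
    exact h1
  have hratio : ∀ k : ℕ, n < k → ((n:ℝ)/(k:ℝ))^(2:ℕ) ≤ ((n:ℝ)/(k:ℝ))^b → 
      1 - (n:ℝ)^b/(k:ℝ)^b ≤ 1 - (n:ℝ)^2/(k:ℝ)^2 := by
    intro k hk h
    have hk0 : (0:ℝ) < k := lt_trans hn0 (hcast k hk)
    rw [div_pow, Real.div_rpow (Nat.cast_nonneg n) (Nat.cast_nonneg k)] at h
    linarith
  have hf_le_g : ∀ k : ℕ, n < k → 1 - (n:ℝ)^b/(k:ℝ)^b ≤ 1 - (n:ℝ)^2/(k:ℝ)^2 := by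
    intro k hk
    apply hratio k hk
    have hk0 : (0:ℝ) < k := lt_trans hn0 (hcast k hk)
    have ht0 : (0:ℝ) < (n:ℝ)/(k:ℝ) := by positivity
    have ht1 : (n:ℝ)/(k:ℝ) ≤ 1 := by
      rw [div_le_one hk0]; exact (hcast k hk).le
    calc ((n:ℝ)/(k:ℝ))^(2:ℕ) = ((n:ℝ)/(k:ℝ))^((2:ℕ):ℝ) := (Real.rpow_natCast _ 2).symm
      _ ≤ ((n:ℝ)/(k:ℝ))^b := Real.rpow_le_rpow_of_exponent_ge ht0 ht1 (by exact_mod_cast hb2.le)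
  have hf_lt_g : 1 - (n:ℝ)^b/((n+1:ℕ):ℝ)^b < 1 - (n:ℝ)^2/((n+1:ℕ):ℝ)^2 := by
    have hk0 : (0:ℝ) < ((n+1:ℕ):ℝ) := by positivity
    have ht0 : (0:ℝ) < (n:ℝ)/((n+1:ℕ):ℝ) := by positivity
    have ht1 : (n:ℝ)/((n+1:ℕ):ℝ) < 1 := by
      rw [div_lt_one hk0]; exact hcast _ (Nat.lt_succ_self n)
    have h : ((n:ℝ)/((n+1:ℕ):ℝ))^((2:ℕ):ℝ) < ((n:ℝ)/((n+1:ℕ):ℝ))^b :=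
      Real.rpow_lt_rpow_of_exponent_gt ht0 ht1 (by exact_mod_cast hb2)
    rw [Real.rpow_natCast, div_pow, Real.div_rpow (Nat.cast_nonneg n) (Nat.cast_nonneg _)] at h
    linarith
  -- factor facts, 1 ≤ k < n
  have hlow : ∀ k : ℕ, k ∈ Icc 1 (n-1) →
      0 < (n:ℝ)^b/(k:ℝ)^b - 1 ∧
      (n:ℝ)^b/(k:ℝ)^b - 1 ≤ b/2 * ((n:ℝ)^2/(k:ℝ)^2 - 1) := by
    intro k hk
    rw [Finset.mem_Icc] at hk
    have hk0 : (0:ℝ) < k := by exact_mod_cast hk.1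
    have hkn : (k:ℝ) < (n:ℝ) := by exact_mod_cast (by omega : k < n)
    have hs1 : (1:ℝ) ≤ (n:ℝ)/(k:ℝ) := by rw [le_div_iff₀ hk0]; linarith
    have hrw : ((n:ℝ)/(k:ℝ))^b = (n:ℝ)^b/(k:ℝ)^b :=
      Real.div_rpow (Nat.cast_nonneg n) (Nat.cast_nonneg k) b
    have hrw2 : ((n:ℝ)/(k:ℝ))^(2:ℕ) = (n:ℝ)^2/(k:ℝ)^2 := div_pow _ _ _
    constructor
    · have : (1:ℝ) = (1:ℝ)^b := (Real.one_rpow b).symm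
      have h1 : (1:ℝ)^b < ((n:ℝ)/(k:ℝ))^b := by
        apply Real.rpow_lt_rpow (by norm_num) _ hb0
        rw [lt_div_iff₀ hk0]; linarith
      rw [Real.one_rpow] at h1
      rw [hrw] at h1
      linarith
    · have := bern b ((n:ℝ)/(k:ℝ)) hb1 hb2 hs1
      rw [hrw, hrw2] at this
      linarith
  -- P at n
  have hPn : P n = ∏ k ∈ Icc 1 (n-1), ((n:ℝ)^b/(k:ℝ)^b - 1) := by
    rw [hP]
    simp only
    rw [herase, hsign]
    apply Finset.prod_congr rfl; intro k _; ring
  have hQn : Q n = ∏ k ∈ Icc 1 (n-1), ((n:ℝ)^2/(k:ℝ)^2 - 1) := by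
    rw [hQ]
    simp only
    rw [herase, hsign]
    apply Finset.prod_congr rfl; intro k _; ring
  have hPrec : ∀ m : ℕ, n ≤ m → P (m+1) = (1 - (n:ℝ)^b/((m+1:ℕ):ℝ)^b) * P m := by
    intro m hm
    simp only [hP]
    rw [hstep _ m hm]
    push_cast
    ring
  have hQrec : ∀ m : ℕ, n ≤ m → Q (m+1) = (1 - (n:ℝ)^2/((m+1:ℕ):ℝ)^2) * Q m := by
    intro m hm
    simp only [hQ]
    rw [hstep _ m hm]
    push_cast
    ring
  have hPpos : ∀ m : ℕ, n ≤ m → 0 < P m := by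
    intro m hm
    induction m, hm using Nat.le_induction with
    | base =>
      rw [hPn]
      exact Finset.prod_pos fun k hk => (hlow k hk).1
    | succ m hm ih =>
      rw [hPrec m hm]
      exact mul_pos (hf_pos (m+1) (by omega)) ih
  have hQpos : ∀ m : ℕ, n ≤ m → 0 < Q m := by
    intro m hm
    induction m, hm using Nat.le_induction with
    | base =>
      rw [hQn]
      apply Finset.prod_pos
      intro k hk
      have h1 := (hlow k hk).1
      have h2 := (hlow k hk).2
      nlinarith
    | succ m hm ih =>
      rw [hQrec m hm]
      apply mul_pos _ ih
      have := hf_pos (m+1) (by omega)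
      have := hf_le_g (m+1) (by omega)
      linarith
  -- limit A exists
  have hanti : ∀ m : ℕ, n ≤ m → P (m+1) ≤ P m := by
    intro m hm
    rw [hPrec m hm]
    have h1 : 0 < (n:ℝ)^b/((m+1:ℕ):ℝ)^b := by
      apply div_pos (Real.rpow_pos_of_pos hn0 b) (Real.rpow_pos_of_pos (by positivity) b)
    nlinarith [hPpos m hm]
  have hanti' : Antitone fun i : ℕ => P (i + n) := by
    apply antitone_nat_of_succ_le
    intro i
    have := hanti (i + n) (by omega)
    simpa [show i + 1 + n = i + n + 1 by omega] using this
  have hbdd : BddBelow (Set.range fun i : ℕ => P (i + n)) := by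
    refine ⟨0, ?_⟩
    rintro x ⟨i, rfl⟩
    exact (hPpos _ (by omega)).le
  have hA : Tendsto (fun i : ℕ => P (i + n)) atTop (nhds (⨅ i : ℕ, P (i + n))) :=
    tendsto_atTop_ciInf hanti' hbdd
  set A : ℝ := ⨅ i : ℕ, P (i + n) with hAdef
  have hPA : Tendsto P atTop (nhds A) := (tendsto_add_atTop_iff_nat n).mp hA
  refine ⟨A, hPA, ?_⟩
  -- closed form for Q
  have hQR : ∀ m : ℕ, n ≤ m → Q m = R m := by
    intro m hm
    induction m, hm using Nat.le_induction with
    | base =>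
      rw [hQn, base_id n hn, hR]
      simp only
      congr 1
      apply Finset.prod_congr rfl
      intro i hi
      rw [show (n:ℝ) + i - n = (i:ℝ) by ring]
    | succ m hm ih =>
      rw [hQrec m hm, ih]
      have hd1 : (0:ℝ) < (m:ℝ) + 1 := by positivity
      have hmn : (n:ℝ) ≤ (m:ℝ) := by exact_mod_cast hm
      have hd2 : (0:ℝ) < (m:ℝ) + 1 - n := by linarith
      have h1 : ∏ i ∈ Icc 1 n, ((m:ℝ) + ((i+1:ℕ):ℝ))
          = (∏ i ∈ Icc 1 n, ((m:ℝ) + (i:ℝ))) * ((m:ℝ) + ((n+1:ℕ):ℝ)) / ((m:ℝ) + ((1:ℕ):ℝ)) :=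
        shift_prod (fun x : ℕ => (m:ℝ) + (x:ℝ)) n hn (by push_cast; linarith)
      have h2 : ∏ i ∈ Icc 1 n, ((m:ℝ) + ((i+1:ℕ):ℝ) - n)
          = (∏ i ∈ Icc 1 n, ((m:ℝ) + (i:ℝ) - n)) * ((m:ℝ) + ((n+1:ℕ):ℝ) - n) / ((m:ℝ) + ((1:ℕ):ℝ) - n) :=
        shift_prod (fun x : ℕ => (m:ℝ) + (x:ℝ) - n) n hn (by push_cast; linarith)
      have e : ∏ i ∈ Icc 1 n, ((((m+1:ℕ)):ℝ) + i)/((((m+1:ℕ)):ℝ) + i - n)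
          = (∏ i ∈ Icc 1 n, ((m:ℝ) + ((i+1:ℕ):ℝ)))/(∏ i ∈ Icc 1 n, ((m:ℝ) + ((i+1:ℕ):ℝ) - n)) := by
        rw [← Finset.prod_div_distrib]
        apply Finset.prod_congr rfl
        intro i hi
        congr 1 <;> push_cast <;> ring
      have hprodden : (0:ℝ) < ∏ i ∈ Icc 1 n, ((m:ℝ) + i - n) := by
        apply Finset.prod_pos
        intro i hi
        have hi1 : 1 ≤ i := (Finset.mem_Icc.mp hi).1
        have : (1:ℝ) ≤ (i:ℝ) := by exact_mod_cast hi1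
        linarith
      rw [hR]
      simp only
      rw [e, h1, h2,
        show ∏ i ∈ Icc 1 n, (((m:ℝ)+i)/((m:ℝ)+i-n))
          = (∏ i ∈ Icc 1 n, ((m:ℝ)+i))/(∏ i ∈ Icc 1 n, ((m:ℝ)+i-n)) from Finset.prod_div_distrib _ _]
      have hne1 : ((m:ℝ) + 1) ≠ 0 := ne_of_gt hd1
      have hne2 : ((m:ℝ) + 1 - n) ≠ 0 := ne_of_gt hd2
      have hne3 : (∏ i ∈ Icc 1 n, ((m:ℝ) + i - n)) ≠ 0 := ne_of_gt hprodden
      push_cast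
      set X := ∏ i ∈ Icc 1 n, ((m:ℝ) + (i:ℝ)) with hX
      set Y := ∏ i ∈ Icc 1 n, ((m:ℝ) + (i:ℝ) - (n:ℝ)) with hY
      clear_value X Y
      rw [show ((m:ℝ) + ((n:ℝ)+1) - (n:ℝ)) = (m:ℝ) + 1 from by ring]
      field_simp
      ring
  -- the constant K
  set K : ℝ := (1 - (n:ℝ)^b/((n+1:ℕ):ℝ)^b)/(1 - (n:ℝ)^2/((n+1:ℕ):ℝ)^2) with hK
  have hgK : 0 < 1 - (n:ℝ)^2/((n+1:ℕ):ℝ)^2 := by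
    have h1 := hf_pos (n+1) (Nat.lt_succ_self n)
    have h2 := hf_le_g (n+1) (Nat.lt_succ_self n)
    linarith
  have hK0 : 0 < K := div_pos (hf_pos (n+1) (Nat.lt_succ_self n)) hgK
  have hK1 : K < 1 := (div_lt_one hgK).mpr hf_lt_g
  have hfK : 1 - (n:ℝ)^b/((n+1:ℕ):ℝ)^b = K * (1 - (n:ℝ)^2/((n+1:ℕ):ℝ)^2) :=
    (div_mul_cancel₀ _ hgK.ne').symm
  -- base comparison
  have hbase : P n ≤ (b/2)^(n-1) * Q n := by
    rw [hPn, hQn]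
    rw [show ((b/2)^(n-1) : ℝ) * ∏ k ∈ Icc 1 (n-1), ((n:ℝ)^2/(k:ℝ)^2 - 1)
        = ∏ k ∈ Icc 1 (n-1), (b/2 * ((n:ℝ)^2/(k:ℝ)^2 - 1)) from by
      rw [Finset.prod_mul_distrib, Finset.prod_const, Nat.card_Icc]
      norm_num]
    apply Finset.prod_le_prod
    · intro k hk; exact (hlow k hk).1.le
    · intro k hk; exact (hlow k hk).2
  have hcomp : ∀ m : ℕ, n+1 ≤ m → P m ≤ K * (b/2)^(n-1) * Q m := by
    intro m hm
    induction m, hm using Nat.le_induction with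
    | base =>
      rw [hPrec n le_rfl, hQrec n le_rfl, hfK]
      calc K * (1 - (n:ℝ)^2/((n+1:ℕ):ℝ)^2) * P n
          ≤ K * (1 - (n:ℝ)^2/((n+1:ℕ):ℝ)^2) * ((b/2)^(n-1) * Q n) :=
            mul_le_mul_of_nonneg_left hbase (mul_nonneg hK0.le hgK.le)
        _ = K * (b/2)^(n-1) * ((1 - (n:ℝ)^2/((n+1:ℕ):ℝ)^2) * Q n) := by ring
    | succ m hm ih =>
      rw [hPrec m (by omega), hQrec m (by omega)]
      have hf0 := hf_pos (m+1) (by omega)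
      have hfg2 := hf_le_g (m+1) (by omega)
      have hQm := hQpos m (by omega)
      calc (1 - (n:ℝ)^b/((m+1:ℕ):ℝ)^b) * P m
          ≤ (1 - (n:ℝ)^b/((m+1:ℕ):ℝ)^b) * (K * (b/2)^(n-1) * Q m) :=
            mul_le_mul_of_nonneg_left ih hf0.le
        _ ≤ (1 - (n:ℝ)^2/((m+1:ℕ):ℝ)^2) * (K * (b/2)^(n-1) * Q m) := by
            apply mul_le_mul_of_nonneg_right hfg2
            exact mul_nonneg (mul_nonneg hK0.le (by positivity)) hQm.le
        _ = K * (b/2)^(n-1) * ((1 - (n:ℝ)^2/((m+1:ℕ):ℝ)^2) * Q m) := by ring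
  -- limits
  have hRlim : Tendsto R atTop (nhds (1/2 : ℝ)) := by
    have hfac : ∀ i ∈ Icc 1 n, Tendsto (fun m : ℕ => ((m:ℝ) + i)/((m:ℝ) + i - n)) atTop
        (nhds 1) := by
      intro i hi
      have hd : Tendsto (fun m : ℕ => (m:ℝ) + i - n) atTop atTop := by
        have h := tendsto_atTop_add_const_right atTop ((i:ℝ) - n)
          (tendsto_natCast_atTop_atTop (R := ℝ))
        apply h.congr
        intro m
        ring
      have h0 : Tendsto (fun m : ℕ => (n:ℝ)/((m:ℝ) + i - n)) atTop (nhds 0) :=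
        tendsto_const_nhds.div_atTop hd
      have h1 : Tendsto (fun m : ℕ => 1 + (n:ℝ)/((m:ℝ) + i - n)) atTop (nhds 1) := by
        simpa using h0.const_add 1
      apply h1.congr'
      filter_upwards [eventually_ge_atTop (n+1)] with m hm
      have hi1 : (1:ℝ) ≤ (i:ℝ) := by exact_mod_cast (Finset.mem_Icc.mp hi).1
      have hm1 : ((n:ℝ)+1) ≤ (m:ℝ) := by exact_mod_cast hm
      have h2 : (0:ℝ) < (m:ℝ) + i - n := by linarith
      field_simp
      ring
    have hprod := tendsto_finset_prod (Icc 1 n) hfac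
    have h2 := hprod.const_mul (1/2 : ℝ)
    simp only [Finset.prod_const_one, mul_one] at h2
    exact h2
  have hQlim : Tendsto Q atTop (nhds (1/2 : ℝ)) := by
    apply hRlim.congr'
    filter_upwards [eventually_ge_atTop n] with m hm
    exact (hQR m hm).symm
  have hfin : Tendsto (fun m => K * (b/2)^(n-1) * Q m) atTop
      (nhds (K * (b/2)^(n-1) * (1/2))) := hQlim.const_mul _
  have hAle : A ≤ K * (b/2)^(n-1) * (1/2) := by
    apply le_of_tendsto_of_tendsto hPA hfin
    filter_upwards [eventually_ge_atTop (n+1)] with m hm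
    exact hcomp m hm
  have hpow : (0:ℝ) < (b/2)^(n-1) * (1/2) := by positivity
  have htar : (1/b) * (b/2)^n = (b/2)^(n-1) * (1/2) := by
    have h : (b/2)^n = (b/2)^(n-1) * (b/2) := by
      rw [← pow_succ]
      congr 1
      omega
    rw [h]
    field_simp
    try ring
  calc A ≤ K * (b/2)^(n-1) * (1/2) := hAle
    _ = K * ((b/2)^(n-1) * (1/2)) := by ring
    _ < 1 * ((b/2)^(n-1) * (1/2)) := by nlinarith
    _ = (1/b) * (b/2)^n := by rw [htar]; ring
end
end

section
/- For every complex number w not an integer, πw / sin(πw) = 1 + 2 ∑_{k=1}^∞ (-1)^k w²/(w² - k²), with the series converging. -/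
open Real Complex Filter

noncomputable section

lemma sin_add_int_mul_pi' (z : ℂ) (n : ℤ) :
    Complex.sin (z + n * Real.pi) = (-1) ^ n * Complex.sin z :=
  n.cast_negOnePow ℂ ▸ Complex.sin_antiperiodic.add_int_mul_eq n

lemma exp_int_integral (c : ℂ) (hc : c ≠ 0) :
    (∫ t in (-Real.pi)..(Real.pi), Complex.exp (c * t)) =
      (Complex.exp (c * Real.pi) - Complex.exp (-(c * Real.pi))) / c := by
  rw [integral_exp_mul_complex hc]
  push_cast
  ring_nf

end
noncomputable section
lemma two_I_sin (z : ℂ) : Complex.exp (z * I) - Complex.exp (-z * I) = 2 * I * Complex.sin z := by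
  rw [Complex.sin]
  linear_combination (Complex.exp (z*I) - Complex.exp (-z*I)) * Complex.I_sq

lemma cos_integral (w : ℂ) (hw : ∀ k : ℤ, w ≠ (k : ℂ)) (n : ℤ) :
    (∫ t in (-Real.pi)..(Real.pi), Complex.exp (-((n:ℂ) * I) * t) * Complex.cos (w * t))
      = (-1) ^ n * Complex.sin (Real.pi * w) * (2 * w / (w ^ 2 - (n:ℂ) ^ 2)) := by
  have hwn : w - n ≠ 0 := sub_ne_zero.mpr (hw n)
  have hwn' : w + n ≠ 0 := by
    intro h
    exact hw (-n) (by rw [Int.cast_neg]; linear_combination h)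
  have hc1 : (I * (w - n)) ≠ 0 := mul_ne_zero Complex.I_ne_zero hwn
  have hc2 : (-(I * (w + n))) ≠ 0 := neg_ne_zero.mpr (mul_ne_zero Complex.I_ne_zero hwn')
  have hpt : ∀ t : ℝ, Complex.exp (-((n:ℂ) * I) * t) * Complex.cos (w * t)
      = (Complex.exp ((I * (w - n)) * t) + Complex.exp ((-(I * (w + n))) * t)) / 2 := by
    intro t
    rw [Complex.cos, show ((I * (w - n)) * t : ℂ) = -((n:ℂ)*I)*t + (w*t*I) by ring,
      show ((-(I * (w + n))) * t : ℂ) = -((n:ℂ)*I)*t + (-(w*t*I)) by ring,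
      Complex.exp_add, Complex.exp_add]
    ring
  rw [intervalIntegral.integral_congr (g := fun t : ℝ =>
      (Complex.exp ((I * (w - n)) * t) + Complex.exp ((-(I * (w + n))) * t)) / 2)
      (fun t _ => hpt t)]
  rw [intervalIntegral.integral_div, intervalIntegral.integral_add
      (Continuous.intervalIntegrable (by fun_prop) _ _)
      (Continuous.intervalIntegrable (by fun_prop) _ _),
    exp_int_integral _ hc1, exp_int_integral _ hc2]
  have h1 : Complex.exp ((I * (w - n)) * Real.pi) - Complex.exp (-((I * (w - n)) * Real.pi))
      = 2 * I * Complex.sin ((w - n) * Real.pi) := by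
    rw [show (-((I * (w - n)) * Real.pi) : ℂ) = -((w - n) * (Real.pi:ℂ)) * I by ring,
      show ((I * (w - n)) * Real.pi : ℂ) = ((w - n) * Real.pi) * I by ring]
    exact two_I_sin _
  have h2 : Complex.exp ((-(I * (w + n))) * Real.pi) - Complex.exp (-((-(I * (w + n))) * Real.pi))
      = -(2 * I * Complex.sin ((w + n) * Real.pi)) := by
    rw [show (-((-(I * (w + n))) * Real.pi) : ℂ) = ((w + n) * Real.pi) * I by ring,
      show ((-(I * (w + n))) * Real.pi : ℂ) = -((w + n) * (Real.pi:ℂ)) * I by ring]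
    linear_combination - two_I_sin ((w + (n:ℂ)) * Real.pi)
  rw [h1, h2]
  have hs1 : Complex.sin ((w - n) * Real.pi) = (-1) ^ n * Complex.sin (Real.pi * w) := by
    rw [show ((w - n) * Real.pi : ℂ) = Real.pi * w + (-n : ℤ) * Real.pi by push_cast; ring,
      sin_add_int_mul_pi']
    congr 1
    rw [zpow_neg]
    rw [show ((-1 : ℂ) ^ n)⁻¹ = ((-1 : ℂ)⁻¹) ^ n by rw [inv_zpow], inv_neg_one]
  have hs2 : Complex.sin ((w + n) * Real.pi) = (-1) ^ n * Complex.sin (Real.pi * w) := by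
    rw [show ((w + n) * Real.pi : ℂ) = Real.pi * w + (n : ℤ) * Real.pi by push_cast; ring,
      sin_add_int_mul_pi']
  rw [hs1, hs2]
  have hsq : w ^ 2 - (n:ℂ) ^ 2 ≠ 0 := by
    rw [show w ^ 2 - (n:ℂ) ^ 2 = (w - n) * (w + n) by ring]
    exact mul_ne_zero hwn hwn'
  field_simp
  ring
end
open Real Complex Filter in
/-- For every complex `w` that is not an integer,
`πw / sin(πw) = 1 + 2 ∑_{k=1}^∞ (-1)^k w²/(w² - k²)`, with the series converging. -/
theorem stmt_4 (w : ℂ) (hw : ∀ k : ℤ, w ≠ (k : ℂ)) :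
    Summable (fun k : ℕ => (-1 : ℂ) ^ (k + 1) * (w ^ 2 / (w ^ 2 - ((k : ℂ) + 1) ^ 2))) ∧
    (Real.pi : ℂ) * w / Complex.sin ((Real.pi : ℂ) * w) =
      1 + 2 * ∑' k : ℕ, (-1 : ℂ) ^ (k + 1) * (w ^ 2 / (w ^ 2 - ((k : ℂ) + 1) ^ 2)) := by
  have hpi : (0:ℝ) < 2 * Real.pi := by positivity
  haveI : Fact (0 < 2 * Real.pi) := ⟨hpi⟩
  have hπC : ((Real.pi : ℂ)) ≠ 0 := Complex.ofReal_ne_zero.mpr Real.pi_ne_zero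
  set F : ℝ → ℂ := fun t => Complex.cos (w * t) with hF
  have hFcont : Continuous F := by fun_prop
  have hFper : F (-Real.pi) = F (-Real.pi + 2 * Real.pi) := by
    simp only [hF]
    rw [show (-Real.pi + 2 * Real.pi : ℝ) = Real.pi by ring]
    push_cast
    rw [show (w * -(Real.pi:ℂ)) = -(w * Real.pi) by ring, Complex.cos_neg]
  set f : C(AddCircle (2 * Real.pi), ℂ) :=
    ⟨AddCircle.liftIco (2 * Real.pi) (-Real.pi) F,
      AddCircle.liftIco_continuous hFper hFcont.continuousOn⟩ with hfdef
  set g : ℤ → ℂ := fun n => (-1) ^ n * (1 / (w ^ 2 - (n:ℂ) ^ 2)) with hg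
  set A : ℂ := w * Complex.sin (Real.pi * w) / Real.pi with hA
  have hsq : ∀ n : ℤ, w ^ 2 - (n:ℂ) ^ 2 ≠ 0 := by
    intro n
    rw [show w ^ 2 - (n:ℂ) ^ 2 = (w - n) * (w + n) by ring]
    refine mul_ne_zero (sub_ne_zero.mpr (hw n)) fun h => hw (-n) ?_
    rw [Int.cast_neg]; linear_combination h
  have hcoeff : ∀ n : ℤ, fourierCoeff (⇑f) n = A * g n := by
    intro n
    have h0 : fourierCoeff (⇑f) n
        = fourierCoeffOn (lt_add_of_pos_right (-Real.pi) hpi) F n :=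
      fourierCoeff_liftIco_eq (T := 2 * Real.pi) F n
    rw [h0, fourierCoeffOn_eq_integral]
    have hb : (-Real.pi + 2 * Real.pi : ℝ) = Real.pi := by ring
    rw [hb]
    have hInt : ∀ x ∈ Set.uIcc (-Real.pi) Real.pi,
        (fourier (-n) (x : AddCircle (Real.pi - -Real.pi)) • F x : ℂ)
          = Complex.exp (-((n:ℂ) * I) * x) * Complex.cos (w * x) := by
      intro x _
      rw [smul_eq_mul, fourier_coe_apply]
      congr 2
      push_cast
      field_simp [hπC]
      ring
    rw [intervalIntegral.integral_congr hInt, cos_integral w hw n]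
    rw [Complex.real_smul]
    push_cast
    simp only [hA, hg]
    field_simp [hπC, hsq n]
    ring
  have hgsummable : Summable g := by
    have hbig : Summable (fun n : ℤ => 2 * (1 / (n:ℝ) ^ 2)) :=
      (summable_one_div_int_pow.mpr one_lt_two).mul_left 2
    refine Summable.of_norm_bounded_eventually hbig ?_
    have t1 : Tendsto (fun n : ℤ => ‖(n:ℝ)‖) cofinite atTop :=
      tendsto_norm_cocompact_atTop.comp Int.tendsto_coe_cofinite
    have t2 : Tendsto (fun n : ℤ => ((n:ℝ)) ^ 2) cofinite atTop := by
      refine ((tendsto_pow_atTop two_ne_zero).comp t1).congr fun n => ?_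
      simp [Real.norm_eq_abs, _root_.sq_abs]
    filter_upwards [t2.eventually_ge_atTop (2 * (‖w‖ ^ 2 + 1))] with n hn
    have hnormn : ‖(n:ℂ) ^ 2‖ = (n:ℝ) ^ 2 := by
      rw [norm_pow, show ((n:ℂ)) = (((n:ℝ)):ℂ) by push_cast; ring, Complex.norm_real,
        Real.norm_eq_abs, _root_.sq_abs]
    have hposn : (0:ℝ) < (n:ℝ) ^ 2 / 2 := by nlinarith [norm_nonneg w]
    have hlow : (n:ℝ) ^ 2 / 2 ≤ ‖w ^ 2 - (n:ℂ) ^ 2‖ := by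
      have h1 : ‖(n:ℂ) ^ 2‖ - ‖w ^ 2‖ ≤ ‖(n:ℂ) ^ 2 - w ^ 2‖ := norm_sub_norm_le _ _
      rw [norm_sub_rev] at h1
      rw [hnormn] at h1
      have : ‖w ^ 2‖ ≤ ‖w‖ ^ 2 := by rw [norm_pow]
      nlinarith
    have hgn : ‖g n‖ = 1 / ‖w ^ 2 - (n:ℂ) ^ 2‖ := by
      simp only [hg, norm_mul, norm_zpow, norm_neg, norm_one, one_zpow, one_mul, norm_div]
    rw [hgn]
    calc (1:ℝ) / ‖w ^ 2 - (n:ℂ) ^ 2‖ ≤ 1 / ((n:ℝ) ^ 2 / 2) :=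
          one_div_le_one_div_of_le hposn hlow
      _ = 2 * (1 / (n:ℝ) ^ 2) := by field_simp
  have hsum : Summable (fourierCoeff (⇑f)) :=
    ((hgsummable.mul_left A).congr fun n => (hcoeff n).symm)
  have hf0 : f (((0:ℝ)) : AddCircle (2 * Real.pi)) = 1 := by
    show AddCircle.liftIco (2 * Real.pi) (-Real.pi) F ((0:ℝ) : AddCircle (2 * Real.pi)) = 1
    rw [AddCircle.liftIco_coe_apply
      (Set.mem_Ico.mpr ⟨by linarith [Real.pi_pos], by linarith [Real.pi_pos]⟩ :
        (0:ℝ) ∈ Set.Ico (-Real.pi) (-Real.pi + 2 * Real.pi))]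
    simp [hF]
  have hfour : ∀ i : ℤ, fourier i ((0 : ℝ) : AddCircle (2 * Real.pi)) = 1 := by
    intro i
    rw [fourier_coe_apply]
    simp
  have hps := has_pointwise_sum_fourier_series_of_summable hsum ((0:ℝ) : AddCircle (2 * Real.pi))
  have hone : HasSum (fun n : ℤ => A * g n) 1 := by
    have : (fun i : ℤ => fourierCoeff (⇑f) i • fourier i ((0:ℝ) : AddCircle (2 * Real.pi)))
        = fun i : ℤ => A * g i := by
      funext i
      rw [hfour i, smul_eq_mul, mul_one, hcoeff i]
    rwa [this, hf0] at hps
  have hw0 : w ≠ 0 := by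
    intro h; exact hw 0 (by rw [h]; simp)
  have hsin : Complex.sin ((Real.pi:ℂ) * w) ≠ 0 := by
    rw [Complex.sin_ne_zero_iff]
    intro k h
    refine hw k (mul_left_cancel₀ hπC ?_)
    linear_combination h
  have hAne : A ≠ 0 := by
    rw [hA]
    exact div_ne_zero (mul_ne_zero hw0 hsin) hπC
  have hgsum : HasSum g A⁻¹ := by
    have := hone.mul_left A⁻¹
    rw [mul_one] at this
    refine this.congr_fun fun n => ?_
    rw [inv_mul_cancel_left₀ hAne]
  have hgeven : ∀ n : ℤ, g (-n) = g n := by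
    intro n
    simp only [hg]
    rw [zpow_neg, show ((-n:ℤ):ℂ) = -(n:ℂ) by push_cast; ring]
    rw [show ((-1:ℂ) ^ n)⁻¹ = ((-1:ℂ)⁻¹) ^ n by rw [inv_zpow], inv_neg_one]
    ring_nf
  have h2g : HasSum (fun n : ℕ => 2 * g n) (A⁻¹ + g 0) := by
    refine hgsum.nat_add_neg.congr_fun fun n => ?_
    rw [hgeven]
    ring
  have hshift : HasSum (fun n : ℕ => 2 * g ((n + 1 : ℕ) : ℤ))
      ((A⁻¹ + g 0) - ∑ i ∈ Finset.range 1, 2 * g (i : ℤ)) :=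
    (hasSum_nat_add_iff' 1).mpr h2g
  have hfinal : HasSum (fun k : ℕ => (-1 : ℂ) ^ (k + 1) * (w ^ 2 / (w ^ 2 - ((k : ℂ) + 1) ^ 2)))
      ((w ^ 2 / 2) * ((A⁻¹ + g 0) - ∑ i ∈ Finset.range 1, 2 * g (i : ℤ))) := by
    refine (hshift.mul_left (w ^ 2 / 2)).congr_fun fun k => ?_
    simp only [hg]
    rw [show (((k + 1 : ℕ) : ℤ) : ℂ) = (k : ℂ) + 1 by push_cast; ring,
      show ((-1:ℂ) ^ ((k + 1 : ℕ) : ℤ)) = (-1:ℂ) ^ (k + 1) from zpow_natCast _ _]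
    ring
  refine ⟨hfinal.summable, ?_⟩
  rw [hfinal.tsum_eq, Finset.sum_range_one]
  have hg0 : g ((0:ℕ) : ℤ) = 1 / w ^ 2 := by
    simp only [hg]; norm_num
  rw [hg0]
  have hgz : g (0 : ℤ) = 1 / w ^ 2 := by simp only [hg]; norm_num
  rw [hgz, hA, inv_div]
  have h5 : w ^ 5 * w⁻¹ ^ 5 = 1 := by
    rw [inv_pow, mul_inv_cancel₀ (pow_ne_zero 5 hw0)]
  have hs1 : Complex.sin ((Real.pi:ℂ) * w) * (Complex.sin ((Real.pi:ℂ) * w))⁻¹ = 1 :=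
    mul_inv_cancel₀ hsin
  field_simp [hw0, hsin, hπC]
  linear_combination
end

section
/- For every complex number w not an integer, cot(πw) = 1/(πw) + ∑_{k=1}^∞ (2w/π) · 1/(w² - k²), with the series converging. -/
open Filter Finset Complex Topology Real

noncomputable section

namespace CotML

/-- `‖∏ (1 + a i) - 1‖ ≤ ∏ (1 + ‖a i‖) - 1`. -/
lemma norm_prod_one_add_sub_one_le {ι : Type*} (s : Finset ι) (a : ι → ℂ) :
    ‖(∏ i ∈ s, (1 + a i)) - 1‖ ≤ (∏ i ∈ s, (1 + ‖a i‖)) - 1 := by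
  induction s using Finset.cons_induction with
  | empty => simp
  | cons i s hi ih =>
    have hP : ‖∏ j ∈ s, (1 + a j)‖ ≤ ∏ j ∈ s, (1 + ‖a j‖) := by
      refine (Finset.norm_prod_le _ _).trans (Finset.prod_le_prod (fun j _ => norm_nonneg _) ?_)
      intro j _
      simpa using norm_add_le (1 : ℂ) (a j)
    rw [Finset.prod_cons, Finset.prod_cons]
    have h1 : (1 + a i) * (∏ j ∈ s, (1 + a j)) - 1
        = ((∏ j ∈ s, (1 + a j)) - 1) + a i * (∏ j ∈ s, (1 + a j)) := by ring
    rw [h1]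
    calc ‖((∏ j ∈ s, (1 + a j)) - 1) + a i * (∏ j ∈ s, (1 + a j))‖
        ≤ ‖(∏ j ∈ s, (1 + a j)) - 1‖ + ‖a i * (∏ j ∈ s, (1 + a j))‖ := norm_add_le _ _
      _ = ‖(∏ j ∈ s, (1 + a j)) - 1‖ + ‖a i‖ * ‖∏ j ∈ s, (1 + a j)‖ := by rw [norm_mul]
      _ ≤ ((∏ j ∈ s, (1 + ‖a j‖)) - 1) + ‖a i‖ * ∏ j ∈ s, (1 + ‖a j‖) := by
          gcongr
      _ = (1 + ‖a i‖) * ∏ j ∈ s, (1 + ‖a j‖) - 1 := by ring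

lemma prod_one_add_le_exp_sum (s : Finset ℕ) (u : ℕ → ℝ) (hu : ∀ j, 0 ≤ u j) :
    ∏ j ∈ s, (1 + u j) ≤ Real.exp (∑ j ∈ s, u j) := by
  rw [Real.exp_sum]
  refine Finset.prod_le_prod (fun j _ => by have := hu j; linarith) (fun j _ => ?_)
  simpa [add_comm] using Real.add_one_le_exp (u j)

end CotML

namespace CotML2
open CotML

variable {R : ℝ}

private def u (R : ℝ) (j : ℕ) : ℝ := R ^ 2 / ((j : ℝ) + 1) ^ 2

private def F (n : ℕ) (z : ℂ) : ℂ :=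
  ↑Real.pi * z * ∏ j ∈ Finset.range n, (1 - z ^ 2 / ((j : ℂ) + 1) ^ 2)

lemma norm_natCast_add_one_pow (j : ℕ) : ‖((j : ℂ) + 1) ^ 2‖ = ((j : ℝ) + 1) ^ 2 := by
  have h : ((j : ℂ) + 1) = ((j + 1 : ℕ) : ℂ) := by push_cast; ring
  rw [norm_pow, h, Complex.norm_natCast]
  push_cast; ring

lemma summable_u (R : ℝ) : Summable (u R) := by
  have h : Summable (fun j : ℕ => 1 / ((j : ℝ) + 1) ^ 2) := by
    have := (summable_nat_add_iff (f := fun n : ℕ => 1 / (n : ℝ) ^ 2) 1).2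
      ((Real.summable_one_div_nat_pow (p := 2)).2 one_lt_two)
    simpa [add_comm] using this
  unfold u
  simpa [u, div_eq_mul_inv, one_div] using h.mul_left (R ^ 2)

lemma u_nonneg (R : ℝ) (j : ℕ) : 0 ≤ u R j := by
  unfold u; positivity

lemma norm_term_le (z : ℂ) (hz : ‖z‖ ≤ R) (j : ℕ) :
    ‖z ^ 2 / ((j : ℂ) + 1) ^ 2‖ ≤ u R j := by
  rw [norm_div, norm_natCast_add_one_pow, norm_pow]
  unfold u
  gcongr

lemma norm_prod_sub_one_le (t : Finset ℕ) (z : ℂ) (hz : ‖z‖ ≤ R) :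
    ‖(∏ j ∈ t, (1 - z ^ 2 / ((j : ℂ) + 1) ^ 2)) - 1‖ ≤ Real.exp (∑ j ∈ t, u R j) - 1 := by
  have h0 : ∀ j : ℕ, (1 : ℂ) - z ^ 2 / ((j : ℂ) + 1) ^ 2 = 1 + -(z ^ 2 / ((j : ℂ) + 1) ^ 2) := by
    intro j; ring
  simp_rw [h0]
  refine (norm_prod_one_add_sub_one_le t _).trans ?_
  have h1 : (∏ j ∈ t, (1 + ‖-(z ^ 2 / ((j : ℂ) + 1) ^ 2)‖)) ≤ ∏ j ∈ t, (1 + u R j) := by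
    refine Finset.prod_le_prod (fun j _ => by positivity) (fun j _ => ?_)
    have := norm_term_le z hz j
    rw [norm_neg]; linarith
  have h2 := prod_one_add_le_exp_sum t (u R) (u_nonneg R)
  linarith

lemma norm_prod_le_exp (t : Finset ℕ) (z : ℂ) (hz : ‖z‖ ≤ R) :
    ‖∏ j ∈ t, (1 - z ^ 2 / ((j : ℂ) + 1) ^ 2)‖ ≤ Real.exp (∑ j ∈ t, u R j) := by
  refine (Finset.norm_prod_le _ _).trans ?_
  refine le_trans ?_ (prod_one_add_le_exp_sum t (u R) (u_nonneg R))
  refine Finset.prod_le_prod (fun j _ => norm_nonneg _) (fun j _ => ?_)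
  have h1 := norm_term_le z hz j
  calc ‖(1 : ℂ) - z ^ 2 / ((j : ℂ) + 1) ^ 2‖ ≤ ‖(1:ℂ)‖ + ‖z ^ 2 / ((j : ℂ) + 1) ^ 2‖ :=
        norm_sub_le _ _
    _ ≤ 1 + u R j := by rw [norm_one]; linarith

lemma tendstoUniformlyOn_F (hR : 0 < R) :
    TendstoUniformlyOn F (fun z => Complex.sin (↑Real.pi * z)) atTop (Metric.ball (0 : ℂ) R) := by
  set T : ℝ := ∑' j, u R j with hT
  set C : ℝ := Real.pi * R * Real.exp T with hC
  have hC0 : 0 < C := by positivity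
  set t : ℕ → ℝ := fun n => ∑' k, u R (k + n) with ht
  have htail : ∀ n, ∀ s : Finset ℕ, (∑ j ∈ s, u R (j + n)) ≤ t n := by
    intro n s
    exact Summable.sum_le_tsum s (fun j _ => u_nonneg R _) ((summable_nat_add_iff n).2 (summable_u R))
  -- key estimate
  have key : ∀ n m : ℕ, n ≤ m → ∀ z ∈ Metric.ball (0 : ℂ) R,
      ‖F m z - F n z‖ ≤ C * (Real.exp (t n) - 1) := by
    intro n m hnm z hzmem
    have hz : ‖z‖ ≤ R := by
      simpa [Complex.dist_eq] using (Metric.mem_ball.mp hzmem).le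
    have hsplit : F m z = F n z * ∏ j ∈ Finset.Ico n m, (1 - z ^ 2 / ((j : ℂ) + 1) ^ 2) := by
      unfold F
      rw [← Finset.prod_range_mul_prod_Ico (fun j : ℕ => (1 - z ^ 2 / ((j : ℂ) + 1) ^ 2)) hnm]
      ring
    rw [hsplit]
    have h1 : F n z * ∏ j ∈ Finset.Ico n m, (1 - z ^ 2 / ((j : ℂ) + 1) ^ 2) - F n z
        = F n z * ((∏ j ∈ Finset.Ico n m, (1 - z ^ 2 / ((j : ℂ) + 1) ^ 2)) - 1) := by ring
    rw [h1, norm_mul]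
    have hFn : ‖F n z‖ ≤ C := by
      unfold F
      rw [norm_mul, norm_mul, Complex.norm_real, Real.norm_of_nonneg Real.pi_pos.le]
      have h2 := norm_prod_le_exp (Finset.range n) z hz
      have h3 : Real.exp (∑ j ∈ Finset.range n, u R j) ≤ Real.exp T := by
        apply Real.exp_le_exp.2
        exact Summable.sum_le_tsum _ (fun j _ => u_nonneg R _) (summable_u R)
      have h6 : ‖∏ j ∈ Finset.range n, (1 - z ^ 2 / ((j : ℂ) + 1) ^ 2)‖ ≤ Real.exp T :=
        h2.trans h3
      have hzn : 0 ≤ ‖z‖ := norm_nonneg z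
      have hfin : Real.pi * ‖z‖ * ‖∏ j ∈ Finset.range n, (1 - z ^ 2 / ((j : ℂ) + 1) ^ 2)‖
          ≤ Real.pi * R * Real.exp T := by
        have hpi : (0:ℝ) ≤ Real.pi := Real.pi_pos.le
        gcongr
      exact hfin
    have hIco : ‖(∏ j ∈ Finset.Ico n m, (1 - z ^ 2 / ((j : ℂ) + 1) ^ 2)) - 1‖
        ≤ Real.exp (t n) - 1 := by
      refine (norm_prod_sub_one_le _ z hz).trans ?_
      have h4 : (∑ j ∈ Finset.Ico n m, u R j) ≤ t n := by
        rw [Finset.sum_Ico_eq_sum_range]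
        have := htail n (Finset.range (m - n))
        refine le_trans (le_of_eq ?_) this
        exact Finset.sum_congr rfl (fun j _ => by rw [add_comm])
      have := Real.exp_le_exp.2 h4
      linarith
    exact mul_le_mul hFn hIco (norm_nonneg _) hC0.le
  -- pointwise limit estimate
  have keylim : ∀ n : ℕ, ∀ z ∈ Metric.ball (0 : ℂ) R,
      ‖Complex.sin (↑Real.pi * z) - F n z‖ ≤ C * (Real.exp (t n) - 1) := by
    intro n z hzmem
    have hlim : Filter.Tendsto (fun m => ‖F m z - F n z‖) atTop
        (nhds ‖Complex.sin (↑Real.pi * z) - F n z‖) :=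
      ((Complex.tendsto_euler_sin_prod z).sub tendsto_const_nhds).norm
    refine le_of_tendsto hlim ?_
    filter_upwards [Filter.eventually_ge_atTop n] with m hm
    exact key n m hm z hzmem
  -- conclude
  rw [Metric.tendstoUniformlyOn_iff]
  intro ε hε
  have htz : Filter.Tendsto t atTop (nhds 0) := by
    simpa [ht] using tendsto_sum_nat_add (u R)
  have hbound : Filter.Tendsto (fun n => C * (Real.exp (t n) - 1)) atTop (nhds 0) := by
    have h5 : Filter.Tendsto (fun n => Real.exp (t n) - 1) atTop (nhds 0) := by
      have := (Real.continuous_exp.tendsto 0).comp htz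
      simpa using this.sub_const 1
    simpa using h5.const_mul C
  filter_upwards [hbound.eventually (gt_mem_nhds hε)] with n hn z hzmem
  have := keylim n z hzmem
  rw [dist_eq_norm]
  exact lt_of_le_of_lt this hn

end CotML2

namespace CotML3
open CotML CotML2

lemma summable_base : Summable (fun j : ℕ => 1 / ((j : ℝ) + 1) ^ 2) := by
  have := (summable_nat_add_iff (f := fun n : ℕ => 1 / (n : ℝ) ^ 2) 1).2
    ((Real.summable_one_div_nat_pow (p := 2)).2 one_lt_two)
  simpa [add_comm] using this

end CotML3

set_option maxHeartbeats 1000000 in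
theorem stmt_5' (w : ℂ) (hw : ∀ k : ℤ, w ≠ (k : ℂ)) :
    Summable (fun k : ℕ => (2 * w / (Real.pi : ℂ)) * (1 / (w ^ 2 - ((k : ℂ) + 1) ^ 2))) ∧
    Complex.cot ((Real.pi : ℂ) * w) =
      1 / ((Real.pi : ℂ) * w) +
        ∑' k : ℕ, (2 * w / (Real.pi : ℂ)) * (1 / (w ^ 2 - ((k : ℂ) + 1) ^ 2)) := by
  classical
  have hpi : ((Real.pi : ℂ)) ≠ 0 := Complex.ofReal_ne_zero.mpr Real.pi_ne_zero
  have hw0 : w ≠ 0 := by simpa using hw 0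
  have hc : ∀ j : ℕ, ((j : ℂ) + 1) ≠ 0 := fun j => by
    have : ((j : ℂ) + 1) = ((j + 1 : ℕ) : ℂ) := by push_cast; ring
    rw [this]
    exact Nat.cast_ne_zero.2 (Nat.succ_ne_zero j)
  have hfac : ∀ j : ℕ, w ^ 2 - ((j : ℂ) + 1) ^ 2 ≠ 0 := by
    intro j
    have h1 : w - ((j : ℂ) + 1) ≠ 0 := by
      rw [sub_ne_zero]
      have := hw ((j : ℤ) + 1)
      push_cast at this
      exact this
    have h2 : w + ((j : ℂ) + 1) ≠ 0 := by
      have h3 := hw (-(j : ℤ) - 1)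
      push_cast at h3
      intro h
      apply h3
      linear_combination h
    have hfact : w ^ 2 - ((j : ℂ) + 1) ^ 2 = (w - ((j : ℂ) + 1)) * (w + ((j : ℂ) + 1)) := by ring
    rw [hfact]
    exact mul_ne_zero h1 h2
  -- summability of the base series
  have hbase : Summable (fun k : ℕ => 1 / (w ^ 2 - ((k : ℂ) + 1) ^ 2)) := by
    apply Summable.of_norm_bounded_eventually_nat (g := fun k => 2 / ((k : ℝ) + 1) ^ 2)
    · simpa [div_eq_mul_inv] using CotML3.summable_base.mul_left 2
    · have htend : Filter.Tendsto (fun k : ℕ => ((k : ℝ) + 1)) atTop atTop :=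
        Filter.tendsto_atTop_add_const_right atTop 1 tendsto_natCast_atTop_atTop
      filter_upwards [htend.eventually_ge_atTop (2 * ‖w‖ ^ 2), htend.eventually_ge_atTop 1]
        with k hk hk1
      have hsq : 2 * ‖w‖ ^ 2 ≤ ((k : ℝ) + 1) ^ 2 := by nlinarith
      have hnormc : ‖((k : ℂ) + 1) ^ 2‖ = ((k : ℝ) + 1) ^ 2 := CotML2.norm_natCast_add_one_pow k
      have hlow : ((k : ℝ) + 1) ^ 2 / 2 ≤ ‖w ^ 2 - ((k : ℂ) + 1) ^ 2‖ := by
        have h5 : ‖((k : ℂ) + 1) ^ 2‖ - ‖w ^ 2‖ ≤ ‖((k : ℂ) + 1) ^ 2 - w ^ 2‖ :=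
          norm_sub_norm_le _ _
        rw [norm_sub_rev] at h5
        rw [hnormc, norm_pow] at h5
        nlinarith
      have hpos : (0 : ℝ) < ((k : ℝ) + 1) ^ 2 / 2 := by positivity
      rw [norm_div, norm_one]
      calc 1 / ‖w ^ 2 - ((k : ℂ) + 1) ^ 2‖ ≤ 1 / (((k : ℝ) + 1) ^ 2 / 2) :=
            one_div_le_one_div_of_le hpos hlow
        _ = 2 / ((k : ℝ) + 1) ^ 2 := by rw [one_div_div]
  set S : ℕ → ℂ := fun j => 2 * w * (1 / (w ^ 2 - ((j : ℂ) + 1) ^ 2)) with hS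
  have hSsum : Summable S := hbase.mul_left (2 * w)
  -- the locally uniform limit and logDeriv
  set R : ℝ := ‖w‖ + 1 with hRdef
  have hR : 0 < R := by positivity
  have hmem : w ∈ Metric.ball (0 : ℂ) R := by
    rw [Metric.mem_ball, dist_zero_right, hRdef]
    linarith
  have hdiff : ∀ n : ℕ, DifferentiableOn ℂ (CotML2.F n) (Metric.ball (0 : ℂ) R) := by
    intro n
    apply Differentiable.differentiableOn
    intro z
    apply DifferentiableAt.mul
    · exact (differentiableAt_id.const_mul _)
    · exact DifferentiableAt.fun_finsetProd fun j _ =>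
        (((differentiableAt_id.pow 2).div_const _).const_sub 1)
  have hg : Complex.sin ((Real.pi : ℂ) * w) ≠ 0 := by
    rw [Complex.sin_ne_zero_iff]
    intro k h
    apply hw k
    have h2 : (Real.pi : ℂ) * w = (Real.pi : ℂ) * (k : ℂ) := by rw [h]; ring
    exact mul_left_cancel₀ hpi h2
  have hLD := Complex.logDeriv_tendsto (f := CotML2.F) (g := fun z => Complex.sin ((Real.pi : ℂ) * z))
    Metric.isOpen_ball hmem
    ((CotML2.tendstoUniformlyOn_F hR).tendstoLocallyUniformlyOn)
    (Filter.Eventually.of_forall hdiff) hg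
  -- compute the limit logDeriv
  have hGD : logDeriv (fun z => Complex.sin ((Real.pi : ℂ) * z)) w
      = (Real.pi : ℂ) * Complex.cot ((Real.pi : ℂ) * w) := by
    have hcomp : logDeriv (Complex.sin ∘ fun z : ℂ => (Real.pi : ℂ) * z) w
        = logDeriv Complex.sin ((Real.pi : ℂ) * w) * deriv (fun z : ℂ => (Real.pi : ℂ) * z) w :=
      logDeriv_comp (Complex.differentiable_sin _) (differentiableAt_fun_id.const_mul _)
    have hd : deriv (fun z : ℂ => (Real.pi : ℂ) * z) w = (Real.pi : ℂ) := by
      simpa using ((hasDerivAt_id w).const_mul ((Real.pi : ℂ))).deriv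
    rw [Complex.logDeriv_sin, hd] at hcomp
    rw [show (fun z => Complex.sin ((Real.pi : ℂ) * z))
        = Complex.sin ∘ (fun z : ℂ => (Real.pi : ℂ) * z) from rfl, hcomp]
    ring
  -- compute logDeriv of the partial products
  have hne : ∀ j : ℕ, (1 : ℂ) - w ^ 2 / ((j : ℂ) + 1) ^ 2 ≠ 0 := by
    intro j h
    apply hfac j
    field_simp [hc j] at h
    first
    | linear_combination h
    | linear_combination -h
  have hdfac : ∀ j : ℕ, DifferentiableAt ℂ (fun z : ℂ => 1 - z ^ 2 / ((j : ℂ) + 1) ^ 2) w :=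
    fun j => ((differentiableAt_pow 2).div_const _).const_sub 1
  have hdmul1 : DifferentiableAt ℂ (fun z : ℂ => (Real.pi : ℂ) * z) w :=
    differentiableAt_fun_id.const_mul _
  have hFLD : ∀ n : ℕ, logDeriv (CotML2.F n) w = 1 / w + ∑ j ∈ Finset.range n, S j := by
    intro n
    have hdprod : DifferentiableAt ℂ
        (fun z : ℂ => ∏ j ∈ Finset.range n, (1 - z ^ 2 / ((j : ℂ) + 1) ^ 2)) w :=
      DifferentiableAt.fun_finsetProd fun j _ => hdfac j
    unfold CotML2.F
    rw [logDeriv_mul (f := fun z : ℂ => (Real.pi : ℂ) * z)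
      (g := fun z : ℂ => ∏ j ∈ Finset.range n, (1 - z ^ 2 / ((j : ℂ) + 1) ^ 2))
      w (mul_ne_zero hpi hw0)
      (Finset.prod_ne_zero_iff.2 fun j _ => hne j)
      hdmul1 hdprod]
    rw [logDeriv_const_mul (f := fun z : ℂ => z) w _ hpi, logDeriv_id']
    congr 1
    rw [logDeriv_prod (fun j _ => hne j) (fun j _ => hdfac j)]
    refine Finset.sum_congr rfl fun j _ => ?_
    have hd : HasDerivAt (fun z : ℂ => 1 - z ^ 2 / ((j : ℂ) + 1) ^ 2)
        (-(2 * w / ((j : ℂ) + 1) ^ 2)) w := by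
      have h := ((hasDerivAt_pow 2 w).div_const (((j : ℂ) + 1) ^ 2)).const_sub 1
      simpa using h
    rw [logDeriv_apply, hd.deriv]
    simp only [hS]
    have hc2 : ((j : ℂ) + 1) ^ 2 ≠ 0 := pow_ne_zero _ (hc j)
    rw [mul_one_div, div_eq_div_iff (hne j) (hfac j)]
    field_simp [hc j]
    ring
  -- identify the tsum
  have hlim2 : Filter.Tendsto (fun n => 1 / w + ∑ j ∈ Finset.range n, S j) atTop
      (nhds ((Real.pi : ℂ) * Complex.cot ((Real.pi : ℂ) * w))) := by
    rw [← hGD]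
    exact hLD.congr fun n => hFLD n
  have hlim3 : Filter.Tendsto (fun n => 1 / w + ∑ j ∈ Finset.range n, S j) atTop
      (nhds (1 / w + ∑' j, S j)) :=
    (hSsum.hasSum.tendsto_sum_nat).const_add _
  have hkey : (Real.pi : ℂ) * Complex.cot ((Real.pi : ℂ) * w) = 1 / w + ∑' j, S j :=
    tendsto_nhds_unique hlim2 hlim3
  -- conclude
  have hmulS := hSsum.hasSum.mul_left (1 / (Real.pi : ℂ))
  have heq : (fun i => 1 / (Real.pi : ℂ) * S i)
      = fun k : ℕ => (2 * w / (Real.pi : ℂ)) * (1 / (w ^ 2 - ((k : ℂ) + 1) ^ 2)) := by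
    funext k
    rw [hS]
    ring
  rw [heq] at hmulS
  refine ⟨hmulS.summable, ?_⟩
  rw [hmulS.tsum_eq]
  have hsumval : (∑' j, S j) = (Real.pi : ℂ) * Complex.cot ((Real.pi : ℂ) * w) - 1 / w := by
    linear_combination -hkey
  rw [hsumval, mul_sub]
  have hfin1 : 1 / (Real.pi : ℂ) * ((Real.pi : ℂ) * Complex.cot ((Real.pi : ℂ) * w))
      = Complex.cot ((Real.pi : ℂ) * w) := by
    field_simp
  have hfin2 : 1 / (Real.pi : ℂ) * (1 / w) = 1 / ((Real.pi : ℂ) * w) := by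
    rw [div_mul_div_comm, one_mul]
  rw [hfin1, hfin2]
  ring


/-- For every complex `w` that is not an integer,
`cot(πw) = 1/(πw) + ∑_{k=1}^∞ (2w/π)·1/(w² - k²)`, with the series converging. -/
theorem stmt_5 (w : ℂ) (hw : ∀ k : ℤ, w ≠ (k : ℂ)) :
    Summable (fun k : ℕ => (2 * w / (Real.pi : ℂ)) * (1 / (w ^ 2 - ((k : ℂ) + 1) ^ 2))) ∧
    Complex.cot ((Real.pi : ℂ) * w) =
      1 / ((Real.pi : ℂ) * w) +
        ∑' k : ℕ, (2 * w / (Real.pi : ℂ)) * (1 / (w ^ 2 - ((k : ℂ) + 1) ^ 2)) := by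
  exact stmt_5' w hw
end
end

section
/- For real b > 1, ∫_0^1 log(t^{-b} - 1) dt = b - ∑_{k=1}^∞ 1/(k(kb+1)). -/
open MeasureTheory Real Set Filter Topology intervalIntegral

private lemma neg_log_le_aux {u : ℝ} (hu : 0 < u) : -Real.log u ≤ 2 * u ^ (-(1:ℝ)/2) := by
  have h2 : Real.log (u ^ (-(1:ℝ)/2)) = (-(1:ℝ)/2) * Real.log u := Real.log_rpow hu _
  have h3 : Real.log (u ^ (-(1:ℝ)/2)) ≤ u ^ (-(1:ℝ)/2) :=
    (Real.log_le_sub_one_of_pos (Real.rpow_pos_of_pos hu _)).trans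
      (by linarith [Real.rpow_pos_of_pos hu (-(1:ℝ)/2)])
  nlinarith

private lemma log_intAux : IntervalIntegrable Real.log volume 0 1 := by
  have hr : IntervalIntegrable (fun x : ℝ => 2 * x ^ (-(1:ℝ)/2)) volume 0 1 :=
    (intervalIntegrable_rpow' (by norm_num)).const_mul 2
  refine hr.mono_fun' Real.measurable_log.aestronglyMeasurable ?_
  rw [Filter.EventuallyLE, ae_restrict_iff' measurableSet_uIoc]
  filter_upwards with t ht
  rw [Set.uIoc_of_le (by norm_num : (0:ℝ) ≤ 1)] at ht
  have hlog : Real.log t ≤ 0 := Real.log_nonpos ht.1.le ht.2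
  have := neg_log_le_aux ht.1
  simp only [Real.norm_eq_abs, abs_of_nonpos hlog]
  linarith

private lemma log_valAux : ∫ x in (0:ℝ)..1, Real.log x = -1 := by
  have := integral_eq_sub_of_hasDerivAt_of_tendsto (f := fun x : ℝ => x * Real.log x - x)
    (f' := Real.log) (a := 0) (b := 1) (fa := 0) (fb := -1) one_pos ?_ log_intAux ?_ ?_
  · rw [this]; norm_num
  · intro x hx
    have h1 : HasDerivAt (fun x : ℝ => x * Real.log x) (Real.log x + 1) x := by
      have := (hasDerivAt_id' (x := x)).mul (Real.hasDerivAt_log hx.1.ne')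
      simpa [mul_inv_cancel₀ hx.1.ne', Pi.mul_def] using this
    simpa [Pi.sub_def] using h1.sub (hasDerivAt_id' (x := x))
  · have h := tendsto_log_mul_rpow_nhdsGT_zero (r := 1) one_pos
    have h' : Tendsto (fun x : ℝ => x * Real.log x - x) (𝓝[>] 0) (𝓝 0) := by
      have : Tendsto (fun x : ℝ => x * Real.log x) (𝓝[>] 0) (𝓝 0) := by
        refine h.congr' ?_
        filter_upwards [self_mem_nhdsWithin] with x hx
        rw [Real.rpow_one]; ring
      simpa using this.sub (tendsto_nhdsWithin_of_tendsto_nhds tendsto_id)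
    simpa using h'
  · have : ContinuousAt (fun x : ℝ => x * Real.log x - x) 1 := by
      fun_prop (disch := norm_num)
    simpa using (this.continuousWithinAt (s := Iio 1)).tendsto

/-- For real `b > 1`, `∫_0^1 log(t^(-b) - 1) dt = b - ∑_{k=1}^∞ 1/(k(kb+1))`. -/
theorem stmt_6 (b : ℝ) (hb : 1 < b) :
    MeasureTheory.IntegrableOn (fun t : ℝ => Real.log (t ^ (-b) - 1)) (Set.Ioo 0 1) ∧
    ∫ t in Set.Ioo (0 : ℝ) 1, Real.log (t ^ (-b) - 1) =
      b - ∑' k : ℕ, 1 / (((k : ℝ) + 1) * (((k : ℝ) + 1) * b + 1)) := by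
  have hb0 : (0:ℝ) < b := by linarith
  -- pointwise decomposition
  have hdecomp : ∀ t ∈ Ioo (0:ℝ) 1,
      Real.log (t ^ (-b) - 1) = -(b * Real.log t) + Real.log (1 - t ^ b) := by
    intro t ht
    have ht0 := ht.1
    have htb : t ^ b < 1 := Real.rpow_lt_one ht0.le ht.2 hb0
    have htb0 : (0:ℝ) < t ^ b := Real.rpow_pos_of_pos ht0 b
    have hsplit : t ^ (-b) - 1 = t ^ (-b) * (1 - t ^ b) := by
      rw [mul_sub, mul_one, ← Real.rpow_add ht0, neg_add_cancel, Real.rpow_zero]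
    rw [hsplit, Real.log_mul (by positivity) (by linarith), Real.log_rpow ht0]
    ring
  -- facts about 1 - t^b on Ioo
  have hfacts : ∀ t ∈ Ioo (0:ℝ) 1, 0 < 1 - t ^ b ∧ t ^ b ≤ t := by
    intro t ht
    have htb : t ^ b < 1 := Real.rpow_lt_one ht.1.le ht.2 hb0
    refine ⟨by linarith, ?_⟩
    calc t ^ b ≤ t ^ (1:ℝ) := Real.rpow_le_rpow_of_exponent_ge ht.1 ht.2.le hb.le
    _ = t := Real.rpow_one t
  -- integrability of log on Ioo 0 1
  have hlogI : IntegrableOn Real.log (Ioo 0 1) volume := by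
    have := (intervalIntegrable_iff_integrableOn_Ioc_of_le (by norm_num : (0:ℝ) ≤ 1)).mp log_intAux
    exact this.mono_set Ioo_subset_Ioc_self
  -- integrability of log (1 - t^b)
  have h2meas : AEStronglyMeasurable (fun t : ℝ => Real.log (1 - t ^ b))
      (volume.restrict (Ioo 0 1)) := by
    apply Measurable.aestronglyMeasurable
    measurability
  have h2I : IntegrableOn (fun t : ℝ => Real.log (1 - t ^ b)) (Ioo 0 1) volume := by
    have hg : IntervalIntegrable (fun x : ℝ => 2 * (1 - x) ^ (-(1:ℝ)/2)) volume 0 1 := by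
      have h0 : IntervalIntegrable (fun x : ℝ => 2 * x ^ (-(1:ℝ)/2)) volume 0 1 :=
        (intervalIntegrable_rpow' (by norm_num)).const_mul 2
      have := h0.comp_sub_left 1
      norm_num at this
      simpa [neg_div] using this.symm
    have hgI : IntegrableOn (fun x : ℝ => 2 * (1 - x) ^ (-(1:ℝ)/2)) (Ioo 0 1) volume :=
      ((intervalIntegrable_iff_integrableOn_Ioc_of_le (by norm_num : (0:ℝ) ≤ 1)).mp hg).mono_set
        Ioo_subset_Ioc_self
    refine hgI.mono' h2meas ?_
    rw [ae_restrict_iff' measurableSet_Ioo]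
    filter_upwards with t ht
    obtain ⟨hpos, hle⟩ := hfacts t ht
    have h1t : 0 < 1 - t := by linarith [ht.2]
    have hlognp : Real.log (1 - t ^ b) ≤ 0 := Real.log_nonpos hpos.le (by nlinarith [Real.rpow_pos_of_pos ht.1 b])
    have hmono : -Real.log (1 - t ^ b) ≤ -Real.log (1 - t) := by
      have : Real.log (1 - t) ≤ Real.log (1 - t ^ b) := Real.log_le_log h1t (by linarith)
      linarith
    have := neg_log_le_aux h1t
    simp only [Real.norm_eq_abs, abs_of_nonpos hlognp]
    linarith
  -- the series
  set F : ℕ → ℝ → ℝ := fun k t => t ^ (b * ((k:ℝ) + 1)) / ((k:ℝ) + 1) with hF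
  have hc : ∀ k : ℕ, (-1:ℝ) < b * ((k:ℝ) + 1) := by
    intro k
    have : (0:ℝ) < b * ((k:ℝ) + 1) := by positivity
    linarith
  have hck : ∀ k : ℕ, (0:ℝ) < (k:ℝ) + 1 := fun k => by positivity
  have hFint : ∀ k : ℕ, IntegrableOn (F k) (Ioo 0 1) volume := by
    intro k
    have : IntervalIntegrable (F k) volume 0 1 :=
      (intervalIntegrable_rpow' (hc k)).div_const _
    exact ((intervalIntegrable_iff_integrableOn_Ioc_of_le (by norm_num : (0:ℝ) ≤ 1)).mp
      this).mono_set Ioo_subset_Ioc_self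
  have hFval : ∀ k : ℕ, ∫ t in Ioo (0:ℝ) 1, F k t
      = 1 / (((k:ℝ) + 1) * (b * ((k:ℝ) + 1) + 1)) := by
    intro k
    have hbk : (0:ℝ) < b * ((k:ℝ) + 1) + 1 := by nlinarith [hck k]
    rw [← integral_Ioc_eq_integral_Ioo, ← intervalIntegral.integral_of_le (by norm_num : (0:ℝ) ≤ 1)]
    simp only [hF]
    rw [intervalIntegral.integral_div, integral_rpow (Or.inl (hc k))]
    rw [Real.one_rpow, Real.zero_rpow (by linarith)]
    field_simp
    ring
  have hFnorm : ∀ k : ℕ, ∫ t in Ioo (0:ℝ) 1, ‖F k t‖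
      = 1 / (((k:ℝ) + 1) * (b * ((k:ℝ) + 1) + 1)) := by
    intro k
    rw [← hFval k]
    apply MeasureTheory.integral_congr_ae
    filter_upwards [ae_restrict_mem measurableSet_Ioo] with t ht
    have : 0 ≤ F k t := by
      simp only [hF]
      exact div_nonneg (Real.rpow_nonneg ht.1.le _) (hck k).le
    rw [Real.norm_of_nonneg this]
  have hsummable : Summable (fun k : ℕ => ∫ t in Ioo (0:ℝ) 1, ‖F k t‖) := by
    have hS : Summable (fun k : ℕ => 1 / (((k:ℝ) + 1) ^ 2)) := by
      have := (summable_nat_add_iff 1).mpr (Real.summable_one_div_nat_pow.mpr (le_refl 2))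
      refine this.congr fun k => ?_
      push_cast
      ring_nf
    refine Summable.of_nonneg_of_le (fun k => ?_) (fun k => ?_) hS
    · rw [hFnorm k]; positivity
    · rw [hFnorm k]
      have h1 : ((k:ℝ) + 1) ≤ b * ((k:ℝ) + 1) + 1 := by nlinarith [hck k]
      rw [div_le_div_iff₀ (by nlinarith [hck k]) (by positivity)]
      nlinarith [hck k]
  have hkey := MeasureTheory.hasSum_integral_of_summable_integral_norm hFint hsummable
  have htsum : ∫ t in Ioo (0:ℝ) 1, ∑' k, F k t
      = ∫ t in Ioo (0:ℝ) 1, -Real.log (1 - t ^ b) := by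
    apply setIntegral_congr_fun measurableSet_Ioo
    intro t ht
    have htb : |t ^ b| < 1 := by
      rw [abs_of_nonneg (Real.rpow_nonneg ht.1.le b)]
      exact Real.rpow_lt_one ht.1.le ht.2 hb0
    have h := Real.hasSum_pow_div_log_of_abs_lt_one htb
    have heq : ∀ k : ℕ, F k t = (t ^ b) ^ (k + 1) / ((k:ℕ) + 1 : ℝ) := by
      intro k
      simp only [hF]
      rw [Real.rpow_mul ht.1.le, ← Real.rpow_natCast (t ^ b) (k + 1)]
      push_cast
      ring_nf
    calc ∑' k, F k t = ∑' k : ℕ, (t ^ b) ^ (k + 1) / ((k:ℕ) + 1 : ℝ) :=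
        tsum_congr heq
      _ = -Real.log (1 - t ^ b) := h.tsum_eq
  have hsum2 : ∑' k : ℕ, 1 / (((k:ℝ) + 1) * (b * ((k:ℝ) + 1) + 1))
      = ∫ t in Ioo (0:ℝ) 1, -Real.log (1 - t ^ b) := by
    rw [← htsum, ← hkey.tsum_eq]
    exact tsum_congr fun k => (hFval k).symm
  -- values of the basic integrals
  have hlogval : ∫ t in Ioo (0:ℝ) 1, Real.log t = -1 := by
    rw [← integral_Ioc_eq_integral_Ioo, ← intervalIntegral.integral_of_le
      (by norm_num : (0:ℝ) ≤ 1)]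
    exact log_valAux
  have h2val : ∫ t in Ioo (0:ℝ) 1, Real.log (1 - t ^ b)
      = -∑' k : ℕ, 1 / (((k:ℝ) + 1) * (b * ((k:ℝ) + 1) + 1)) := by
    rw [hsum2, MeasureTheory.integral_neg, neg_neg]
  -- assembling
  have hgI : IntegrableOn (fun t : ℝ => -(b * Real.log t) + Real.log (1 - t ^ b))
      (Ioo 0 1) volume := by
    exact ((hlogI.const_mul b).neg).add h2I
  constructor
  · exact hgI.congr_fun (fun t ht => (hdecomp t ht).symm) measurableSet_Ioo
  · rw [setIntegral_congr_fun measurableSet_Ioo (fun t ht => hdecomp t ht)]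
    have hneg : IntegrableOn (fun t : ℝ => -(b * Real.log t)) (Ioo 0 1) volume :=
      (hlogI.const_mul b).neg
    rw [MeasureTheory.integral_add hneg h2I, h2val]
    have : ∫ t in Ioo (0:ℝ) 1, -(b * Real.log t) = b := by
      rw [MeasureTheory.integral_neg, MeasureTheory.integral_const_mul, hlogval]
      ring
    have hw : ∑' k : ℕ, 1 / (((k:ℝ) + 1) * (((k:ℝ) + 1) * b + 1))
        = ∑' k : ℕ, 1 / (((k:ℝ) + 1) * (b * ((k:ℝ) + 1) + 1)) :=
      tsum_congr fun k => by rw [mul_comm ((k:ℝ) + 1) b]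
    rw [hw, this]
    ring
end

section
/- For real b > 1, ∫_1^∞ log(1 - t^{-b}) dt = - ∑_{k=1}^∞ 1/(k(kb-1)). -/
open MeasureTheory Real Set
open scoped ENNReal NNReal

/-- For real `b > 1`, `∫_1^∞ log(1 - t^(-b)) dt = - ∑_{k=1}^∞ 1/(k(kb-1))`. -/
theorem stmt_7 (b : ℝ) (hb : 1 < b) :
    MeasureTheory.IntegrableOn (fun t : ℝ => Real.log (1 - t ^ (-b))) (Set.Ioi 1) ∧
    ∫ t in Set.Ioi (1 : ℝ), Real.log (1 - t ^ (-b)) =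
      -∑' k : ℕ, 1 / (((k : ℝ) + 1) * (((k : ℝ) + 1) * b - 1)) := by
  have hb0 : (0 : ℝ) < b := by linarith
  set f : ℕ → ℝ → ℝ := fun n t => t ^ (-(((n : ℝ) + 1) * b)) / ((n : ℝ) + 1) with hf
  have hn1 : ∀ n : ℕ, (0 : ℝ) < (n : ℝ) + 1 := fun n => by positivity
  have hden : ∀ n : ℕ, (0 : ℝ) < ((n : ℝ) + 1) * b - 1 := by
    intro n
    nlinarith [Nat.cast_nonneg (α := ℝ) n]
  have hexp : ∀ n : ℕ, -(((n : ℝ) + 1) * b) < -1 := fun n => by nlinarith [hden n]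
  -- pointwise series expansion
  have hsum : ∀ t ∈ Ioi (1 : ℝ), HasSum (fun n => f n t) (-Real.log (1 - t ^ (-b))) := by
    intro t ht
    have ht1 : (1 : ℝ) < t := ht
    have ht0 : (0 : ℝ) < t := by linarith
    have hx0 : 0 < t ^ (-b) := Real.rpow_pos_of_pos ht0 _
    have hx1 : t ^ (-b) < 1 := Real.rpow_lt_one_of_one_lt_of_neg ht1 (by linarith)
    have h := Real.hasSum_pow_div_log_of_abs_lt_one
      (x := t ^ (-b)) (by rw [abs_of_pos hx0]; exact hx1)
    have heq : ∀ n : ℕ, f n t = (t ^ (-b)) ^ (n + 1) / ((n : ℝ) + 1) := by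
      intro n
      have : t ^ (-(((n : ℝ) + 1) * b)) = (t ^ (-b)) ^ (n + 1) := by
        rw [← Real.rpow_natCast (t ^ (-b)) (n + 1), ← Real.rpow_mul ht0.le]
        congr 1
        push_cast
        ring
      simp only [hf, this]
    simpa [funext heq] using h
  -- nonnegativity on Ioi 1
  have hfpos : ∀ n : ℕ, ∀ t ∈ Ioi (1 : ℝ), 0 ≤ f n t := by
    intro n t ht
    have ht0 : (0 : ℝ) < t := lt_trans one_pos ht
    have := Real.rpow_pos_of_pos ht0 (-(((n : ℝ) + 1) * b))
    positivity
  -- integrability and value of each term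
  have hInt : ∀ n : ℕ, IntegrableOn (f n) (Ioi 1) := by
    intro n
    exact (integrableOn_Ioi_rpow_of_lt (hexp n) one_pos).div_const _
  have hval : ∀ n : ℕ, ∫ t in Ioi (1 : ℝ), f n t
      = 1 / (((n : ℝ) + 1) * (((n : ℝ) + 1) * b - 1)) := by
    intro n
    simp only [hf]
    rw [integral_div, integral_Ioi_rpow_of_lt (hexp n) one_pos, Real.one_rpow]
    have h1 : (-(((n : ℝ) + 1) * b) + 1) * ((n : ℝ) + 1) ≠ 0 := by
      have := hden n
      have := hn1 n
      intro hc
      rcases mul_eq_zero.mp hc with h | h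
      · nlinarith
      · nlinarith
    have h3 : ((n : ℝ) + 1) * (((n : ℝ) + 1) * b - 1) ≠ 0 :=
      ne_of_gt (mul_pos (hn1 n) (hden n))
    rw [div_div, div_eq_div_iff h1 h3]
    ring
  have hnormval : ∀ n : ℕ, ∫ t in Ioi (1 : ℝ), ‖f n t‖
      = 1 / (((n : ℝ) + 1) * (((n : ℝ) + 1) * b - 1)) := by
    intro n
    rw [← hval n]
    refine setIntegral_congr_fun measurableSet_Ioi fun t ht => ?_
    exact Real.norm_of_nonneg (hfpos n t ht)
  -- summability of the series of values
  have hS : Summable (fun n : ℕ => 1 / (((n : ℝ) + 1) * (((n : ℝ) + 1) * b - 1))) := by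
    have hsq : Summable (fun n : ℕ => (1 / (b - 1)) * (1 / ((n : ℝ) + 1) ^ 2)) := by
      apply Summable.mul_left
      have h2 : Summable (fun n : ℕ => 1 / ((n : ℝ)) ^ 2) :=
        Real.summable_one_div_nat_pow.mpr one_lt_two
      have := (summable_nat_add_iff 1).mpr h2
      refine this.congr fun n => ?_
      push_cast
      ring
    refine Summable.of_nonneg_of_le
      (fun n => (one_div_pos.mpr (mul_pos (hn1 n) (hden n))).le) (fun n => ?_) hsq
    have hkey : ((n : ℝ) + 1) ^ 2 * (b - 1) ≤ ((n : ℝ) + 1) * (((n : ℝ) + 1) * b - 1) := by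
      nlinarith [Nat.cast_nonneg (α := ℝ) n]
    calc 1 / (((n : ℝ) + 1) * (((n : ℝ) + 1) * b - 1))
        ≤ 1 / (((n : ℝ) + 1) ^ 2 * (b - 1)) := by
          apply one_div_le_one_div_of_le _ hkey
          have : (0 : ℝ) < b - 1 := by linarith
          positivity
      _ = (1 / (b - 1)) * (1 / ((n : ℝ) + 1) ^ 2) := by
          rw [one_div, one_div, one_div, mul_inv, mul_comm]
  have hSnorm : Summable (fun n : ℕ => ∫ t in Ioi (1 : ℝ), ‖f n t‖) :=
    hS.congr fun n => (hnormval n).symm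
  -- the log function equals -tsum on Ioi 1
  have hlog_eq : ∀ t ∈ Ioi (1 : ℝ), Real.log (1 - t ^ (-b)) = -(∑' n, f n t) := by
    intro t ht
    rw [(hsum t ht).tsum_eq]
    ring
  -- measurability
  have hmeas : Measurable (fun t : ℝ => Real.log (1 - t ^ (-b))) :=
    Real.measurable_log.comp (by fun_prop)
  have hfmeas : ∀ n : ℕ, Measurable (f n) := by
    intro n
    simp only [hf]
    fun_prop
  -- integrability
  have hint : IntegrableOn (fun t : ℝ => Real.log (1 - t ^ (-b))) (Ioi 1) := by
    refine ⟨hmeas.aestronglyMeasurable, ?_⟩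
    have hbound : ∀ᵐ t ∂(volume.restrict (Ioi (1 : ℝ))),
        (‖Real.log (1 - t ^ (-b))‖₊ : ℝ≥0∞) ≤ ∑' n, ENNReal.ofReal (f n t) := by
      filter_upwards [ae_restrict_mem measurableSet_Ioi] with t ht
      have h1 : Real.log (1 - t ^ (-b)) = -(∑' n, f n t) := hlog_eq t ht
      have h2 : 0 ≤ ∑' n, f n t := tsum_nonneg (fun n => hfpos n t ht)
      have h3 : (‖Real.log (1 - t ^ (-b))‖₊ : ℝ≥0∞)
          = ENNReal.ofReal (∑' n, f n t) := by
        rw [← enorm_eq_nnnorm, ← ofReal_norm, h1, norm_neg, Real.norm_of_nonneg h2]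
      rw [h3, ENNReal.ofReal_tsum_of_nonneg (fun n => hfpos n t ht)
        (hsum t ht).summable]
    refine lt_of_le_of_lt (lintegral_mono_ae hbound) ?_
    rw [lintegral_tsum
      (fun n => ((hfmeas n).ennreal_ofReal).aemeasurable)]
    have hval' : ∀ n : ℕ, ∫⁻ t in Ioi (1 : ℝ), ENNReal.ofReal (f n t)
        = ENNReal.ofReal (1 / (((n : ℝ) + 1) * (((n : ℝ) + 1) * b - 1))) := by
      intro n
      rw [← ofReal_integral_eq_lintegral_ofReal (hInt n)
        ((ae_restrict_mem measurableSet_Ioi).mono (fun t ht => hfpos n t ht)), hval n]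
    simp only [hval']
    rw [← ENNReal.ofReal_tsum_of_nonneg
      (fun n => (one_div_pos.mpr (mul_pos (hn1 n) (hden n))).le) hS]
    exact ENNReal.ofReal_lt_top
  refine ⟨hint, ?_⟩
  -- compute the integral
  calc ∫ t in Set.Ioi (1 : ℝ), Real.log (1 - t ^ (-b))
      = ∫ t in Ioi (1 : ℝ), -(∑' n, f n t) :=
        setIntegral_congr_fun measurableSet_Ioi hlog_eq
    _ = -∫ t in Ioi (1 : ℝ), ∑' n, f n t := integral_neg _
    _ = -∑' n, ∫ t in Ioi (1 : ℝ), f n t := by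
        rw [← integral_tsum_of_summable_integral_norm hInt hSnorm]
    _ = -∑' k : ℕ, 1 / (((k : ℝ) + 1) * (((k : ℝ) + 1) * b - 1)) := by
        rw [funext hval]
end

section
/- For real b > 1, ∫_0^1 log(t^{-b} - 1) dt + ∫_1^∞ log(1 - t^{-b}) dt = π·cot(π/b). -/
open Real Filter MeasureTheory Set intervalIntegral Topology


lemma summable_sq : Summable (fun n : ℕ => 1 / ((n:ℝ)+1)^2) := by
  have h : Summable (fun n : ℕ => 1 / (n:ℝ)^2) :=
    Real.summable_one_div_nat_pow.mpr (by norm_num)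
  have h2 := (summable_nat_add_iff 1).mpr h
  exact h2.congr fun n => by push_cast; ring

lemma summable_of_le_sq {g : ℕ → ℝ} (C : ℝ)
    (h : ∀ n, 0 ≤ g n ∧ g n ≤ C / ((n:ℝ)+1)^2) : Summable g := by
  refine Summable.of_nonneg_of_le (fun n => (h n).1) (fun n => (h n).2) ?_
  simpa [div_eq_mul_inv, mul_comm] using summable_sq.mul_left C

lemma fac_pos {x : ℝ} (hx : 0 ≤ x) (hx1 : x < 1) (n : ℕ) :
    0 < 1 - x^2/((n:ℝ)+1)^2 := by
  have hn : (0:ℝ) < ((n:ℝ)+1)^2 := by positivity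
  have h1 : x^2 < ((n:ℝ)+1)^2 := by nlinarith [Nat.cast_nonneg (α := ℝ) n]
  have : x^2/((n:ℝ)+1)^2 < 1 := (div_lt_one hn).2 h1
  linarith

lemma summable_log_fac {x : ℝ} (hx : 0 ≤ x) (hx1 : x < 1) :
    Summable (fun n : ℕ => Real.log (1 - x^2/((n:ℝ)+1)^2)) := by
  rw [← summable_neg_iff]
  refine summable_of_le_sq (x^2/(1-x^2)) (fun n => ⟨?_, ?_⟩)
  · have h := fac_pos hx hx1 n
    have h2 : 1 - x^2/((n:ℝ)+1)^2 ≤ 1 := by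
      have : 0 ≤ x^2/((n:ℝ)+1)^2 := by positivity
      linarith
    have := Real.log_nonpos h.le h2
    linarith
  · have h := fac_pos hx hx1 n
    have hn : (0:ℝ) < ((n:ℝ)+1)^2 := by positivity
    have hinv : -Real.log (1 - x^2/((n:ℝ)+1)^2) = Real.log (1 - x^2/((n:ℝ)+1)^2)⁻¹ :=
      (Real.log_inv _).symm
    have hle : Real.log (1 - x^2/((n:ℝ)+1)^2)⁻¹ ≤ (1 - x^2/((n:ℝ)+1)^2)⁻¹ - 1 :=
      Real.log_le_sub_one_of_pos (by positivity)
    have heq : (1 - x^2/((n:ℝ)+1)^2)⁻¹ - 1 = (x^2/((n:ℝ)+1)^2) / (1 - x^2/((n:ℝ)+1)^2) := by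
      generalize hu : x^2/((n:ℝ)+1)^2 = u at h ⊢
      field_simp
      ring
    have hx2 : x^2 < 1 := by nlinarith
    have hd : x^2/((n:ℝ)+1)^2 ≤ x^2 := by
      rw [div_le_iff₀ hn]
      nlinarith [mul_nonneg (sq_nonneg x) (by positivity : (0:ℝ) ≤ (n:ℝ)^2+2*n)]
    have h1x : (0:ℝ) < 1 - x^2 := by linarith
    have hden : 1 - x^2 ≤ 1 - x^2/((n:ℝ)+1)^2 := by linarith
    have : (x^2/((n:ℝ)+1)^2) / (1 - x^2/((n:ℝ)+1)^2) ≤ (x^2/((n:ℝ)+1)^2) / (1-x^2) :=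
      div_le_div_of_nonneg_left (by positivity) h1x hden
    have hfin : (x^2/((n:ℝ)+1)^2) / (1-x^2) = (x^2/(1-x^2)) / ((n:ℝ)+1)^2 := by ring
    rw [hinv]
    calc Real.log (1 - x^2/((n:ℝ)+1)^2)⁻¹ ≤ _ := hle
      _ = _ := heq
      _ ≤ (x^2/((n:ℝ)+1)^2) / (1-x^2) := this
      _ = _ := hfin

lemma log_sin_sum {x : ℝ} (hx : 0 < x) (hx1 : x < 1) :
    ∑' n : ℕ, Real.log (1 - x^2/((n:ℝ)+1)^2)
      = Real.log (Real.sin (π*x)) - Real.log (π*x) := by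
  have hπx : 0 < π * x := mul_pos pi_pos hx
  have hπx1 : π * x < π := by nlinarith [pi_pos]
  have hsin : 0 < Real.sin (π * x) := sin_pos_of_pos_of_lt_pi hπx hπx1
  have hP : Tendsto (fun n : ℕ => ∏ j ∈ Finset.range n, (1 - x^2/((j:ℝ)+1)^2)) atTop
      (𝓝 (Real.sin (π*x) / (π*x))) := by
    have h := (Real.tendsto_euler_sin_prod x).div_const (π*x)
    refine h.congr fun n => ?_
    rw [mul_comm (π*x), mul_div_assoc, div_self hπx.ne', mul_one]
  have hlogP : Tendsto (fun n : ℕ => ∑ j ∈ Finset.range n, Real.log (1 - x^2/((j:ℝ)+1)^2)) atTop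
      (𝓝 (Real.log (Real.sin (π*x)/(π*x)))) := by
    have hc : ContinuousAt Real.log (Real.sin (π*x)/(π*x)) :=
      Real.continuousAt_log (by positivity)
    have h2 := (hc.tendsto.comp hP)
    refine h2.congr fun n => ?_
    simp only [Function.comp_apply]
    rw [Real.log_prod]
    intro j _; exact (fac_pos hx.le hx1 j).ne'
  have hsum := (summable_log_fac hx.le hx1).hasSum.tendsto_sum_nat
  have := tendsto_nhds_unique hsum hlogP
  rw [this, Real.log_div hsin.ne' hπx.ne']

lemma cot_series {x : ℝ} (hx : 0 < x) (hx1 : x < 1) :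
    ∑' n : ℕ, 2*x/(x^2 - ((n:ℝ)+1)^2) = π * Real.cot (π*x) - 1/x := by
  set c : ℝ := (1+x)/2 with hc
  have hxc : x < c := by rw [hc]; linarith
  have hc0 : 0 < c := by rw [hc]; linarith
  have hc1 : c < 1 := by rw [hc]; linarith
  have hc2 : c^2 < 1 := by nlinarith
  have hmem : x ∈ Ioo (0:ℝ) c := ⟨hx, hxc⟩
  -- derivative of each term
  have hg : ∀ (n : ℕ) (y : ℝ), y ∈ Ioo (0:ℝ) c →
      HasDerivAt (fun y => Real.log (1 - y^2/((n:ℝ)+1)^2))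
        (2*y/(y^2 - ((n:ℝ)+1)^2)) y := by
    intro n y hy
    have hy1 : y < 1 := hy.2.trans hc1
    have hfp := fac_pos (le_of_lt hy.1) hy1 n
    have hn : (0:ℝ) < ((n:ℝ)+1)^2 := by positivity
    have hinner : HasDerivAt (fun y : ℝ => 1 - y^2/((n:ℝ)+1)^2) (-(2*y/((n:ℝ)+1)^2)) y := by
      have h1 : HasDerivAt (fun y : ℝ => y^2) (2*y) y := by
        simpa using (hasDerivAt_pow 2 y)
      have h2 := (h1.div_const (((n:ℝ)+1)^2)).const_sub 1
      convert h2 using 1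
    have := hinner.log hfp.ne'
    have hyN : y^2 < ((n:ℝ)+1)^2 := by
      have := (div_lt_one hn).mp (by linarith : y^2/((n:ℝ)+1)^2 < 1)
      linarith
    have halg : ∀ N : ℝ, 0 < N → y^2 < N → -(2*y/N)/(1 - y^2/N) = 2*y/(y^2 - N) := by
      intro N hN hyN
      have h1 : y^2 - N ≠ 0 := ne_of_lt (by linarith)
      have h2 : (1 - y^2/N) ≠ 0 := by
        have : 0 < 1 - y^2/N := by
          have : y^2/N < 1 := (div_lt_one hN).2 hyN
          linarith
        exact this.ne'
      rw [div_eq_div_iff h2 h1]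
      field_simp
      ring
    rw [← halg (((n:ℝ)+1)^2) hn hyN]
    exact this
  -- bound
  have hbound : ∀ (n : ℕ) (y : ℝ), y ∈ Ioo (0:ℝ) c →
      ‖2*y/(y^2 - ((n:ℝ)+1)^2)‖ ≤ (2*c/(1-c^2)) / ((n:ℝ)+1)^2 := by
    intro n y hy
    have hn1 : (1:ℝ) ≤ ((n:ℝ)+1)^2 := by nlinarith [Nat.cast_nonneg (α := ℝ) n]
    have hyc : y < c := hy.2
    have hy0 : 0 < y := hy.1
    have hden : 0 < ((n:ℝ)+1)^2 - y^2 := by nlinarith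
    have habs : ‖2*y/(y^2 - ((n:ℝ)+1)^2)‖ = 2*y/(((n:ℝ)+1)^2 - y^2) := by
      rw [Real.norm_eq_abs, abs_div, abs_of_pos (by linarith : (0:ℝ) < 2*y),
        abs_of_neg (by linarith : y^2 - ((n:ℝ)+1)^2 < 0)]
      ring_nf
    rw [habs, div_le_div_iff₀ hden (by positivity)]
    have key : (1-c^2) * ((n:ℝ)+1)^2 ≤ ((n:ℝ)+1)^2 - y^2 := by nlinarith
    have h2yc : 2*y ≤ 2*c := by linarith
    calc 2*y*((n:ℝ)+1)^2 ≤ 2*c*((n:ℝ)+1)^2 := by nlinarith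
      _ ≤ 2*c/(1-c^2) * ((1-c^2) * ((n:ℝ)+1)^2) := by
          rw [div_mul_eq_mul_div, mul_comm (1-c^2), ← mul_assoc, mul_div_assoc,
            div_self (by nlinarith : (1-c^2) ≠ 0), mul_one]
      _ ≤ 2*c/(1-c^2) * (((n:ℝ)+1)^2 - y^2) := by
          have : 0 ≤ 2*c/(1-c^2) := div_nonneg (by linarith) (by linarith)
          nlinarith
  have hu : Summable (fun n : ℕ => (2*c/(1-c^2)) / ((n:ℝ)+1)^2) := by
    refine summable_of_le_sq (2*c/(1-c^2)) (fun n =>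
      ⟨div_nonneg (div_nonneg (by linarith) (by linarith)) (by positivity), le_refl _⟩)
  have key : HasDerivAt (fun y => ∑' n : ℕ, Real.log (1 - y^2/((n:ℝ)+1)^2))
      (∑' n : ℕ, 2*x/(x^2 - ((n:ℝ)+1)^2)) x :=
    hasDerivAt_tsum_of_isPreconnected hu isOpen_Ioo isPreconnected_Ioo hg hbound
      hmem (summable_log_fac hx.le hx1) hmem
  -- the sum equals log(sin πy) - log(πy) on the open set
  have heq : Set.EqOn (fun y => ∑' n : ℕ, Real.log (1 - y^2/((n:ℝ)+1)^2))
      (fun y => Real.log (Real.sin (π*y)) - Real.log (π*y)) (Ioo (0:ℝ) c) := by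
    intro y hy
    exact log_sin_sum hy.1 (hy.2.trans hc1)
  have hev : (fun y => Real.log (Real.sin (π*y)) - Real.log (π*y))
      =ᶠ[𝓝 x] (fun y => ∑' n : ℕ, Real.log (1 - y^2/((n:ℝ)+1)^2)) := by
    filter_upwards [isOpen_Ioo.mem_nhds hmem] with y hy
    exact (heq hy).symm
  have key2 : HasDerivAt (fun y => Real.log (Real.sin (π*y)) - Real.log (π*y))
      (∑' n : ℕ, 2*x/(x^2 - ((n:ℝ)+1)^2)) x := key.congr_of_eventuallyEq hev
  -- direct derivative
  have hπx : 0 < π * x := mul_pos pi_pos hx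
  have hsin : 0 < Real.sin (π * x) := sin_pos_of_pos_of_lt_pi hπx (by nlinarith [pi_pos])
  have hlin : HasDerivAt (fun y : ℝ => π * y) π x := by
    simpa using (hasDerivAt_id x).const_mul π
  have h1 : HasDerivAt (fun y => Real.log (Real.sin (π*y))) (Real.cos (π*x) * π / Real.sin (π*x)) x := by
    have hs : HasDerivAt (fun y : ℝ => Real.sin (π*y)) (Real.cos (π*x) * π) x :=
      (Real.hasDerivAt_sin (π*x)).comp x hlin
    exact hs.log hsin.ne'
  have h2 : HasDerivAt (fun y => Real.log (π*y)) (π / (π*x)) x := hlin.log hπx.ne'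
  have key3 := h1.sub h2
  have := key2.unique key3
  rw [this, Real.cot_eq_cos_div_sin]
  field_simp

lemma integrableOn_rpow_Ioo {c : ℝ} (hc : -1 < c) :
    IntegrableOn (fun t : ℝ => t ^ c) (Ioo (0:ℝ) 1) := by
  have h := (intervalIntegrable_rpow' (a := 0) (b := 1) hc)
  rw [intervalIntegrable_iff_integrableOn_Ioo_of_le zero_le_one] at h
  exact h

lemma integral_rpow_Ioo {c : ℝ} (hc : -1 < c) :
    ∫ t in Ioo (0:ℝ) 1, t ^ c = 1/(c+1) := by
  rw [← MeasureTheory.integral_Ioc_eq_integral_Ioo,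
    ← intervalIntegral.integral_of_le zero_le_one,
    integral_rpow (Or.inl hc)]
  rw [Real.one_rpow, Real.zero_rpow (by linarith : c + 1 ≠ 0)]
  ring

lemma integrableOn_log_Ioo : IntegrableOn Real.log (Ioo (0:ℝ) 1) := by
  have hmeas : AEStronglyMeasurable Real.log (volume.restrict (Ioo (0:ℝ) 1)) :=
    Real.measurable_log.aestronglyMeasurable
  have hbound := (integrableOn_rpow_Ioo (c := -(1/2)) (by norm_num)).const_mul 2
  refine Integrable.mono' hbound hmeas ?_
  filter_upwards [ae_restrict_mem measurableSet_Ioo] with t ht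
  have ht0 : 0 < t := ht.1
  have ht1 : t < 1 := ht.2
  have hlogneg : Real.log t < 0 := Real.log_neg ht0 ht1
  rw [Real.norm_eq_abs, abs_of_neg hlogneg]
  have h1 : Real.log (t ^ (-(1/2):ℝ)) = -(1/2) * Real.log t := Real.log_rpow ht0 _
  have h2 : Real.log (t ^ (-(1/2):ℝ)) ≤ t ^ (-(1/2):ℝ) := by
    have := Real.log_le_sub_one_of_pos (Real.rpow_pos_of_pos ht0 (-(1/2)))
    linarith
  nlinarith [Real.rpow_pos_of_pos ht0 (-(1/2):ℝ)]

lemma integral_log_Ioo : ∫ t in Ioo (0:ℝ) 1, Real.log t = -1 := by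
  have hlog : IntervalIntegrable Real.log volume 0 1 := by
    rw [intervalIntegrable_iff_integrableOn_Ioo_of_le zero_le_one]
    exact integrableOn_log_Ioo
  have key : ∫ t in (0:ℝ)..1, Real.log t = -1 - 0 := by
    apply integral_eq_sub_of_hasDerivAt_of_tendsto (f := fun t => t * Real.log t - t)
      zero_lt_one _ hlog
    · -- tendsto at 0+
      have h1 : Tendsto (fun t : ℝ => t * Real.log t) (𝓝[>] 0) (𝓝 0) := by
        have := tendsto_log_mul_rpow_nhdsGT_zero zero_lt_one
        refine this.congr' ?_
        filter_upwards [self_mem_nhdsWithin] with t (ht : (0:ℝ) < t)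
        rw [Real.rpow_one]; ring
      have h2 : Tendsto (fun t : ℝ => t) (𝓝[>] (0:ℝ)) (𝓝 0) :=
        tendsto_id.mono_left nhdsWithin_le_nhds
      simpa using h1.sub h2
    · -- tendsto at 1-
      have hcont : ContinuousAt (fun t : ℝ => t * Real.log t - t) 1 := by
        have := (continuousAt_id.mul (Real.continuousAt_log one_ne_zero)).sub continuousAt_id
        exact this
      have := hcont.continuousWithinAt (s := Iio (1:ℝ))
      have h := this.tendsto
      simpa using h
    · intro t ht
      have ht0 : 0 < t := ht.1
      have h1 : HasDerivAt (fun t : ℝ => t * Real.log t) (Real.log t + 1) t := by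
        have := (hasDerivAt_id t).mul (Real.hasDerivAt_log ht0.ne')
        exact this.congr_deriv (by simp [ht0.ne'])
      have := h1.sub (hasDerivAt_id t)
      exact this.congr_deriv (by ring)
  rw [← MeasureTheory.integral_Ioc_eq_integral_Ioo, ← intervalIntegral.integral_of_le zero_le_one,
    key]
  ring

lemma summable_B {b : ℝ} (hb : 1 < b) :
    Summable (fun n : ℕ => 1/((((n:ℕ):ℝ)+1)*(b*(((n:ℕ):ℝ)+1)+1))) := by
  refine summable_of_le_sq 1 (fun n => ⟨by positivity, ?_⟩)
  have hn : (0:ℝ) < (n:ℝ)+1 := by positivity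
  refine one_div_le_one_div_of_le (by positivity) ?_
  nlinarith [hn]

lemma tsum_B {b : ℝ} (hb : 1 < b) {t : ℝ} (ht : t ∈ Ioo (0:ℝ) 1) :
    ∑' n : ℕ, -(t ^ (b*((n:ℝ)+1)) / ((n:ℝ)+1)) = Real.log (1 - t ^ b) := by
  have ht0 : 0 < t := ht.1
  have ht1 : t < 1 := ht.2
  have htb : t ^ b < 1 := Real.rpow_lt_one ht0.le ht1 (by linarith)
  have htb0 : 0 < t ^ b := Real.rpow_pos_of_pos ht0 b
  have habs : |t ^ b| < 1 := by rw [abs_of_pos htb0]; exact htb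
  have hs := Real.hasSum_pow_div_log_of_abs_lt_one habs
  have hs2 := hs.neg
  have := hs2.tsum_eq
  rw [neg_neg] at this
  rw [← this]
  congr 1
  funext n
  congr 1
  rw [← Real.rpow_natCast (t^b) (n+1), ← Real.rpow_mul ht0.le]
  push_cast
  ring_nf

lemma norm_integral_B {b : ℝ} (hb : 1 < b) (n : ℕ) :
    ∫ t in Ioo (0:ℝ) 1, ‖-(t ^ (b*((n:ℝ)+1)) / ((n:ℝ)+1))‖
      = 1/((((n:ℕ):ℝ)+1)*(b*(((n:ℕ):ℝ)+1)+1)) := by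
  have hexp : (-1:ℝ) < b*((n:ℝ)+1) := by nlinarith [Nat.cast_nonneg (α := ℝ) n]
  rw [setIntegral_congr_fun measurableSet_Ioo (g := fun t => t ^ (b*((n:ℝ)+1)) / ((n:ℝ)+1)) ?_]
  · rw [MeasureTheory.integral_div, integral_rpow_Ioo hexp]
    rw [one_div, one_div, div_eq_mul_inv, ← mul_inv]
    ring_nf
  · intro t ht
    have ht0 : 0 < t := ht.1
    simp only [norm_neg, norm_div, Real.norm_eq_abs]
    rw [abs_of_pos (Real.rpow_pos_of_pos ht0 _), abs_of_pos (by positivity : (0:ℝ) < (n:ℝ)+1)]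

lemma integrable_B (n : ℕ) {b : ℝ} (hb : 1 < b) :
    Integrable (fun t : ℝ => -(t ^ (b*((n:ℝ)+1)) / ((n:ℝ)+1)))
      (volume.restrict (Ioo (0:ℝ) 1)) := by
  have hexp : (-1:ℝ) < b*((n:ℝ)+1) := by nlinarith [Nat.cast_nonneg (α := ℝ) n]
  exact (((integrableOn_rpow_Ioo hexp).div_const _).neg)

lemma lemma_B {b : ℝ} (hb : 1 < b) :
    ∫ t in Ioo (0:ℝ) 1, Real.log (1 - t ^ b)
      = -∑' n : ℕ, 1/((((n:ℕ):ℝ)+1)*(b*(((n:ℕ):ℝ)+1)+1)) := by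
  have h1 : ∫ t in Ioo (0:ℝ) 1, Real.log (1 - t ^ b)
      = ∫ t in Ioo (0:ℝ) 1, ∑' n : ℕ, -(t ^ (b*((n:ℝ)+1)) / ((n:ℝ)+1)) := by
    refine setIntegral_congr_fun measurableSet_Ioo (fun t ht => ?_)
    exact (tsum_B hb ht).symm
  rw [h1, ← MeasureTheory.integral_tsum_of_summable_integral_norm
      (fun n => integrable_B n hb) ?_]
  · rw [← tsum_neg]
    congr 1
    funext n
    have hexp : (-1:ℝ) < b*((n:ℝ)+1) := by nlinarith [Nat.cast_nonneg (α := ℝ) n]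
    rw [MeasureTheory.integral_neg, MeasureTheory.integral_div, integral_rpow_Ioo hexp]
    rw [one_div, one_div, div_eq_mul_inv, ← mul_inv]
    ring_nf
  · refine Summable.congr ?_ (fun n => (norm_integral_B hb n).symm)
    exact summable_B hb

lemma summable_C {b : ℝ} (hb : 1 < b) :
    Summable (fun n : ℕ => 1/((((n:ℕ):ℝ)+1)*(b*(((n:ℕ):ℝ)+1)-1))) := by
  refine summable_of_le_sq (1/(b-1)) (fun n => ⟨?_, ?_⟩)
  · have hn : (0:ℝ) < (n:ℝ)+1 := by positivity
    have : 0 < b*((n:ℝ)+1)-1 := by nlinarith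
    positivity
  · have hn : (0:ℝ) < (n:ℝ)+1 := by positivity
    have hd : 0 < b*((n:ℝ)+1)-1 := by nlinarith
    have hb1 : (0:ℝ) < b - 1 := by linarith
    have h2 : (1/(b-1)) / ((n:ℝ)+1)^2 = 1/((b-1)*((n:ℝ)+1)^2) := by
      rw [div_div]
    rw [h2]
    refine one_div_le_one_div_of_le (by positivity) ?_
    nlinarith [hn, hd]

lemma tsum_C {b : ℝ} (hb : 1 < b) {t : ℝ} (ht : t ∈ Ioi (1:ℝ)) :
    ∑' n : ℕ, -(t ^ (-(b*((n:ℝ)+1))) / ((n:ℝ)+1)) = Real.log (1 - t ^ (-b)) := by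
  have ht1 : 1 < t := ht
  have ht0 : 0 < t := by linarith
  have htb : t ^ (-b) < 1 := by
    rw [Real.rpow_neg ht0.le]
    rw [inv_lt_one_iff₀]
    right
    exact Real.one_lt_rpow_iff_of_pos ht0 |>.mpr (Or.inl ⟨ht1, by linarith⟩)
  have htb0 : 0 < t ^ (-b) := Real.rpow_pos_of_pos ht0 _
  have habs : |t ^ (-b)| < 1 := by rw [abs_of_pos htb0]; exact htb
  have hs2 := (Real.hasSum_pow_div_log_of_abs_lt_one habs).neg
  have := hs2.tsum_eq
  rw [neg_neg] at this
  rw [← this]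
  congr 1
  funext n
  congr 1
  rw [← Real.rpow_natCast (t^(-b)) (n+1), ← Real.rpow_mul ht0.le]
  push_cast
  ring_nf

lemma integrable_C (n : ℕ) {b : ℝ} (hb : 1 < b) :
    Integrable (fun t : ℝ => -(t ^ (-(b*((n:ℝ)+1))) / ((n:ℝ)+1)))
      (volume.restrict (Ioi (1:ℝ))) := by
  have hexp : -(b*((n:ℝ)+1)) < -1 := by nlinarith [Nat.cast_nonneg (α := ℝ) n]
  exact ((integrableOn_Ioi_rpow_of_lt hexp one_pos).div_const _).neg

lemma integral_C {b : ℝ} (hb : 1 < b) (n : ℕ) :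
    ∫ t in Ioi (1:ℝ), t ^ (-(b*((n:ℝ)+1))) = 1/(b*((n:ℝ)+1)-1) := by
  have hexp : -(b*((n:ℝ)+1)) < -1 := by nlinarith [Nat.cast_nonneg (α := ℝ) n]
  rw [integral_Ioi_rpow_of_lt hexp one_pos]
  rw [Real.one_rpow]
  have hd : (0:ℝ) < b*((n:ℝ)+1)-1 := by nlinarith [Nat.cast_nonneg (α := ℝ) n]
  rw [div_eq_div_iff (by linarith : -(b*((n:ℝ)+1))+1 ≠ 0) (by linarith : b*((n:ℝ)+1)-1 ≠ 0)]
  ring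

lemma norm_integral_C {b : ℝ} (hb : 1 < b) (n : ℕ) :
    ∫ t in Ioi (1:ℝ), ‖-(t ^ (-(b*((n:ℝ)+1))) / ((n:ℝ)+1))‖
      = 1/((((n:ℕ):ℝ)+1)*(b*(((n:ℕ):ℝ)+1)-1)) := by
  rw [setIntegral_congr_fun measurableSet_Ioi
    (g := fun t => t ^ (-(b*((n:ℝ)+1))) / ((n:ℝ)+1)) ?_]
  · rw [MeasureTheory.integral_div, integral_C hb n]
    rw [one_div, one_div, div_eq_mul_inv, ← mul_inv]
    ring_nf
  · intro t ht
    have ht0 : (0:ℝ) < t := lt_trans one_pos ht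
    simp only [norm_neg, norm_div, Real.norm_eq_abs]
    rw [abs_of_pos (Real.rpow_pos_of_pos ht0 _), abs_of_pos (by positivity : (0:ℝ) < (n:ℝ)+1)]

lemma lemma_C {b : ℝ} (hb : 1 < b) :
    ∫ t in Ioi (1:ℝ), Real.log (1 - t ^ (-b))
      = -∑' n : ℕ, 1/((((n:ℕ):ℝ)+1)*(b*(((n:ℕ):ℝ)+1)-1)) := by
  have h1 : ∫ t in Ioi (1:ℝ), Real.log (1 - t ^ (-b))
      = ∫ t in Ioi (1:ℝ), ∑' n : ℕ, -(t ^ (-(b*((n:ℝ)+1))) / ((n:ℝ)+1)) := by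
    refine setIntegral_congr_fun measurableSet_Ioi (fun t ht => ?_)
    exact (tsum_C hb ht).symm
  rw [h1, ← MeasureTheory.integral_tsum_of_summable_integral_norm
      (fun n => integrable_C n hb) ?_]
  · rw [← tsum_neg]
    congr 1
    funext n
    rw [MeasureTheory.integral_neg, MeasureTheory.integral_div, integral_C hb n]
    rw [one_div, one_div, div_eq_mul_inv, ← mul_inv]
    ring_nf
  · exact Summable.congr (summable_C hb) (fun n => (norm_integral_C hb n).symm)

lemma integrableOn_log_one_sub_rpow {b : ℝ} (hb : 1 < b) :
    IntegrableOn (fun t : ℝ => Real.log (1 - t ^ b)) (Ioo (0:ℝ) 1) := by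
  have hls : IntegrableOn (fun t : ℝ => -Real.log (1 - t)) (Ioo (0:ℝ) 1) := by
    have h1 : IntervalIntegrable Real.log volume 0 1 := by
      rw [intervalIntegrable_iff_integrableOn_Ioo_of_le zero_le_one]
      exact integrableOn_log_Ioo
    have h2 := (h1.comp_sub_left 1).neg
    rw [show (1:ℝ) - 1 = 0 by ring, show (1:ℝ) - 0 = 1 by ring] at h2
    have h3 := h2.symm
    rw [intervalIntegrable_iff_integrableOn_Ioo_of_le zero_le_one] at h3
    exact h3
  have hmeas : AEStronglyMeasurable (fun t : ℝ => Real.log (1 - t ^ b))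
      (volume.restrict (Ioo (0:ℝ) 1)) := by
    apply Measurable.aestronglyMeasurable
    exact Real.measurable_log.comp ((measurable_const.sub (measurable_id.pow_const b)))
  refine Integrable.mono' hls hmeas ?_
  filter_upwards [ae_restrict_mem measurableSet_Ioo] with t ht
  have ht0 : 0 < t := ht.1
  have ht1 : t < 1 := ht.2
  have htb : t ^ b ≤ t := by
    have := Real.rpow_le_rpow_of_exponent_ge ht0 ht1.le (le_of_lt hb)
    rwa [Real.rpow_one] at this
  have htb0 : 0 < t ^ b := Real.rpow_pos_of_pos ht0 b
  have h1t : 0 < 1 - t := by linarith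
  have h1tb : 0 < 1 - t ^ b := by linarith
  have hle : Real.log (1 - t) ≤ Real.log (1 - t ^ b) :=
    Real.log_le_log h1t (by linarith)
  have hnp : Real.log (1 - t ^ b) ≤ 0 := Real.log_nonpos h1tb.le (by nlinarith)
  rw [Real.norm_eq_abs, abs_of_nonpos hnp]
  linarith

/-- For real `b > 1`,
`∫_0^1 log(t^(-b) - 1) dt + ∫_1^∞ log(1 - t^(-b)) dt = π·cot(π/b)`. -/
theorem stmt_8 (b : ℝ) (hb : 1 < b) :
    (∫ t in Set.Ioo (0 : ℝ) 1, Real.log (t ^ (-b) - 1)) +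
      (∫ t in Set.Ioi (1 : ℝ), Real.log (1 - t ^ (-b))) =
      Real.pi * Real.cot (Real.pi / b) := by
  have hb0 : (0:ℝ) < b := by linarith
  -- rewrite first integral
  have hsplit : (∫ t in Set.Ioo (0 : ℝ) 1, Real.log (t ^ (-b) - 1))
      = (∫ t in Set.Ioo (0 : ℝ) 1, Real.log (1 - t ^ b)) - b * ∫ t in Set.Ioo (0:ℝ) 1, Real.log t := by
    have heq : ∀ t ∈ Set.Ioo (0:ℝ) 1,
        Real.log (t ^ (-b) - 1) = Real.log (1 - t ^ b) - b * Real.log t := by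
      intro t ht
      have ht0 : 0 < t := ht.1
      have ht1 : t < 1 := ht.2
      have htb : t ^ b < 1 := Real.rpow_lt_one ht0.le ht1 hb0
      have h1tb : 0 < 1 - t ^ b := by linarith
      have hprod : t ^ (-b) - 1 = (1 - t ^ b) * t ^ (-b) := by
        have : t ^ (-b) * t ^ b = 1 := by
          rw [← Real.rpow_add ht0]; simp
        nlinarith [this]
      rw [hprod, Real.log_mul h1tb.ne' (Real.rpow_pos_of_pos ht0 (-b)).ne',
        Real.log_rpow ht0]
      ring
    rw [setIntegral_congr_fun measurableSet_Ioo
      (g := fun t => Real.log (1 - t ^ b) - b * Real.log t) heq]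
    rw [MeasureTheory.integral_sub (integrableOn_log_one_sub_rpow hb)
      ((integrableOn_log_Ioo.const_mul b))]
    rw [MeasureTheory.integral_const_mul]
  rw [hsplit, integral_log_Ioo, lemma_B hb, lemma_C hb]
  -- series juggling
  set x : ℝ := 1/b with hx
  have hx0 : 0 < x := by positivity
  have hx1 : x < 1 := by rw [hx]; rw [div_lt_one hb0]; linarith
  have hterm : ∀ n : ℕ,
      1/((((n:ℕ):ℝ)+1)*(b*(((n:ℕ):ℝ)+1)+1)) + 1/((((n:ℕ):ℝ)+1)*(b*(((n:ℕ):ℝ)+1)-1))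
        = -(2*x/(x^2 - ((n:ℝ)+1)^2)) := by
    intro n
    have hn : (0:ℝ) < (n:ℝ)+1 := by positivity
    have hd1 : (0:ℝ) < b*((n:ℝ)+1)+1 := by nlinarith
    have hd2 : (0:ℝ) < b*((n:ℝ)+1)-1 := by nlinarith
    have hxd : x^2 - ((n:ℝ)+1)^2 < 0 := by nlinarith [hx1, hx0]
    rw [hx] at hxd ⊢
    have h4 : (1/b)^2 - ((n:ℝ)+1)^2 ≠ 0 := ne_of_lt hxd
    have h1 : ((n:ℝ)+1) ≠ 0 := hn.ne'
    have h2 : b*((n:ℝ)+1)+1 ≠ 0 := hd1.ne'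
    have h3 : b*((n:ℝ)+1)-1 ≠ 0 := hd2.ne'
    have hbne : b ≠ 0 := hb0.ne'
    rw [div_add_div _ _ (mul_ne_zero h1 h2) (mul_ne_zero h1 h3), ← neg_div, div_eq_div_iff
      (by exact mul_ne_zero (mul_ne_zero h1 h2) (mul_ne_zero h1 h3)) h4]
    field_simp
    ring
  have hsum : ∑' n : ℕ, (1/((((n:ℕ):ℝ)+1)*(b*(((n:ℕ):ℝ)+1)+1))
        + 1/((((n:ℕ):ℝ)+1)*(b*(((n:ℕ):ℝ)+1)-1)))
      = -(π * Real.cot (π*x) - 1/x) := by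
    rw [tsum_congr hterm, tsum_neg, cot_series hx0 hx1]
  rw [Summable.tsum_add (summable_B hb) (summable_C hb)] at hsum
  have hcot : π * x = π / b := by rw [hx]; ring
  have hxinv : 1/x = b := by rw [hx]; field_simp
  rw [hcot, hxinv] at hsum
  linarith [hsum]
end

section
/- Let p ≥ 1 be an integer and ε₁ ∈ (0,1]. For every complex z with |arg z| ≤ (1 - ε₁)π/p and every real v > 0, |z^p + v^p| ≥ 2^{1-p} sin(πε₁/2) (|z| + v)^p. -/
/-- For an integer `p ≥ 1`, `ε₁ ∈ (0,1]`, complex `z` with `|arg z| ≤ (1-ε₁)π/p` and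
real `v > 0`, one has `|z^p + v^p| ≥ 2^(1-p) sin(πε₁/2) (|z| + v)^p`. -/
theorem stmt_9 (p : ℕ) (hp : 1 ≤ p) (ε₁ : ℝ) (hε₁ : ε₁ ∈ Set.Ioc (0 : ℝ) 1)
    (z : ℂ) (hz : |Complex.arg z| ≤ (1 - ε₁) * Real.pi / p) (v : ℝ) (hv : 0 < v) :
    (2 : ℝ) ^ ((1 : ℝ) - p) * Real.sin (Real.pi * ε₁ / 2) * (‖z‖ + v) ^ p ≤
      ‖z ^ p + (v : ℂ) ^ p‖ := by
  obtain ⟨hε0, hε1⟩ := hε₁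
  have hπ := Real.pi_pos
  set θ := Complex.arg z with hθ
  set a := ‖z‖ with ha
  set ψ := (1 - ε₁) * Real.pi with hψ
  have hψ0 : 0 ≤ ψ := mul_nonneg (by linarith) hπ.le
  have hψπ : ψ ≤ Real.pi := by
    have : (1 - ε₁) * Real.pi ≤ 1 * Real.pi :=
      mul_le_mul_of_nonneg_right (by linarith) hπ.le
    simpa using this
  have ha0 : 0 ≤ a := norm_nonneg z
  -- sin (π ε₁ / 2) = cos (ψ / 2)
  have hsin : Real.sin (Real.pi * ε₁ / 2) = Real.cos (ψ / 2) := by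
    rw [hψ, show (1 - ε₁) * Real.pi / 2 = Real.pi / 2 - Real.pi * ε₁ / 2 by ring,
      Real.cos_pi_div_two_sub]
  have hcosψ2 : 0 ≤ Real.cos (ψ / 2) :=
    Real.cos_nonneg_of_mem_Icc ⟨by linarith, by linarith⟩
  -- Re (z^p) = a^p * cos (p θ)
  have hre : (z ^ p).re = a ^ p * Real.cos (p * θ) := by
    conv_lhs => rw [← Complex.norm_mul_exp_arg_mul_I z]
    rw [mul_pow, ← Complex.exp_nat_mul,
      show (p : ℂ) * (θ * Complex.I) = (↑(p * θ : ℝ)) * Complex.I by push_cast; ring,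
      ← Complex.ofReal_pow, Complex.re_ofReal_mul, Complex.exp_ofReal_mul_I_re]
  -- cos (p θ) ≥ cos ψ
  have hcos : Real.cos ψ ≤ Real.cos (p * θ) := by
    rw [← Real.cos_abs (p * θ)]
    apply Real.cos_le_cos_of_nonneg_of_le_pi (abs_nonneg _) hψπ
    have hp0 : (0 : ℝ) < p := by exact_mod_cast hp
    calc |(p : ℝ) * θ| = p * |θ| := by rw [abs_mul, abs_of_nonneg hp0.le]
      _ ≤ p * (ψ / p) := mul_le_mul_of_nonneg_left hz hp0.le
      _ = ψ := by field_simp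
  set c := v ^ p with hc
  have hc0 : 0 < c := pow_pos hv p
  have hap : 0 ≤ a ^ p := pow_nonneg ha0 p
  have habs : (a ^ p) ^ 2 = (z ^ p).re ^ 2 + (z ^ p).im ^ 2 := by
    rw [ha, ← norm_pow, Complex.sq_norm, Complex.normSq_apply]; ring
  have h4 : a ^ p * Real.cos ψ ≤ (z ^ p).re := by
    rw [hre]; exact mul_le_mul_of_nonneg_left hcos hap
  have hsq : (Real.cos (ψ / 2) * (a ^ p + c)) ^ 2 ≤ ‖z ^ p + (v : ℂ) ^ p‖ ^ 2 := by
    rw [Complex.sq_norm, Complex.normSq_apply]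
    simp only [Complex.add_re, Complex.add_im, ← Complex.ofReal_pow,
      Complex.ofReal_re, Complex.ofReal_im, add_zero]
    have h1 : Real.cos (ψ / 2) ^ 2 = 1 / 2 + Real.cos ψ / 2 := by
      rw [Real.cos_sq, show 2 * (ψ / 2) = ψ by ring]
    have h2 : Real.cos ψ ≤ 1 := Real.cos_le_one ψ
    rw [mul_pow, h1]
    nlinarith [mul_nonneg (mul_nonneg two_pos.le hc0.le) (sub_nonneg.mpr h4),
      mul_nonneg (by linarith : (0:ℝ) ≤ 1 - Real.cos ψ) (sq_nonneg (a ^ p - c))]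
  have hkey : Real.cos (ψ / 2) * (a ^ p + c) ≤ ‖z ^ p + (v : ℂ) ^ p‖ :=
    le_of_pow_le_pow_left₀ two_ne_zero (norm_nonneg _) hsq
  -- power mean step
  have hpm : (2 : ℝ) ^ ((1 : ℝ) - p) * (a + v) ^ p ≤ a ^ p + c := by
    have h2p : (2 : ℝ) ^ ((1 : ℝ) - p) = ((2 : ℝ) ^ (p - 1))⁻¹ := by
      rw [← Real.rpow_natCast 2 (p - 1), ← Real.rpow_neg (by norm_num),
        Nat.cast_sub hp]
      norm_num
    rw [h2p, inv_mul_le_iff₀ (pow_pos two_pos _)]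
    calc (a + v) ^ p ≤ 2 ^ (p - 1) * (a ^ p + v ^ p) := add_pow_le ha0 hv.le p
      _ = 2 ^ (p - 1) * (a ^ p + c) := rfl
  calc (2 : ℝ) ^ ((1 : ℝ) - p) * Real.sin (Real.pi * ε₁ / 2) * (a + v) ^ p
      = Real.cos (ψ / 2) * ((2 : ℝ) ^ ((1 : ℝ) - p) * (a + v) ^ p) := by rw [hsin]; ring
    _ ≤ Real.cos (ψ / 2) * (a ^ p + c) := mul_le_mul_of_nonneg_left hpm hcosψ2
    _ ≤ _ := hkey
end

section
/- Let ϱ ∈ (0,1) and a_k = k^{1/ϱ} for k ≥ 1, and let F(x) = ∏_{k=1}^∞ (1 + x/a_k). Then for every x > 0, F(x) = exp((π/sin(πϱ)) x^ϱ)·ψ(x) where exp(-1/ϱ)/(1+x) ≤ ψ(x) ≤ exp(-(1/ϱ)·x/(1+x)). -/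
/-!
Put `g t = log (1 + x / t ^ (1 / ϱ))`, so that `log F(x) = ∑_{k ≥ 1} g k`. As `g` is decreasing,
the integral test gives `∫_1^∞ g ≤ log F(x) ≤ g 1 + ∫_1^∞ g`, and `g 1 = log (1 + x)`.
The substitution `t = (x s)^ϱ` and an integration by parts turn `∫_0^∞ g` into
`x^ϱ ∫_0^∞ s^(ϱ-1) / (1 + s) ds`, a beta integral equal to `π x^ϱ / sin (π ϱ)` by Euler's
reflection formula. On `(0, 1]`, with `θ = x / (1 + x)`,
`log (1 + x) - θ (1/ϱ) log t ≤ g t ≤ log (1 + x) - (1/ϱ) log t`, the lower bound by concavity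
of `log`; since `∫_0^1 log t = -1`, this pins `∫_0^1 g` between `log (1 + x) + θ/ϱ` and
`log (1 + x) + 1/ϱ`, and `∫_1^∞ g = π x^ϱ / sin (π ϱ) - ∫_0^1 g` closes both bounds.
-/

open Real MeasureTheory Set Filter Topology intervalIntegral

lemma log_one_add_le_rpow_div {y ε : ℝ} (hy : 0 ≤ y) (hε : 0 < ε) (hε1 : ε ≤ 1) :
    log (1 + y) ≤ y ^ ε / ε := by
  have h1 : 0 < 1 + y := by linarith
  rw [le_div_iff₀' hε, ← log_rpow h1]
  calc log ((1 + y) ^ ε) ≤ (1 + y) ^ ε - 1 := log_le_sub_one_of_pos (by positivity)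
    _ ≤ y ^ ε := by linarith [rpow_add_le_add_rpow zero_le_one hy hε.le hε1, one_rpow ε]

lemma log_one_add_inv_nonneg {s : ℝ} (hs : 0 ≤ s) : 0 ≤ log (1 + s⁻¹) :=
  log_nonneg (by simp [hs])

lemma log_one_add_inv_mul_rpow_le {s : ℝ} (hs : 0 < s) (c : ℝ) {ε : ℝ} (hε : 0 < ε)
    (hε1 : ε ≤ 1) : log (1 + s⁻¹) * s ^ c ≤ s ^ (c - ε) / ε := by
  calc log (1 + s⁻¹) * s ^ c ≤ s⁻¹ ^ ε / ε * s ^ c := by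
        gcongr
        exact log_one_add_le_rpow_div (by positivity) hε hε1
    _ = s ^ (c - ε) / ε := by
        rw [inv_rpow hs.le, ← rpow_neg hs.le, rpow_sub hs, rpow_neg hs.le]
        ring

lemma log_one_add_mul_le {x u : ℝ} (hx : 0 ≤ x) (hu : 1 ≤ u) :
    log (1 + x * u) ≤ log (1 + x) + log u := by
  rw [← log_mul (by positivity) (by positivity)]
  exact log_le_log (by positivity) (by nlinarith)

lemma log_one_add_add_mul_log_le {x u : ℝ} (hx : 0 ≤ x) (hu : 0 < u) :
    log (1 + x) + x / (1 + x) * log u ≤ log (1 + x * u) := by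
  have hx1 : 0 < 1 + x := by linarith
  set θ := x / (1 + x)
  have hθ : 0 ≤ θ := by positivity
  have hθ1 : 0 < 1 - θ := by
    rw [sub_pos, div_lt_one hx1]
    linarith
  have hsplit : 1 + x * u = (1 + x) * (θ * u + (1 - θ) * 1) := by
    simp only [θ]
    field_simp
    ring
  have hconc := strictConcaveOn_log_Ioi.concaveOn.2 (mem_Ioi.2 hu) (mem_Ioi.2 one_pos) hθ hθ1.le
    (by ring)
  simp only [smul_eq_mul, log_one, mul_zero, add_zero] at hconc
  rw [hsplit, log_mul hx1.ne' (by nlinarith)]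
  linarith

lemma integrableOn_Ioi_zero_of_le_rpow {E : Type*} [NormedAddCommGroup E] {f : ℝ → E}
    (hf : ContinuousOn f (Ioi 0)) {p q C D : ℝ} (hp : -1 < p) (hq : q < -1)
    (h0 : ∀ s ∈ Ioc 0 1, ‖f s‖ ≤ C * s ^ p) (h1 : ∀ s ∈ Ioi 1, ‖f s‖ ≤ D * s ^ q) :
    IntegrableOn f (Ioi 0) := by
  rw [← Ioc_union_Ioi_eq_Ioi zero_le_one]
  refine IntegrableOn.union ?_ ?_
  · have hint : IntegrableOn (fun s : ℝ ↦ C * s ^ p) (Ioc 0 1) :=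
      ((intervalIntegrable_iff_integrableOn_Ioc_of_le zero_le_one).1
        (intervalIntegrable_rpow' hp)).const_mul C
    exact hint.mono' ((hf.mono Ioc_subset_Ioi_self).aestronglyMeasurable measurableSet_Ioc)
      (ae_restrict_of_forall_mem measurableSet_Ioc h0)
  · have hint : IntegrableOn (fun s : ℝ ↦ D * s ^ q) (Ioi 1) :=
      ((integrableOn_Ioi_rpow_iff zero_lt_one).2 hq).const_mul D
    exact hint.mono' ((hf.mono (Ioi_subset_Ioi zero_le_one)).aestronglyMeasurable
      measurableSet_Ioi) (ae_restrict_of_forall_mem measurableSet_Ioi h1)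

lemma integral_const_sub_mul_log (a c : ℝ) : ∫ t in (0 : ℝ)..1, (a - c * log t) = a + c := by
  rw [intervalIntegral.integral_sub intervalIntegrable_const
    (intervalIntegrable_log'.const_mul c), intervalIntegral.integral_const_mul, integral_log]
  simp

namespace AntitoneOn

variable {f : ℝ → ℝ}

lemma summable_of_integrableOn_Ioi_one (anti : AntitoneOn f (Ici 1))
    (integrable : IntegrableOn f (Ioi 1)) (nonneg : ∀ t ∈ Ioi 1, 0 ≤ f t) :
    Summable fun n : ℕ ↦ f n :=
  summable_of_integrableOn_Ioi (N := 1) (by exact_mod_cast anti) (by exact_mod_cast integrable)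
    (by exact_mod_cast nonneg)

lemma summable_comp_add_one (anti : AntitoneOn f (Ici 1)) (integrable : IntegrableOn f (Ioi 1))
    (nonneg : ∀ t ∈ Ioi 1, 0 ≤ f t) : Summable fun n : ℕ ↦ f (n + 1) := by
  exact_mod_cast (summable_nat_add_iff 1).2
    (anti.summable_of_integrableOn_Ioi_one integrable nonneg)

lemma integral_Ioi_one_le_tsum (anti : AntitoneOn f (Ici 1))
    (integrable : IntegrableOn f (Ioi 1)) (nonneg : ∀ t ∈ Ioi 1, 0 ≤ f t) :
    ∫ t in Ioi 1, f t ≤ ∑' n : ℕ, f (n + 1) := by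
  exact_mod_cast integral_le_tsum_comp_add 1 (by exact_mod_cast anti)
    (anti.summable_of_integrableOn_Ioi_one integrable nonneg) (by exact_mod_cast nonneg)

lemma tsum_le_add_integral_Ioi_one (anti : AntitoneOn f (Ici 1))
    (integrable : IntegrableOn f (Ioi 1)) (nonneg : ∀ t ∈ Ioi 1, 0 ≤ f t) :
    ∑' n : ℕ, f (n + 1) ≤ f 1 + ∫ t in Ioi 1, f t := by
  have h := tsum_comp_add_le_integral 1 (by exact_mod_cast anti)
    (by exact_mod_cast integrable) (by exact_mod_cast nonneg)
  rw [(anti.summable_comp_add_one integrable nonneg).tsum_eq_zero_add]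
  push_cast at h ⊢
  rw [zero_add]
  gcongr

end AntitoneOn

section Beta

variable {a : ℝ}

lemma integral_rpow_mul_one_sub_rpow (ha0 : 0 < a) (ha1 : a < 1) :
    ∫ t in (0 : ℝ)..1, t ^ (a - 1) * (1 - t) ^ (-a) = π / sin (π * a) := by
  have hbeta : Complex.betaIntegral a (1 - a) = ((π / sin (π * a) : ℝ) : ℂ) := by
    have h := Complex.Gamma_mul_Gamma_eq_betaIntegral (s := a) (t := 1 - a)
      (by simpa using ha0) (by simpa using ha1)
    rw [add_sub_cancel, Complex.Gamma_one, one_mul] at h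
    rw [← h, Complex.Gamma_mul_Gamma_one_sub]
    push_cast [Complex.ofReal_sin]
    ring_nf
  apply Complex.ofReal_injective
  rw [← hbeta, Complex.betaIntegral, ← intervalIntegral.integral_ofReal]
  refine integral_congr fun t ht ↦ ?_
  rw [uIcc_of_le zero_le_one] at ht
  rw [Complex.ofReal_mul, Complex.ofReal_cpow ht.1, Complex.ofReal_cpow (by linarith [ht.2])]
  push_cast
  ring_nf

lemma image_div_one_add_Ioi : (fun s : ℝ ↦ s / (1 + s)) '' Ioi 0 = Ioo 0 1 := by
  ext y
  constructor
  · rintro ⟨s, hs, rfl⟩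
    have hs : 0 < s := hs
    exact ⟨by positivity, (div_lt_one (by positivity)).2 (by linarith)⟩
  · rintro ⟨hy0, hy1⟩
    refine ⟨y / (1 - y), div_pos hy0 (by linarith), ?_⟩
    have : 1 - y ≠ 0 := by linarith
    field_simp
    ring

lemma injOn_div_one_add : InjOn (fun s : ℝ ↦ s / (1 + s)) (Ioi 0) := by
  intro s hs t ht hst
  have hs : 0 < s := hs
  have ht : 0 < t := ht
  field_simp at hst
  linarith

lemma integral_rpow_div_one_add (ha0 : 0 < a) (ha1 : a < 1) :
    ∫ s in Ioi (0 : ℝ), s ^ (a - 1) / (1 + s) = π / sin (π * a) := by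
  have hderiv : ∀ s ∈ Ioi (0 : ℝ),
      HasDerivWithinAt (fun s ↦ s / (1 + s)) ((1 + s) ^ 2)⁻¹ (Ioi 0) s := by
    intro s hs
    have h1s : 1 + s ≠ 0 := by linarith [mem_Ioi.1 hs]
    have h : HasDerivAt (fun s : ℝ ↦ s / (1 + s)) ((1 * (1 + s) - s * 1) / (1 + s) ^ 2) s :=
      (hasDerivAt_id' s).div ((hasDerivAt_id' s).const_add 1) h1s
    exact (h.congr_deriv (by field_simp; ring)).hasDerivWithinAt
  rw [← integral_rpow_mul_one_sub_rpow ha0 ha1, integral_of_le zero_le_one,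
    integral_Ioc_eq_integral_Ioo, ← image_div_one_add_Ioi,
    integral_image_eq_integral_abs_deriv_smul measurableSet_Ioi hderiv injOn_div_one_add]
  refine setIntegral_congr_fun measurableSet_Ioi fun s hs ↦ ?_
  have hs : 0 < s := hs
  have h1s : 0 < 1 + s := by linarith
  have hcompl : 1 - s / (1 + s) = (1 + s)⁻¹ := by field_simp; ring
  rw [smul_eq_mul, abs_of_pos (by positivity), hcompl, div_rpow hs.le h1s.le,
    inv_rpow h1s.le, rpow_neg h1s.le, inv_inv, rpow_sub_one h1s.ne']
  field_simp

lemma integrableOn_rpow_div_one_add (ha0 : 0 < a) (ha1 : a < 1) :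
    IntegrableOn (fun s : ℝ ↦ s ^ (a - 1) / (1 + s)) (Ioi 0) := by
  refine integrableOn_Ioi_zero_of_le_rpow (p := a - 1) (q := a - 2) (C := 1) (D := 1)
    ?_ (by linarith) (by linarith) (fun s hs ↦ ?_) (fun s hs ↦ ?_)
  · exact (continuousOn_id.rpow_const fun s hs ↦ Or.inl (ne_of_gt hs)).div (by fun_prop)
      fun s hs ↦ by linarith [mem_Ioi.1 hs]
  · have hs : 0 < s := hs.1
    rw [norm_of_nonneg (by positivity), one_mul]
    exact div_le_self (by positivity) (by linarith)
  · have hs : 0 < s := zero_lt_one.trans hs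
    rw [norm_of_nonneg (by positivity), one_mul, show a - 2 = a - 1 - 1 by ring,
      rpow_sub_one hs.ne' (a - 1)]
    exact div_le_div_of_nonneg_left (by positivity) hs (by linarith)

lemma integrableOn_log_one_add_inv_mul_rpow (ha0 : 0 < a) (ha1 : a < 1) :
    IntegrableOn (fun s : ℝ ↦ log (1 + s⁻¹) * s ^ (a - 1)) (Ioi 0) := by
  refine integrableOn_Ioi_zero_of_le_rpow (p := a / 2 - 1) (q := a - 2) (C := 2 / a) (D := 1)
    ?_ (by linarith) (by linarith) (fun s hs ↦ ?_) (fun s hs ↦ ?_)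
  · refine ContinuousOn.mul (fun s hs ↦ ?_)
      (continuousOn_id.rpow_const fun s hs ↦ Or.inl (ne_of_gt hs))
    have hs : 0 < s := hs
    exact ((continuousAt_inv₀ hs.ne').const_add 1 |>.log (by positivity)).continuousWithinAt
  · have hs : 0 < s := hs.1
    rw [norm_of_nonneg (mul_nonneg (log_one_add_inv_nonneg hs.le) (by positivity))]
    convert log_one_add_inv_mul_rpow_le hs (a - 1) (half_pos ha0) (by linarith) using 1
    ring_nf
  · have hs : 0 < s := zero_lt_one.trans hs
    rw [norm_of_nonneg (mul_nonneg (log_one_add_inv_nonneg hs.le) (by positivity))]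
    convert log_one_add_inv_mul_rpow_le hs (a - 1) zero_lt_one le_rfl using 1
    ring_nf

lemma tendsto_log_one_add_inv_mul_rpow_nhdsGT_zero (ha : 0 < a) :
    Tendsto (fun s : ℝ ↦ log (1 + s⁻¹) * s ^ a) (𝓝[>] 0) (𝓝 0) := by
  set ε := min (a / 2) 1
  have hε : 0 < ε := lt_min (half_pos ha) one_pos
  have haε : 0 < a - ε := by linarith [min_le_left (a / 2) 1]
  have hlim : Tendsto (fun s : ℝ ↦ s ^ (a - ε) / ε) (𝓝[>] 0) (𝓝 0) := by
    have h := (continuousAt_rpow_const 0 (a - ε) (Or.inr haε.le)).tendsto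
    rw [zero_rpow haε.ne'] at h
    simpa using (h.mono_left nhdsWithin_le_nhds).div_const ε
  refine squeeze_zero' ?_ ?_ hlim <;> filter_upwards [self_mem_nhdsWithin] with s hs
  · exact mul_nonneg (log_one_add_inv_nonneg (le_of_lt hs)) (rpow_nonneg (le_of_lt hs) a)
  · exact log_one_add_inv_mul_rpow_le hs a hε (min_le_right _ _)

lemma tendsto_log_one_add_inv_mul_rpow_atTop (ha : a < 1) :
    Tendsto (fun s : ℝ ↦ log (1 + s⁻¹) * s ^ a) atTop (𝓝 0) := by
  have hlim : Tendsto (fun s : ℝ ↦ s ^ (a - 1) / 1) atTop (𝓝 0) := by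
    simp_rw [div_one, ← neg_sub 1 a]
    exact tendsto_rpow_neg_atTop (sub_pos.2 ha)
  refine squeeze_zero' ?_ ?_ hlim <;> filter_upwards [eventually_gt_atTop 0] with s hs
  · exact mul_nonneg (log_one_add_inv_nonneg hs.le) (rpow_nonneg hs.le a)
  · exact log_one_add_inv_mul_rpow_le hs a zero_lt_one le_rfl

lemma integral_log_one_add_inv_mul_rpow (ha0 : 0 < a) (ha1 : a < 1) :
    ∫ s in Ioi (0 : ℝ), log (1 + s⁻¹) * (a * s ^ (a - 1)) = π / sin (π * a) := by
  have hu : ∀ s ∈ Ioi (0 : ℝ), HasDerivAt (fun s ↦ log (1 + s⁻¹)) (-(s * (1 + s))⁻¹) s := by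
    intro s hs
    have hs : 0 < s := hs
    have h := ((hasDerivAt_inv hs.ne').const_add 1).log (by positivity)
    exact h.congr_deriv (by field_simp; ring)
  have hv : ∀ s ∈ Ioi (0 : ℝ), HasDerivAt (fun s ↦ s ^ a) (a * s ^ (a - 1)) s :=
    fun s hs ↦ hasDerivAt_rpow_const (Or.inl (ne_of_gt hs))
  have hu'v : ∀ s ∈ Ioi (0 : ℝ), -(s * (1 + s))⁻¹ * s ^ a = -(s ^ (a - 1) / (1 + s)) := by
    intro s hs
    have hs : 0 < s := hs
    rw [rpow_sub_one hs.ne']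
    field_simp
  have huv'_int : IntegrableOn ((fun s ↦ log (1 + s⁻¹)) * fun s ↦ a * s ^ (a - 1)) (Ioi 0) :=
    IntegrableOn.congr_fun ((integrableOn_log_one_add_inv_mul_rpow ha0 ha1).const_mul a)
      (fun s _ ↦ by simp only [Pi.mul_apply]; ring) measurableSet_Ioi
  have hu'v_int : IntegrableOn ((fun s : ℝ ↦ -(s * (1 + s))⁻¹) * fun s ↦ s ^ a) (Ioi 0) :=
    IntegrableOn.congr_fun (integrableOn_rpow_div_one_add ha0 ha1).neg
      (fun s hs ↦ by simp only [Pi.mul_apply, Pi.neg_apply, hu'v s hs]) measurableSet_Ioi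
  rw [integral_Ioi_mul_deriv_eq_deriv_mul hu hv huv'_int hu'v_int (a' := 0) (b' := 0) ?_ ?_,
    setIntegral_congr_fun measurableSet_Ioi hu'v, MeasureTheory.integral_neg,
    integral_rpow_div_one_add ha0 ha1]
  · ring
  · exact tendsto_log_one_add_inv_mul_rpow_nhdsGT_zero ha0
  · exact tendsto_log_one_add_inv_mul_rpow_atTop ha1

end Beta

section Pointwise

variable {x α : ℝ}

lemma antitoneOn_log_one_add_div_rpow (hx : 0 ≤ x) (hα : 0 ≤ α) :
    AntitoneOn (fun t ↦ log (1 + x / t ^ α)) (Ioi 0) := by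
  intro s hs t ht hst
  have hs : 0 < s := hs
  exact log_le_log (add_pos_of_pos_of_nonneg one_pos
    (div_nonneg hx (rpow_nonneg (hs.le.trans hst) α))) (by gcongr)

lemma log_one_add_div_rpow_nonneg (hx : 0 ≤ x) {t : ℝ} (ht : 0 ≤ t) :
    0 ≤ log (1 + x / t ^ α) :=
  log_nonneg (le_add_of_nonneg_right (div_nonneg hx (rpow_nonneg ht α)))

lemma log_one_add_div_rpow_le (hx : 0 ≤ x) (hα : 0 ≤ α) {t : ℝ} (ht0 : 0 < t) (ht1 : t ≤ 1) :
    log (1 + x / t ^ α) ≤ log (1 + x) - α * log t := by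
  have h := log_one_add_mul_le hx (one_le_inv₀ (rpow_pos_of_pos ht0 α) |>.2
    (rpow_le_one ht0.le ht1 hα))
  rwa [← div_eq_mul_inv, log_inv, log_rpow ht0, ← sub_eq_add_neg] at h

lemma le_log_one_add_div_rpow (hx : 0 ≤ x) (α : ℝ) {t : ℝ} (ht : 0 < t) :
    log (1 + x) - x / (1 + x) * α * log t ≤ log (1 + x / t ^ α) := by
  have h := log_one_add_add_mul_log_le hx (inv_pos.2 (rpow_pos_of_pos ht α))
  rw [← div_eq_mul_inv, log_inv, log_rpow ht] at h
  linarith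

end Pointwise

section Integrals

variable {ϱ x : ℝ}

lemma log_one_add_div_rpow_mul_rpow (hϱ : ϱ ≠ 0) (hx : 0 < x) {t : ℝ} (ht : 0 < t) :
    log (1 + x / (x ^ ϱ * t) ^ (1 / ϱ)) = log (1 + 1 / t ^ (1 / ϱ)) := by
  rw [mul_rpow (by positivity) ht.le, one_div ϱ, rpow_rpow_inv hx.le hϱ,
    div_mul_cancel_left₀ hx.ne', one_div]

lemma log_one_add_one_div_rpow_rpow (hϱ : ϱ ≠ 0) {s : ℝ} (hs : 0 < s) :
    log (1 + 1 / (s ^ ϱ) ^ (1 / ϱ)) = log (1 + s⁻¹) := by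
  rw [one_div ϱ, rpow_rpow_inv hs.le hϱ, one_div]

lemma integrableOn_log_one_add_div_rpow (hϱ0 : 0 < ϱ) (hϱ1 : ϱ < 1) (hx : 0 < x) :
    IntegrableOn (fun t ↦ log (1 + x / t ^ (1 / ϱ))) (Ioi 0) := by
  rw [← mul_zero (x ^ ϱ), ← integrableOn_Ioi_comp_mul_left_iff _ 0 (rpow_pos_of_pos hx ϱ)]
  refine IntegrableOn.congr_fun ?_
    (fun t ht ↦ (log_one_add_div_rpow_mul_rpow hϱ0.ne' hx ht).symm) measurableSet_Ioi
  rw [← integrableOn_Ioi_comp_rpow_iff _ hϱ0.ne']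
  refine IntegrableOn.congr_fun ((integrableOn_log_one_add_inv_mul_rpow hϱ0 hϱ1).const_mul |ϱ|)
    (fun s hs ↦ ?_) measurableSet_Ioi
  rw [smul_eq_mul, log_one_add_one_div_rpow_rpow hϱ0.ne' hs]
  ring

lemma integral_log_one_add_div_rpow (hϱ0 : 0 < ϱ) (hϱ1 : ϱ < 1) (hx : 0 < x) :
    ∫ t in Ioi 0, log (1 + x / t ^ (1 / ϱ)) = π / sin (π * ϱ) * x ^ ϱ := by
  rw [← mul_zero (x ^ ϱ), ← integral_comp_mul_left_Ioi' _ 0 (rpow_pos_of_pos hx ϱ),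
    setIntegral_congr_fun measurableSet_Ioi
      (fun t ht ↦ log_one_add_div_rpow_mul_rpow hϱ0.ne' hx ht),
    ← integral_comp_rpow_Ioi_of_pos hϱ0,
    setIntegral_congr_fun measurableSet_Ioi
      (fun s hs ↦ by rw [smul_eq_mul, log_one_add_one_div_rpow_rpow hϱ0.ne' hs, mul_comm]),
    integral_log_one_add_inv_mul_rpow hϱ0 hϱ1, smul_eq_mul, mul_comm]

lemma intervalIntegrable_log_one_add_div_rpow (hϱ0 : 0 < ϱ) (hϱ1 : ϱ < 1) (hx : 0 < x) :
    IntervalIntegrable (fun t ↦ log (1 + x / t ^ (1 / ϱ))) volume 0 1 :=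
  (intervalIntegrable_iff_integrableOn_Ioc_of_le zero_le_one).2
    ((integrableOn_log_one_add_div_rpow hϱ0 hϱ1 hx).mono_set Ioc_subset_Ioi_self)

lemma integral_log_one_add_div_rpow_le (hϱ0 : 0 < ϱ) (hϱ1 : ϱ < 1) (hx : 0 < x) :
    ∫ t in (0 : ℝ)..1, log (1 + x / t ^ (1 / ϱ)) ≤ log (1 + x) + 1 / ϱ := by
  rw [← integral_const_sub_mul_log]
  exact integral_mono_on_of_le_Ioo zero_le_one
    (intervalIntegrable_log_one_add_div_rpow hϱ0 hϱ1 hx)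
    (intervalIntegrable_const.sub (intervalIntegrable_log'.const_mul _))
    fun t ht ↦ log_one_add_div_rpow_le hx.le (by positivity) ht.1 ht.2.le

lemma le_integral_log_one_add_div_rpow (hϱ0 : 0 < ϱ) (hϱ1 : ϱ < 1) (hx : 0 < x) :
    log (1 + x) + x / (1 + x) * (1 / ϱ) ≤ ∫ t in (0 : ℝ)..1, log (1 + x / t ^ (1 / ϱ)) := by
  rw [← integral_const_sub_mul_log]
  exact integral_mono_on_of_le_Ioo zero_le_one
    (intervalIntegrable_const.sub (intervalIntegrable_log'.const_mul _))
    (intervalIntegrable_log_one_add_div_rpow hϱ0 hϱ1 hx)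
    fun t ht ↦ (le_log_one_add_div_rpow hx.le _ ht.1).trans_eq' (by ring)

end Integrals

/-- Let `ϱ ∈ (0,1)`, `a_k = k^(1/ϱ)`, `F(x) = ∏_{k=1}^∞ (1 + x/a_k)`. Then for `x > 0`,
`F(x) = exp((π/sin(πϱ)) x^ϱ)·ψ(x)` with
`exp(-1/ϱ)/(1+x) ≤ ψ(x) ≤ exp(-(1/ϱ)·x/(1+x))`. -/
theorem stmt_15 (ϱ : ℝ) (hϱ0 : 0 < ϱ) (hϱ1 : ϱ < 1)
    (F : ℝ → ℝ) (hF : ∀ x : ℝ, F x = ∏' k : ℕ, (1 + x / ((k : ℝ) + 1) ^ (1 / ϱ)))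
    (x : ℝ) (hx : 0 < x) :
    Real.exp (-(1 / ϱ)) / (1 + x) ≤
        F x * Real.exp (-(Real.pi / Real.sin (Real.pi * ϱ)) * x ^ ϱ) ∧
      F x * Real.exp (-(Real.pi / Real.sin (Real.pi * ϱ)) * x ^ ϱ) ≤
        Real.exp (-(1 / ϱ) * (x / (1 + x))) := by
  set g : ℝ → ℝ := fun t ↦ log (1 + x / t ^ (1 / ϱ))
  have hint : IntegrableOn g (Ioi 0) := integrableOn_log_one_add_div_rpow hϱ0 hϱ1 hx
  have hint₁ : IntegrableOn g (Ioi 1) := hint.mono_set (Ioi_subset_Ioi zero_le_one)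
  have hanti : AntitoneOn g (Ici 1) :=
    (antitoneOn_log_one_add_div_rpow hx.le (by positivity)).mono (Ici_subset_Ioi.2 one_pos)
  have hnonneg : ∀ t ∈ Ioi 1, 0 ≤ g t :=
    fun t ht ↦ log_one_add_div_rpow_nonneg hx.le (zero_le_one.trans (le_of_lt ht))
  have hFx : F x = exp (∑' k : ℕ, g (k + 1)) := by
    rw [hF, rexp_tsum_eq_tprod (fun k ↦ by positivity)
      (hanti.summable_comp_add_one hint₁ hnonneg)]
  have hsplit : (∫ t in (0 : ℝ)..1, g t) + ∫ t in Ioi 1, g t = π / sin (π * ϱ) * x ^ ϱ := by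
    rw [integral_interval_add_Ioi hint hint₁, integral_log_one_add_div_rpow hϱ0 hϱ1 hx]
  have hg₁ : g 1 = log (1 + x) := by simp [g]
  have hlower := hanti.integral_Ioi_one_le_tsum hint₁ hnonneg
  have hupper := hanti.tsum_le_add_integral_Ioi_one hint₁ hnonneg
  have hJ_le : ∫ t in (0 : ℝ)..1, g t ≤ log (1 + x) + 1 / ϱ :=
    integral_log_one_add_div_rpow_le hϱ0 hϱ1 hx
  have hJ_ge : log (1 + x) + x / (1 + x) * (1 / ϱ) ≤ ∫ t in (0 : ℝ)..1, g t :=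
    le_integral_log_one_add_div_rpow hϱ0 hϱ1 hx
  rw [hFx, ← exp_add]
  constructor
  · rw [← exp_log (by positivity : 0 < 1 + x), ← exp_sub, exp_le_exp]
    linarith
  · rw [exp_le_exp]
    linarith
end

section
/- Let p ≥ 1 be an integer, let T be a closed operator on a Hilbert space, v > 0 real, and suppose each point v·e^{iπ(1+2j)/p}, j = 0,…,p-1, lies in ρ(T) with ‖(v e^{iπ(1+2j)/p} - T)^{-1}‖ ≤ K v^N for some K ≥ 1 and N ≥ -1. Then -v^p ∈ ρ(T^p) and for each k = 0,…,p-1, ‖T^k (v^p + T^p)^{-1}‖ ≤ (2K)^p · v^{pN + k}, provided v ≥ 1. -/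
open Polynomial in
/-- Let `p ≥ 1`, `T` a linear operator on a Hilbert space, `v ≥ 1`, and suppose that at
each point `ζ_j = v·e^{iπ(1+2j)/p}`, `j = 0,…,p-1`, the operator `T - ζ_j` has a bounded
everywhere-defined inverse `R j` with `‖R j‖ ≤ K v^N`, where `K ≥ 1` and `N ≥ -1`. Then
`v^p + T^p` has a bounded inverse `S` and `‖T^k (v^p + T^p)⁻¹‖ ≤ (2K)^p v^{pN+k}` for
`k = 0,…,p-1`. -/
theorem stmt_18 {H : Type*} [NormedAddCommGroup H] [InnerProductSpace ℂ H]
    [CompleteSpace H] (p : ℕ) (hp : 1 ≤ p) (T : H →ₗ[ℂ] H)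
    (v K N : ℝ) (hv : 1 ≤ v) (hK : 1 ≤ K) (hN : (-1 : ℝ) ≤ N)
    (ζ : ℕ → ℂ)
    (hζ : ∀ j : ℕ, ζ j = (v : ℂ) *
      Complex.exp (Real.pi * Complex.I * (1 + 2 * (j : ℂ)) / (p : ℂ)))
    (R : ℕ → H →L[ℂ] H)
    (hR1 : ∀ j < p, ∀ x : H, R j (T x - ζ j • x) = x)
    (hR2 : ∀ j < p, ∀ x : H, T (R j x) - ζ j • R j x = x)
    (hRnorm : ∀ j < p, ‖R j‖ ≤ K * v ^ N) :
    ∃ S : H →L[ℂ] H,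
      (∀ x : H, S (((v : ℂ) ^ p) • x + (T ^ p) x) = x) ∧
      (∀ x : H, ((v : ℂ) ^ p) • S x + (T ^ p) (S x) = x) ∧
      (∀ k < p, ∀ x : H,
        ‖(T ^ k) (S x)‖ ≤ (2 * K) ^ p * v ^ ((p : ℝ) * N + (k : ℝ)) * ‖x‖) := by
  have hv0 : (0:ℝ) < v := lt_of_lt_of_le one_pos hv
  have hK0 : (0:ℝ) < K := lt_of_lt_of_le one_pos hK
  have hpC : (p:ℂ) ≠ 0 := Nat.cast_ne_zero.2 (by omega)
  -- the roots ζ j in the form c * ω ^ j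
  set ω : ℂ := Complex.exp (2 * Real.pi * Complex.I / p) with hωdef
  set c : ℂ := (v:ℂ) * Complex.exp (Real.pi * Complex.I / p) with hcdef
  have hζ' : ∀ j : ℕ, ζ j = ω ^ j * c := by
    intro j
    have h2 : (Real.pi : ℂ) * Complex.I * (1 + 2 * (j:ℂ)) / (p:ℂ)
        = (j:ℂ) * (2 * Real.pi * Complex.I / (p:ℂ)) + Real.pi * Complex.I / (p:ℂ) := by
      field_simp
      ring
    rw [hζ j, h2, Complex.exp_add, Complex.exp_nat_mul, hωdef, hcdef]
    ring
  have hcp : c ^ p = -((v:ℂ) ^ p) := by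
    rw [hcdef, mul_pow, ← Complex.exp_nat_mul]
    have h3 : (p:ℂ) * (Real.pi * Complex.I / (p:ℂ)) = Real.pi * Complex.I := by
      field_simp
    rw [h3, Complex.exp_pi_mul_I]
    ring
  have hprim : IsPrimitiveRoot ω p := Complex.isPrimitiveRoot_exp p (by omega)
  -- the polynomial identity
  have hP : (∏ j ∈ Finset.range p, (X - C (ζ j)) : ℂ[X]) = X ^ p + C ((v:ℂ)^p) := by
    have h1 : (X ^ p - C (-((v:ℂ) ^ p)) : ℂ[X])
        = ∏ i ∈ Finset.range p, (X - C (ω ^ i * c)) :=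
      X_pow_sub_C_eq_prod hprim (by omega) hcp
    rw [map_neg, sub_neg_eq_add] at h1
    calc (∏ j ∈ Finset.range p, (X - C (ζ j)) : ℂ[X])
        = ∏ j ∈ Finset.range p, (X - C (ω ^ j * c)) :=
          Finset.prod_congr rfl fun j _ => by rw [hζ' j]
      _ = X ^ p + C ((v:ℂ)^p) := h1.symm
  -- the operators
  set M : ℕ → (H →ₗ[ℂ] H) :=
    fun n => Polynomial.aeval T (∏ j ∈ Finset.range n, (X - C (ζ j))) with hMdef
  have hM0 : ∀ x : H, M 0 x = x := by
    intro x
    simp [hMdef]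
  have hMs : ∀ n (x : H), M (n+1) x = M n (T x - ζ n • x) := by
    intro n x
    have h1 : M (n+1) = M n * (Polynomial.aeval T (X - C (ζ n))) := by
      simp only [hMdef]
      rw [Finset.prod_range_succ, map_mul]
    rw [h1, Module.End.mul_apply]
    congr 1
    simp [map_sub, Module.algebraMap_end_apply]
  have hMp : ∀ x : H, M p x = ((v:ℂ)^p) • x + (T ^ p) x := by
    intro x
    have h1 : M p = Polynomial.aeval T (X ^ p + C ((v:ℂ)^p)) := by
      simp only [hMdef]; rw [hP]
    rw [h1, map_add, Polynomial.aeval_X_pow, Polynomial.aeval_C, LinearMap.add_apply,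
      Module.algebraMap_end_apply, add_comm]
  set B : ℕ → (H →L[ℂ] H) := fun j => 1 + ζ j • R j with hBdef
  have hB : ∀ j, j < p → ∀ x : H, B j x = T (R j x) := by
    intro j hj x
    simp only [hBdef, ContinuousLinearMap.add_apply, ContinuousLinearMap.one_apply,
      ContinuousLinearMap.coe_smul', Pi.smul_apply]
    exact (eq_add_of_sub_eq (hR2 j hj x)).symm
  set Cc : ℕ → ℕ → (H →L[ℂ] H) := fun k j => if j < k then B j else R j with hCcdef
  set W : ℕ → ℕ → (H →L[ℂ] H) :=
    fun k n => (((List.range n).map (Cc k)).reverse).prod with hWdef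
  have hW0 : ∀ k, W k 0 = 1 := by intro k; simp [hWdef]
  have hWs : ∀ k n, W k (n+1) = Cc k n * W k n := by
    intro k n
    simp [hWdef, List.range_succ]
  have hWeq : ∀ k n, n ≤ k → W (k+1) n = W k n := by
    intro k n hn
    have hmap : (List.range n).map (Cc (k+1)) = (List.range n).map (Cc k) := by
      apply List.map_congr_left
      intro j hj
      have hj' : j < n := List.mem_range.mp hj
      simp only [hCcdef]
      rw [if_pos (by omega), if_pos (by omega)]
    simp only [hWdef, hmap]
  -- commutation lemmas
  have hcommR : ∀ j, j < p → ∀ x : H, R j (T x) = T (R j x) := by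
    intro j hj x
    conv_lhs => rw [← hR2 j hj x]
    rw [map_sub, map_smul]
    exact hR1 j hj (T (R j x))
  have hcommB : ∀ j, j < p → ∀ x : H, B j (T x) = T (B j x) := by
    intro j hj x
    simp only [hBdef, ContinuousLinearMap.add_apply, ContinuousLinearMap.one_apply,
      ContinuousLinearMap.coe_smul', Pi.smul_apply]
    rw [map_add, map_smul, hcommR j hj x]
  have hpow : ∀ f : H → H, (∀ y : H, f (T y) = T (f y)) →
      ∀ k (x : H), f ((T ^ k) x) = (T ^ k) (f x) := by
    intro f hf k
    induction k with
    | zero => intro x; simp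
    | succ k ih =>
      intro x
      simp only [pow_succ, Module.End.mul_apply]
      rw [ih (T x), hf x]
  -- inverse identities
  have hinv : ∀ n, n ≤ p → (∀ x : H, W 0 n (M n x) = x) ∧ (∀ x : H, M n (W 0 n x) = x) := by
    intro n
    induction n with
    | zero =>
      intro _
      constructor <;> intro x <;> simp [hW0, hM0]
    | succ n ih =>
      intro hn
      obtain ⟨ih1, ih2⟩ := ih (by omega)
      have hC0n : Cc 0 n = R n := by
        simp only [hCcdef]
        rw [if_neg (by omega)]
      constructor
      · intro x
        rw [hWs 0 n, ContinuousLinearMap.mul_apply, hC0n, hMs n x, ih1 (T x - ζ n • x)]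
        exact hR1 n (by omega) x
      · intro x
        rw [hWs 0 n, ContinuousLinearMap.mul_apply, hC0n, hMs n (R n (W 0 n x)),
          hR2 n (by omega) (W 0 n x)]
        exact ih2 x
  -- the mixed products
  have hbase : ∀ k, k ≤ p → ∀ x : H, (T ^ k) (W 0 k x) = W k k x := by
    intro k
    induction k with
    | zero => intro _ x; simp
    | succ k ih =>
      intro hk x
      have hC0 : Cc 0 k = R k := by
        simp only [hCcdef]; rw [if_neg (by omega)]
      have hC1 : Cc (k+1) k = B k := by
        simp only [hCcdef]; rw [if_pos (by omega)]
      rw [hWs 0 k, hWs (k+1) k, hWeq k k le_rfl, ContinuousLinearMap.mul_apply,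
        ContinuousLinearMap.mul_apply, hC0, hC1, pow_succ, Module.End.mul_apply,
        ← hB k (by omega) ((W 0 k) x),
        ← hpow (⇑(B k)) (hcommB k (by omega)) k ((W 0 k) x), ih (by omega) x]
  have hmix : ∀ k, k ≤ p → ∀ n, k ≤ n → n ≤ p → ∀ x : H, (T ^ k) (W 0 n x) = W k n x := by
    intro k hkp n hkn
    induction n, hkn using Nat.le_induction with
    | base => intro _ x; exact hbase k hkp x
    | succ n hkn ih =>
      intro hnp x
      have hC0 : Cc 0 n = R n := by
        simp only [hCcdef]; rw [if_neg (by omega)]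
      have hCk : Cc k n = R n := by
        simp only [hCcdef]; rw [if_neg (by omega)]
      rw [hWs 0 n, hWs k n, ContinuousLinearMap.mul_apply, ContinuousLinearMap.mul_apply,
        hC0, hCk, ← hpow (⇑(R n)) (hcommR n (by omega)) k ((W 0 n) x), ih (by omega) x]
  -- norm estimates
  have hvN1 : (0:ℝ) ≤ N + 1 := by linarith
  have h1le : (1:ℝ) ≤ v ^ (N+1) := Real.one_le_rpow hv hvN1
  have hvNpos : (0:ℝ) < v ^ N := Real.rpow_pos_of_pos hv0 N
  have habs : ∀ j : ℕ, ‖ζ j‖ = v := by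
    intro j
    have h2 : (Real.pi : ℂ) * Complex.I * (1 + 2*(j:ℂ)) / (p:ℂ)
        = ((Real.pi * (1 + 2*(j:ℝ)) / (p:ℝ) : ℝ) : ℂ) * Complex.I := by
      push_cast
      ring
    rw [hζ j, h2, norm_mul, Complex.norm_real, Real.norm_eq_abs,
      Complex.norm_exp_ofReal_mul_I, abs_of_pos hv0, mul_one]
  have hBnorm : ∀ j, j < p → ‖B j‖ ≤ 2*K*v^(N+1) := by
    intro j hj
    have hone : ‖(1 : H →L[ℂ] H)‖ ≤ 1 := by
      rw [ContinuousLinearMap.one_def]; exact ContinuousLinearMap.norm_id_le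
    have h2 : ‖ζ j • R j‖ ≤ v * (K * v^N) := by
      rw [norm_smul, habs j]
      exact mul_le_mul_of_nonneg_left (hRnorm j hj) hv0.le
    have h3 : v * (K * v^N) = K * v^(N+1) := by
      rw [Real.rpow_add hv0, Real.rpow_one]; ring
    have h4 : (1:ℝ) ≤ K * v^(N+1) := by nlinarith
    have h5 : ‖B j‖ ≤ ‖(1 : H →L[ℂ] H)‖ + ‖ζ j • R j‖ := by
      rw [hBdef]; exact norm_add_le _ _
    rw [h3] at h2
    linarith
  have hRnorm' : ∀ j, j < p → ‖R j‖ ≤ 2*K*v^N := by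
    intro j hj
    have := hRnorm j hj
    nlinarith
  have hWnb : ∀ k, k ≤ p → ‖W k k‖ ≤ (2*K*v^(N+1))^k := by
    intro k
    induction k with
    | zero =>
      intro _
      rw [hW0, pow_zero, ContinuousLinearMap.one_def]
      exact ContinuousLinearMap.norm_id_le
    | succ k ih =>
      intro hk
      have hC1 : Cc (k+1) k = B k := by
        simp only [hCcdef]; rw [if_pos (by omega)]
      rw [hWs (k+1) k, hWeq k k le_rfl, hC1]
      calc ‖B k * W k k‖ ≤ ‖B k‖ * ‖W k k‖ := norm_mul_le _ _
        _ ≤ (2*K*v^(N+1)) * (2*K*v^(N+1))^k :=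
            mul_le_mul (hBnorm k (by omega)) (ih (by omega)) (norm_nonneg _)
              (by positivity)
        _ = (2*K*v^(N+1))^(k+1) := by rw [pow_succ]; ring
  have hWnorm : ∀ k, k ≤ p → ∀ n, k ≤ n → n ≤ p →
      ‖W k n‖ ≤ (2*K*v^(N+1))^k * (2*K*v^N)^(n-k) := by
    intro k hkp n hkn
    induction n, hkn using Nat.le_induction with
    | base => intro _; simpa using hWnb k hkp
    | succ n hkn ih =>
      intro hnp
      have hCk : Cc k n = R n := by
        simp only [hCcdef]; rw [if_neg (by omega)]
      rw [hWs k n, hCk]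
      calc ‖R n * W k n‖ ≤ ‖R n‖ * ‖W k n‖ := norm_mul_le _ _
        _ ≤ (2*K*v^N) * ((2*K*v^(N+1))^k * (2*K*v^N)^(n-k)) :=
            mul_le_mul (hRnorm' n (by omega)) (ih (by omega)) (norm_nonneg _)
              (by positivity)
        _ = (2*K*v^(N+1))^k * (2*K*v^N)^(n+1-k) := by
            rw [show n+1-k = (n-k)+1 by omega, pow_succ]; ring
  -- conclusion
  refine ⟨W 0 p, ?_, ?_, ?_⟩
  · intro x
    rw [← hMp x]
    exact (hinv p le_rfl).1 x
  · intro x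
    have h := (hinv p le_rfl).2 x
    rw [hMp (W 0 p x)] at h
    exact h
  · intro k hk x
    have harith : (2*K*v^(N+1))^k * (2*K*v^N)^(p-k) = (2*K)^p * v^((p:ℝ)*N + (k:ℝ)) := by
      have e1 : (2*K)^k * (2*K)^(p-k) = (2*K)^p := by
        rw [← pow_add]; congr 1; omega
      have e2 : v ^ ((N+1) * ((k:ℕ):ℝ)) * v ^ (N * (((p-k:ℕ)):ℝ)) = v ^ ((p:ℝ)*N + (k:ℝ)) := by
        rw [← Real.rpow_add hv0]
        congr 1
        rw [Nat.cast_sub (le_of_lt hk)]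
        ring
      rw [mul_pow (2*K) (v^(N+1)) k, mul_pow (2*K) (v^N) (p-k), ← Real.rpow_natCast (v^(N+1)) k, ← Real.rpow_natCast (v^N) (p-k),
        ← Real.rpow_mul hv0.le, ← Real.rpow_mul hv0.le, mul_mul_mul_comm, e1, e2]
    rw [hmix k (le_of_lt hk) p (le_of_lt hk) le_rfl x]
    calc ‖W k p x‖ ≤ ‖W k p‖ * ‖x‖ := (W k p).le_opNorm x
      _ ≤ ((2*K*v^(N+1))^k * (2*K*v^N)^(p-k)) * ‖x‖ :=
          mul_le_mul_of_nonneg_right (hWnorm k (le_of_lt hk) p (le_of_lt hk) le_rfl)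
            (norm_nonneg x)
      _ = (2*K)^p * v^((p:ℝ)*N + (k:ℝ)) * ‖x‖ := by rw [harith]
end
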